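/- arXiv:1903.06335 — 11 statements merged into one kernel-verified Lean document; each statement's English description precedes it below -/
import Mathlib

section
/- Let F be a field of characteristic not 2 with a nondegenerate symmetric bilinear form ( , ) on F^{2n}. Let W be a nondegenerate subspace of F^{2n}, let W_1,...,W_k and W'_1,...,W'_k be subspaces of W with W = W_1 + ... + W_k = W'_1 + ... + W'_k. Let U_1 be an isotropic subspace of W^⊥ and let U_2,...,U_k be subspaces of U_1. If g is an element of the orthogonal group of ( , ) such that g(W_i ⊕ U_i) = W'_i ⊕ U_i for i = 1,...,k, then g(W ⊕ U_1) = W ⊕ U_1 and gU_1 = U_1. -/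
/-- Lemma 2.7 of the paper: let `W` be a nondegenerate subspace of `F^{2n}`,
`W = W₁ + ... + W_k = W'₁ + ... + W'_k`, `U₁` an isotropic subspace of `W^⊥`, `U₂,...,U_k`
subspaces of `U₁`. If the orthogonal transformation `g` satisfies
`g(W_i ⊕ U_i) = W'_i ⊕ U_i` for all `i`, then `g(W ⊕ U₁) = W ⊕ U₁` and `g U₁ = U₁`.
Here index `⟨0, hk⟩ : Fin k` plays the role of the index `1`. -/
theorem orthogonal_stabilizes_sum_and_isotropic_part (F : Type*) [Field F]
    (hchar : (2 : F) ≠ 0) (n : ℕ)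
    (B : LinearMap.BilinForm F (Fin (2 * n) → F))
    (hsymm : ∀ u v : Fin (2 * n) → F, B u v = B v u)
    (hnondeg : ∀ u : Fin (2 * n) → F, (∀ v : Fin (2 * n) → F, B u v = 0) → u = 0)
    (k : ℕ) (hk : 0 < k)
    (W : Submodule F (Fin (2 * n) → F))
    (hWnd : ∀ w ∈ W, (∀ w' ∈ W, B w w' = 0) → w = 0)
    (W₁ W₁' : Fin k → Submodule F (Fin (2 * n) → F))
    (hW₁ : ∀ i, W₁ i ≤ W) (hW₁' : ∀ i, W₁' i ≤ W)
    (hWsum : W = ⨆ i, W₁ i) (hWsum' : W = ⨆ i, W₁' i)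
    (U : Fin k → Submodule F (Fin (2 * n) → F))
    (hUle : ∀ i, U i ≤ U ⟨0, hk⟩)
    (hUiso : ∀ u ∈ U ⟨0, hk⟩, ∀ v ∈ U ⟨0, hk⟩, B u v = 0)
    (hUperp : ∀ u ∈ U ⟨0, hk⟩, ∀ w ∈ W, B u w = 0)
    (g : (Fin (2 * n) → F) ≃ₗ[F] (Fin (2 * n) → F))
    (hg : ∀ u v : Fin (2 * n) → F, B (g u) (g v) = B u v)
    (hmap : ∀ i, Submodule.map g.toLinearMap (W₁ i ⊔ U i) = W₁' i ⊔ U i) :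
    Submodule.map g.toLinearMap (W ⊔ U ⟨0, hk⟩) = W ⊔ U ⟨0, hk⟩ ∧
      Submodule.map g.toLinearMap (U ⟨0, hk⟩) = U ⟨0, hk⟩ := by
  set U₁ := U ⟨0, hk⟩ with hU₁
  have hle0 : U₁ ≤ ⨆ i, (W₁ i ⊔ U i) := by
    have h0 : U₁ ≤ W₁ ⟨0, hk⟩ ⊔ U ⟨0, hk⟩ := le_sup_right
    exact h0.trans (le_iSup (fun i => W₁ i ⊔ U i) ⟨0, hk⟩)
  have hle0' : U₁ ≤ ⨆ i, (W₁' i ⊔ U i) := by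
    have h0 : U₁ ≤ W₁' ⟨0, hk⟩ ⊔ U ⟨0, hk⟩ := le_sup_right
    exact h0.trans (le_iSup (fun i => W₁' i ⊔ U i) ⟨0, hk⟩)
  have hsup : W ⊔ U₁ = ⨆ i, (W₁ i ⊔ U i) := by
    apply le_antisymm
    · apply sup_le
      · rw [hWsum]; exact iSup_mono fun i => le_sup_left
      · exact hle0
    · exact iSup_le fun i => sup_le (le_sup_left.trans' (hW₁ i)) ((hUle i).trans le_sup_right)
  have hsup' : W ⊔ U₁ = ⨆ i, (W₁' i ⊔ U i) := by
    apply le_antisymm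
    · apply sup_le
      · rw [hWsum']; exact iSup_mono fun i => le_sup_left
      · exact hle0'
    · exact iSup_le fun i => sup_le (le_sup_left.trans' (hW₁' i)) ((hUle i).trans le_sup_right)
  have h1 : Submodule.map g.toLinearMap (W ⊔ U₁) = W ⊔ U₁ := by
    conv_lhs => rw [hsup]
    rw [Submodule.map_iSup]
    simp_rw [hmap]
    exact hsup'.symm
  refine ⟨h1, ?_⟩
  -- a B-preserving equiv stabilizing W ⊔ U₁ maps U₁ into U₁
  have key : ∀ (h : (Fin (2 * n) → F) ≃ₗ[F] (Fin (2 * n) → F)),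
      (∀ u v, B (h u) (h v) = B u v) →
      Submodule.map h.toLinearMap (W ⊔ U₁) = W ⊔ U₁ →
      Submodule.map h.toLinearMap U₁ ≤ U₁ := by
    intro h hB hst
    rintro _ ⟨u, hu, rfl⟩
    show h u ∈ U₁
    have hmem : h u ∈ W ⊔ U₁ := by
      rw [← hst]
      exact ⟨u, Submodule.mem_sup_right hu, rfl⟩
    -- h u is orthogonal to all of W ⊔ U₁
    have horth : ∀ y ∈ W ⊔ U₁, B (h u) y = 0 := by
      intro y hy
      have hsymmem : h.symm y ∈ W ⊔ U₁ := by
        rw [← hst] at hy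
        obtain ⟨v, hv, rfl⟩ := hy
        simpa using hv
      obtain ⟨w, hw, v, hv, hwv⟩ := Submodule.mem_sup.mp hsymmem
      have hy' : y = h (w + v) := by rw [hwv, h.apply_symm_apply]
      rw [hy', hB, map_add, hUperp u hu w hw, hUiso u hu v hv, add_zero]
    obtain ⟨w, hw, v, hv, hwv⟩ := Submodule.mem_sup.mp hmem
    have hw0 : w = 0 := by
      apply hWnd w hw
      intro w' hw'
      have h0 : B (h u) w' = 0 := horth w' (Submodule.mem_sup_left hw')
      have h1' : B (w + v) w' = 0 := by rw [hwv]; exact h0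
      simp only [map_add, LinearMap.add_apply] at h1'
      have hvw' : B v w' = 0 := hUperp v hv w' hw'
      rw [hvw', add_zero] at h1'
      exact h1'
    have heq : h u = v := by rw [← hwv, hw0, zero_add]
    rw [heq]; exact hv
  have hgsymm : ∀ u v, B (g.symm u) (g.symm v) = B u v := by
    intro u v
    have := hg (g.symm u) (g.symm v)
    simpa using this.symm
  have hstsymm : Submodule.map g.symm.toLinearMap (W ⊔ U₁) = W ⊔ U₁ := by
    apply le_antisymm
    · rintro _ ⟨x, hx, rfl⟩
      rw [← h1] at hx
      obtain ⟨y, hy, rfl⟩ := hx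
      simpa using hy
    · intro x hx
      exact ⟨g x, by rw [← h1]; exact ⟨x, hx, rfl⟩, by simp⟩
  have h2 := key g hg h1
  have h3 := key g.symm hgsymm hstsymm
  apply le_antisymm h2
  intro x hx
  have hmem : g.symm x ∈ U₁ := h3 ⟨x, hx, rfl⟩
  exact ⟨g.symm x, hmem, by simp⟩
end

section
/- Let F be an infinite field of characteristic not 2, and consider F^4 with basis f_1,...,f_4 and symmetric bilinear form (f_i, f_j) = δ_{i,5-j}. Set U_1 = span(f_1,f_2), U_2 = span(f_3,f_4), U_3 = span(f_1+f_3, f_2−f_4), and for λ ∈ F set U_{4,λ} = span(f_1+λf_3, f_2−λf_4). If g ∈ O_4(F) satisfies gU_1 = U_1, gU_2 = U_2, gU_3 = U_3 and gU_{4,λ} = U_{4,μ}, then λ = μ. -/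
/-- The symmetric bilinear form `(f_i, f_j) = δ_{i, m+1-j}` on `F^m`. -/
def bform (F : Type*) [Field F] (m : ℕ) (u v : Fin m → F) : F :=
  ∑ i : Fin m, u i * v (Fin.rev i)

/-- The standard basis vector `f_{i+1}` of `F^m`. -/
def e (F : Type*) [Field F] (m : ℕ) (i : Fin m) : Fin m → F := Pi.single i 1

/-- Lemma 3.1 of the paper: in `F^4` with the split form, if `g ∈ O₄(F)`
stabilizes `U₁ = span(f₁,f₂)`, `U₂ = span(f₃,f₄)`, `U₃ = span(f₁+f₃, f₂−f₄)` and maps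
`U_{4,λ} = span(f₁+λf₃, f₂−λf₄)` to `U_{4,μ}`, then `λ = μ`. -/
theorem o4_lemma (F : Type*) [Field F] [Infinite F] (hchar : (2 : F) ≠ 0)
    (lam mu : F)
    (g : (Fin 4 → F) ≃ₗ[F] (Fin 4 → F))
    (hg : ∀ u v : Fin 4 → F, bform F 4 (g u) (g v) = bform F 4 u v)
    (h1 : Submodule.map g.toLinearMap
        (Submodule.span F {e F 4 0, e F 4 1}) = Submodule.span F {e F 4 0, e F 4 1})
    (h2 : Submodule.map g.toLinearMap
        (Submodule.span F {e F 4 2, e F 4 3}) = Submodule.span F {e F 4 2, e F 4 3})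
    (h3 : Submodule.map g.toLinearMap
        (Submodule.span F {e F 4 0 + e F 4 2, e F 4 1 - e F 4 3}) =
        Submodule.span F {e F 4 0 + e F 4 2, e F 4 1 - e F 4 3})
    (h4 : Submodule.map g.toLinearMap
        (Submodule.span F {e F 4 0 + lam • e F 4 2, e F 4 1 - lam • e F 4 3}) =
        Submodule.span F {e F 4 0 + mu • e F 4 2, e F 4 1 - mu • e F 4 3}) :
    lam = mu := by
  -- g f₁ ∈ U₁
  have hv : g (e F 4 0) ∈ Submodule.span F {e F 4 0, e F 4 1} := by
    rw [← h1]
    exact Submodule.mem_map_of_mem (Submodule.subset_span (Set.mem_insert _ _))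
  rw [Submodule.mem_span_pair] at hv
  obtain ⟨a, b, hv⟩ := hv
  -- g f₃ ∈ U₂
  have hw : g (e F 4 2) ∈ Submodule.span F {e F 4 2, e F 4 3} := by
    rw [← h2]
    exact Submodule.mem_map_of_mem (Submodule.subset_span (Set.mem_insert _ _))
  rw [Submodule.mem_span_pair] at hw
  obtain ⟨p, q, hw⟩ := hw
  -- g (f₁ + f₃) ∈ U₃
  have hx : g (e F 4 0 + e F 4 2) ∈
      Submodule.span F {e F 4 0 + e F 4 2, e F 4 1 - e F 4 3} := by
    rw [← h3]
    exact Submodule.mem_map_of_mem (Submodule.subset_span (Set.mem_insert _ _))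
  rw [Submodule.mem_span_pair] at hx
  obtain ⟨α, β, hx⟩ := hx
  -- g (f₁ + λ f₃) ∈ U_{4,μ}
  have hy : g (e F 4 0 + lam • e F 4 2) ∈
      Submodule.span F {e F 4 0 + mu • e F 4 2, e F 4 1 - mu • e F 4 3} := by
    rw [← h4]
    exact Submodule.mem_map_of_mem (Submodule.subset_span (Set.mem_insert _ _))
  rw [Submodule.mem_span_pair] at hy
  obtain ⟨c, d, hy⟩ := hy
  rw [map_add, ← hv, ← hw] at hx
  rw [map_add, map_smul, ← hv, ← hw] at hy
  have hx0 := congrFun hx 0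
  have hx1 := congrFun hx 1
  have hx2 := congrFun hx 2
  have hx3 := congrFun hx 3
  have hy0 := congrFun hy 0
  have hy1 := congrFun hy 1
  have hy2 := congrFun hy 2
  have hy3 := congrFun hy 3
  simp only [e, Pi.add_apply, Pi.sub_apply, Pi.smul_apply, Pi.single_apply, smul_eq_mul] at hx0 hx1 hx2 hx3 hy0 hy1 hy2 hy3
  norm_num [Fin.ext_iff, show ((3:Fin 4):ℕ) = 3 from rfl, show ((2:Fin 4):ℕ) = 2 from rfl, show ((1:Fin 4):ℕ) = 1 from rfl, show ((0:Fin 4):ℕ) = 0 from rfl] at hx0 hx1 hx2 hx3 hy0 hy1 hy2 hy3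
  -- hx : α = a, β = b, α = p, -β = q ; hy : c = a, d = b, c*μ = λ*p, -d*μ = λ*q
  have hab : a ≠ 0 ∨ b ≠ 0 := by
    by_contra h
    push_neg at h
    have : g (e F 4 0) = 0 := by
      rw [← hv, h.1, h.2]; simp
    have he : e F 4 0 = 0 := by
      have := g.injective (by simpa using this)
      simpa using this
    have := congrFun he 0
    simp [e, Pi.single_apply] at this
  rcases hab with ha | hb
  · have h := hy2
    rw [hy0, ← hx2, hx0, mul_comm a mu] at h
    exact (mul_right_cancel₀ ha h).symm
  · have h := hy3
    rw [hy1, ← hx3, hx1, mul_neg, neg_inj, mul_comm b mu] at h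
    exact (mul_right_cancel₀ hb h).symm
end

section
/- Let F be an infinite field of characteristic not 2 and consider F^6 with basis f_1,...,f_6 and symmetric bilinear form (f_i, f_j) = δ_{i,7-j}. For λ ∈ F^×, suppose g ∈ O_6(F) satisfies: g(span(f_1+f_5, f_2−f_6)) = span(f_1+f_5, f_2−f_6), g(span(f_1+f_3)) = span(f_1+f_3), g(span(f_1,f_2,f_3)) = span(f_1,f_2,f_3), g(span(f_4+λf_6)) = span(f_4+μf_6), and g(span(f_4,f_5,f_6)) = span(f_4,f_5,f_6). Then λ = μ. -/
private lemma coordZero {F : Type*} [Field F] {n : ℕ} {S : Set (Fin n → F)}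
    (i : Fin n) (h : ∀ v ∈ S, v i = 0) {x : Fin n → F}
    (hx : x ∈ Submodule.span F S) : x i = 0 := by
  have hle : Submodule.span F S ≤ LinearMap.ker (LinearMap.proj (R := F) (φ := fun _ => F) i) :=
    Submodule.span_le.mpr fun v hv => by simpa [LinearMap.mem_ker] using h v hv
  simpa [LinearMap.mem_ker] using hle hx

/-- Lemma 3.4 (ii) of the paper: in `F^6` with the split form, if `g ∈ O₆(F)`
stabilizes `span(f₁+f₅, f₂−f₆)`, `span(f₁+f₃)`, `span(f₁,f₂,f₃)`, `span(f₄,f₅,f₆)` and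
maps `span(f₄+λf₆)` to `span(f₄+μf₆)`, then `λ = μ`. -/
theorem o6_lemma_ii (F : Type*) [Field F] [Infinite F] (hchar : (2 : F) ≠ 0)
    (lam mu : F) (hlam : lam ≠ 0) (hmu : mu ≠ 0)
    (g : (Fin 6 → F) ≃ₗ[F] (Fin 6 → F))
    (hg : ∀ u v : Fin 6 → F, bform F 6 (g u) (g v) = bform F 6 u v)
    (h1 : Submodule.map g.toLinearMap
        (Submodule.span F {e F 6 0 + e F 6 4, e F 6 1 - e F 6 5}) =
        Submodule.span F {e F 6 0 + e F 6 4, e F 6 1 - e F 6 5})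
    (h2 : Submodule.map g.toLinearMap
        (Submodule.span F {e F 6 0 + e F 6 2}) = Submodule.span F {e F 6 0 + e F 6 2})
    (h3 : Submodule.map g.toLinearMap
        (Submodule.span F {e F 6 0, e F 6 1, e F 6 2}) =
        Submodule.span F {e F 6 0, e F 6 1, e F 6 2})
    (h4 : Submodule.map g.toLinearMap
        (Submodule.span F {e F 6 3 + lam • e F 6 5}) =
        Submodule.span F {e F 6 3 + mu • e F 6 5})
    (h5 : Submodule.map g.toLinearMap
        (Submodule.span F {e F 6 3, e F 6 4, e F 6 5}) =
        Submodule.span F {e F 6 3, e F 6 4, e F 6 5}) :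
    lam = mu := by
  classical
  have eap : ∀ (i j : Fin 6), e F 6 i j = if j = i then 1 else 0 := fun i j => by
    simp [e, Pi.single_apply]
  have mem_of_map : ∀ (S : Set (Fin 6 → F)) (T : Submodule F (Fin 6 → F))
      (hmap : Submodule.map g.toLinearMap (Submodule.span F S) = T)
      (x : Fin 6 → F) (hx : x ∈ S), g x ∈ T := by
    intro S T hmap x hx
    rw [← hmap]
    exact ⟨x, Submodule.subset_span hx, rfl⟩
  have genU : ∀ j : Fin 6, j = 3 ∨ j = 4 ∨ j = 5 →
      ∀ v ∈ ({e F 6 0, e F 6 1, e F 6 2} : Set (Fin 6 → F)), v j = 0 := by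
    intro j hj v hv
    simp only [Set.mem_insert_iff, Set.mem_singleton_iff] at hv
    rcases hv with rfl | rfl | rfl <;> rcases hj with rfl | rfl | rfl <;>
      simp [eap]
  have genW : ∀ j : Fin 6, j = 0 ∨ j = 1 ∨ j = 2 →
      ∀ v ∈ ({e F 6 3, e F 6 4, e F 6 5} : Set (Fin 6 → F)), v j = 0 := by
    intro j hj v hv
    simp only [Set.mem_insert_iff, Set.mem_singleton_iff] at hv
    rcases hv with rfl | rfl | rfl <;> rcases hj with rfl | rfl | rfl <;>
      simp [eap]
  have mU : ∀ i : Fin 6, i = 0 ∨ i = 1 ∨ i = 2 →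
      g (e F 6 i) ∈ Submodule.span F ({e F 6 0, e F 6 1, e F 6 2} : Set (Fin 6 → F)) := by
    intro i hi
    refine mem_of_map _ _ h3 _ ?_
    rcases hi with rfl | rfl | rfl <;> simp
  have mW : ∀ i : Fin 6, i = 3 ∨ i = 4 ∨ i = 5 →
      g (e F 6 i) ∈ Submodule.span F ({e F 6 3, e F 6 4, e F 6 5} : Set (Fin 6 → F)) := by
    intro i hi
    refine mem_of_map _ _ h5 _ ?_
    rcases hi with rfl | rfl | rfl <;> simp
  have zU : ∀ i : Fin 6, (i = 0 ∨ i = 1 ∨ i = 2) → ∀ j : Fin 6, (j = 3 ∨ j = 4 ∨ j = 5) →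
      g (e F 6 i) j = 0 := fun i hi j hj => coordZero j (genU j hj) (mU i hi)
  have zW : ∀ i : Fin 6, (i = 3 ∨ i = 4 ∨ i = 5) → ∀ j : Fin 6, (j = 0 ∨ j = 1 ∨ j = 2) →
      g (e F 6 i) j = 0 := fun i hi j hj => coordZero j (genW j hj) (mW i hi)
  -- coefficients
  obtain ⟨s, t, hst⟩ := Submodule.mem_span_pair.mp
    (mem_of_map _ _ h1 (e F 6 0 + e F 6 4) (by simp))
  obtain ⟨p, q, hpq⟩ := Submodule.mem_span_pair.mp
    (mem_of_map _ _ h1 (e F 6 1 - e F 6 5) (by simp))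
  obtain ⟨a, ha⟩ := Submodule.mem_span_singleton.mp
    (mem_of_map _ _ h2 (e F 6 0 + e F 6 2) (by simp))
  obtain ⟨b, hb⟩ := Submodule.mem_span_singleton.mp
    (mem_of_map _ _ h4 (e F 6 3 + lam • e F 6 5) (by simp))
  rw [map_add] at hst ha hb
  rw [map_sub] at hpq
  rw [map_smul] at hb
  have hbne : b ≠ 0 := by
    intro h0
    have hx : e F 6 3 + lam • e F 6 5 = 0 := by
      apply g.injective
      rw [map_add, map_smul, map_zero, ← hb, h0, zero_smul]
    have := congrFun hx 3
    simp [eap] at this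
  -- zero coordinates, named
  have A3 : g (e F 6 0) 3 = 0 := zU 0 (by simp) 3 (by simp)
  have A4 : g (e F 6 0) 4 = 0 := zU 0 (by simp) 4 (by simp)
  have A5 : g (e F 6 0) 5 = 0 := zU 0 (by simp) 5 (by simp)
  have B3 : g (e F 6 1) 3 = 0 := zU 1 (by simp) 3 (by simp)
  have B4 : g (e F 6 1) 4 = 0 := zU 1 (by simp) 4 (by simp)
  have B5 : g (e F 6 1) 5 = 0 := zU 1 (by simp) 5 (by simp)
  have C3 : g (e F 6 2) 3 = 0 := zU 2 (by simp) 3 (by simp)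
  have C4 : g (e F 6 2) 4 = 0 := zU 2 (by simp) 4 (by simp)
  have C5 : g (e F 6 2) 5 = 0 := zU 2 (by simp) 5 (by simp)
  have D0 : g (e F 6 3) 0 = 0 := zW 3 (by simp) 0 (by simp)
  have D1 : g (e F 6 3) 1 = 0 := zW 3 (by simp) 1 (by simp)
  have D2 : g (e F 6 3) 2 = 0 := zW 3 (by simp) 2 (by simp)
  have E0 : g (e F 6 4) 0 = 0 := zW 4 (by simp) 0 (by simp)
  have E1' : g (e F 6 4) 1 = 0 := zW 4 (by simp) 1 (by simp)
  have E2' : g (e F 6 4) 2 = 0 := zW 4 (by simp) 2 (by simp)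
  have G0 : g (e F 6 5) 0 = 0 := zW 5 (by simp) 0 (by simp)
  have G1 : g (e F 6 5) 1 = 0 := zW 5 (by simp) 1 (by simp)
  have G2 : g (e F 6 5) 2 = 0 := zW 5 (by simp) 2 (by simp)
  -- coordinates from hst
  have A0 : g (e F 6 0) 0 = s := by
    have h := congrFun hst 0
    simp [eap, E0] at h
    first | exact h | exact h.symm | linear_combination h | linear_combination -h
  have A1 : g (e F 6 0) 1 = t := by
    have h := congrFun hst 1
    simp [eap, E1'] at h
    first | exact h | exact h.symm | linear_combination h | linear_combination -h
  have A2 : g (e F 6 0) 2 = 0 := by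
    have h := congrFun hst 2
    simp [eap, E2'] at h
    first | exact h | exact h.symm | linear_combination h | linear_combination -h
  have E3' : g (e F 6 4) 3 = 0 := by
    have h := congrFun hst 3
    simp [eap, A3] at h
    first | exact h | exact h.symm | linear_combination h | linear_combination -h
  have E4' : g (e F 6 4) 4 = s := by
    have h := congrFun hst 4
    simp [eap, A4] at h
    first | exact h | exact h.symm | linear_combination h | linear_combination -h
  have E5' : g (e F 6 4) 5 = -t := by
    have h := congrFun hst 5
    simp [eap, A5] at h
    first | exact h | exact h.symm | linear_combination h | linear_combination -h
  -- coordinates from hpq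
  have B0 : g (e F 6 1) 0 = p := by
    have h := congrFun hpq 0
    simp [eap, G0] at h
    first | exact h | exact h.symm | linear_combination h | linear_combination -h
  have B1 : g (e F 6 1) 1 = q := by
    have h := congrFun hpq 1
    simp [eap, G1] at h
    first | exact h | exact h.symm | linear_combination h | linear_combination -h
  have B2 : g (e F 6 1) 2 = 0 := by
    have h := congrFun hpq 2
    simp [eap, G2] at h
    first | exact h | exact h.symm | linear_combination h | linear_combination -h
  have G3 : g (e F 6 5) 3 = 0 := by
    have h := congrFun hpq 3
    simp [eap, B3] at h
    first | exact h | exact h.symm | linear_combination h | linear_combination -h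
  have G4 : g (e F 6 5) 4 = -p := by
    have h := congrFun hpq 4
    simp [eap, B4] at h
    first | exact h | exact h.symm | linear_combination h | linear_combination -h
  have G5 : g (e F 6 5) 5 = q := by
    have h := congrFun hpq 5
    simp [eap, B5] at h
    first | exact h | exact h.symm | linear_combination h | linear_combination -h
  -- coordinates from ha
  have C0 : g (e F 6 2) 0 = a - s := by
    have h := congrFun ha 0
    simp [eap, A0] at h
    first | exact h | exact h.symm | linear_combination h | linear_combination -h
  have C1 : g (e F 6 2) 1 = -t := by
    have h := congrFun ha 1
    simp [eap, A1] at h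
    first | exact h | exact h.symm | linear_combination h | linear_combination -h
  have C2 : g (e F 6 2) 2 = a := by
    have h := congrFun ha 2
    simp [eap, A2] at h
    first | exact h | exact h.symm | linear_combination h | linear_combination -h
  -- coordinates from hb
  have D3 : g (e F 6 3) 3 = b := by
    have h := congrFun hb 3
    simp [eap, G3] at h
    first | exact h | exact h.symm | linear_combination h | linear_combination -h
  have D4 : g (e F 6 3) 4 = lam * p := by
    have h := congrFun hb 4
    simp [eap, G4] at h
    first | exact h | exact h.symm | linear_combination h | linear_combination -h
  have D5 : g (e F 6 3) 5 = b * mu - lam * q := by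
    have h := congrFun hb 5
    simp [eap, G5] at h
    first | exact h | exact h.symm | linear_combination h | linear_combination -h
  -- form equations
  have r0 : Fin.rev (0 : Fin 6) = 5 := rfl
  have r1 : Fin.rev (1 : Fin 6) = 4 := rfl
  have r2 : Fin.rev (2 : Fin 6) = 3 := rfl
  have r3 : Fin.rev (3 : Fin 6) = 2 := rfl
  have r4 : Fin.rev (4 : Fin 6) = 1 := rfl
  have r5 : Fin.rev (5 : Fin 6) = 0 := rfl
  have F1 := hg (e F 6 0) (e F 6 5)
  have F2 := hg (e F 6 1) (e F 6 3)
  have F3 := hg (e F 6 0) (e F 6 3)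
  have F4 := hg (e F 6 2) (e F 6 5)
  have F5 := hg (e F 6 2) (e F 6 3)
  simp only [bform, Fin.sum_univ_six, r0, r1, r2, r3, r4, r5] at F1 F2 F3 F4 F5
  rw [A0, A1, A2, A3, A4, A5, G0, G1, G2, G3, G4, G5] at F1
  rw [B0, B1, B2, B3, B4, B5, D0, D1, D2, D3, D4, D5] at F2
  rw [A0, A1, A2, A3, A4, A5, D0, D1, D2, D3, D4, D5] at F3
  rw [C0, C1, C2, C3, C4, C5, G0, G1, G2, G3, G4, G5] at F4
  rw [C0, C1, C2, C3, C4, C5, D0, D1, D2, D3, D4, D5] at F5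
  simp [eap] at F1 F2 F3 F4 F5
  -- F1 : s*q - t*p = 1 (some form);  F2 : p*(b*mu - lam*q) + q*(lam*p) = 0
  -- F3 : s*(b*mu - lam*q) + t*(lam*p) = 0 ; F4 : (a-s)*q + t*p = 0
  -- F5 : (a-s)*(b*mu-lam*q) - t*lam*p + a*b = 1
  have hp : p = 0 := by
    have h : p * (b * mu) = 0 := by
      first | linear_combination F2 | linear_combination -F2
    exact (mul_eq_zero.mp h).resolve_right (mul_ne_zero hbne hmu)
  have hsq : s * q = 1 := by
    first | linear_combination F1 + t * hp | linear_combination -F1 + t * hp |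
      linear_combination F1 - t * hp | linear_combination -F1 - t * hp
  have hs : s ≠ 0 := left_ne_zero_of_mul_eq_one hsq
  have hq : q ≠ 0 := right_ne_zero_of_mul_eq_one hsq
  have hbmu : b * mu = lam * q := by
    have h : s * (b * mu - lam * q) = 0 := by
      first | linear_combination F3 + t * lam * hp | linear_combination -F3 + t * lam * hp |
        linear_combination F3 - t * lam * hp | linear_combination -F3 - t * lam * hp
    have h2 := (mul_eq_zero.mp h).resolve_left hs
    linear_combination h2
  have haseq : a = s := by
    have h : (a - s) * q = 0 := by
      first | linear_combination F4 + t * hp | linear_combination -F4 + t * hp |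
        linear_combination F4 - t * hp | linear_combination -F4 - t * hp
    have h2 := (mul_eq_zero.mp h).resolve_right hq
    linear_combination h2
  have hab : a * b = 1 := by
    first
    | linear_combination F5 - (a - s) * hbmu + t * lam * hp
    | linear_combination -F5 - (a - s) * hbmu + t * lam * hp
    | linear_combination F5 - (a - s) * hbmu - t * lam * hp
    | linear_combination F5 + (a - s) * hbmu + t * lam * hp
  have hsb : s * b = 1 := by rw [← haseq]; exact hab
  have hqb : q = b := mul_left_cancel₀ hs (hsq.trans hsb.symm)
  have hfin : b * mu = b * lam := by rw [hbmu, hqb]; ring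
  exact (mul_left_cancel₀ hbne hfin).symm
end

section
/- Let F be an infinite field of characteristic not 2 and consider F^6 with basis f_1,...,f_6 and symmetric bilinear form (f_i, f_j) = δ_{i,7-j}. For λ, μ ∈ F^×, suppose g ∈ O_6(F) satisfies: g(span(f_1+f_3)) = span(f_1+f_3), g(span(f_1,f_2,f_3)) = span(f_1,f_2,f_3), g(span(f_1+f_5)) = span(f_1+f_5), g(span(f_1,f_4,f_5)) = span(f_1,f_4,f_5), g(span(f_3+λf_5)) = span(f_3+μf_5), and g(span(f_3,f_5,f_6)) = span(f_3,f_5,f_6). Then λ = μ. -/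
/-- Lemma 3.4 (iii) of the paper: in `F^6` with the split form, if `g ∈ O₆(F)`
stabilizes `span(f₁+f₃)`, `span(f₁,f₂,f₃)`, `span(f₁+f₅)`, `span(f₁,f₄,f₅)`,
`span(f₃,f₅,f₆)` and maps `span(f₃+λf₅)` to `span(f₃+μf₅)`, then `λ = μ`. -/
theorem o6_lemma_iii (F : Type*) [Field F] [Infinite F] (hchar : (2 : F) ≠ 0)
    (lam mu : F) (hlam : lam ≠ 0) (hmu : mu ≠ 0)
    (g : (Fin 6 → F) ≃ₗ[F] (Fin 6 → F))
    (hg : ∀ u v : Fin 6 → F, bform F 6 (g u) (g v) = bform F 6 u v)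
    (h1 : Submodule.map g.toLinearMap
        (Submodule.span F {e F 6 0 + e F 6 2}) = Submodule.span F {e F 6 0 + e F 6 2})
    (h2 : Submodule.map g.toLinearMap
        (Submodule.span F {e F 6 0, e F 6 1, e F 6 2}) =
        Submodule.span F {e F 6 0, e F 6 1, e F 6 2})
    (h3 : Submodule.map g.toLinearMap
        (Submodule.span F {e F 6 0 + e F 6 4}) = Submodule.span F {e F 6 0 + e F 6 4})
    (h4 : Submodule.map g.toLinearMap
        (Submodule.span F {e F 6 0, e F 6 3, e F 6 4}) =
        Submodule.span F {e F 6 0, e F 6 3, e F 6 4})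
    (h5 : Submodule.map g.toLinearMap
        (Submodule.span F {e F 6 2 + lam • e F 6 4}) =
        Submodule.span F {e F 6 2 + mu • e F 6 4})
    (h6 : Submodule.map g.toLinearMap
        (Submodule.span F {e F 6 2, e F 6 4, e F 6 5}) =
        Submodule.span F {e F 6 2, e F 6 4, e F 6 5}) :
    lam = mu := by
  have coord : ∀ (S : Set (Fin 6 → F)) (i : Fin 6), (∀ s ∈ S, s i = 0) →
      ∀ v ∈ Submodule.span F S, v i = 0 := by
    intro S i h v hv
    have hle : Submodule.span F S ≤
        LinearMap.ker (LinearMap.proj (R := F) (φ := fun _ : Fin 6 => F) i) :=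
      Submodule.span_le.2 fun s hs => LinearMap.mem_ker.2 (h s hs)
    exact hle hv
  -- membership of images
  have m0a : g (e F 6 0) ∈ Submodule.span F {e F 6 0, e F 6 1, e F 6 2} := by
    rw [← h2]
    exact Submodule.mem_map_of_mem (Submodule.subset_span (by simp))
  have m0b : g (e F 6 0) ∈ Submodule.span F {e F 6 0, e F 6 3, e F 6 4} := by
    rw [← h4]
    exact Submodule.mem_map_of_mem (Submodule.subset_span (by simp))
  have m2a : g (e F 6 2) ∈ Submodule.span F {e F 6 0, e F 6 1, e F 6 2} := by
    rw [← h2]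
    exact Submodule.mem_map_of_mem (Submodule.subset_span (by simp))
  have m2b : g (e F 6 2) ∈ Submodule.span F {e F 6 2, e F 6 4, e F 6 5} := by
    rw [← h6]
    exact Submodule.mem_map_of_mem (Submodule.subset_span (by simp))
  have m4a : g (e F 6 4) ∈ Submodule.span F {e F 6 0, e F 6 3, e F 6 4} := by
    rw [← h4]
    exact Submodule.mem_map_of_mem (Submodule.subset_span (by simp))
  have m4b : g (e F 6 4) ∈ Submodule.span F {e F 6 2, e F 6 4, e F 6 5} := by
    rw [← h6]
    exact Submodule.mem_map_of_mem (Submodule.subset_span (by simp))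
  -- zero coordinates of images
  have z02 : g (e F 6 0) 2 = 0 := by
    refine coord _ 2 ?_ _ m0b
    rintro x hx
    simp only [Set.mem_insert_iff, Set.mem_singleton_iff] at hx
    rcases hx with rfl | rfl | rfl <;> exact Pi.single_eq_of_ne (by decide) _
  have z04 : g (e F 6 0) 4 = 0 := by
    refine coord _ 4 ?_ _ m0a
    rintro x hx
    simp only [Set.mem_insert_iff, Set.mem_singleton_iff] at hx
    rcases hx with rfl | rfl | rfl <;> exact Pi.single_eq_of_ne (by decide) _
  have z20 : g (e F 6 2) 0 = 0 := by
    refine coord _ 0 ?_ _ m2b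
    rintro x hx
    simp only [Set.mem_insert_iff, Set.mem_singleton_iff] at hx
    rcases hx with rfl | rfl | rfl <;> exact Pi.single_eq_of_ne (by decide) _
  have z24 : g (e F 6 2) 4 = 0 := by
    refine coord _ 4 ?_ _ m2a
    rintro x hx
    simp only [Set.mem_insert_iff, Set.mem_singleton_iff] at hx
    rcases hx with rfl | rfl | rfl <;> exact Pi.single_eq_of_ne (by decide) _
  have z40 : g (e F 6 4) 0 = 0 := by
    refine coord _ 0 ?_ _ m4b
    rintro x hx
    simp only [Set.mem_insert_iff, Set.mem_singleton_iff] at hx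
    rcases hx with rfl | rfl | rfl <;> exact Pi.single_eq_of_ne (by decide) _
  have z42 : g (e F 6 4) 2 = 0 := by
    refine coord _ 2 ?_ _ m4a
    rintro x hx
    simp only [Set.mem_insert_iff, Set.mem_singleton_iff] at hx
    rcases hx with rfl | rfl | rfl <;> exact Pi.single_eq_of_ne (by decide) _
  -- values of basis vectors
  have E00 : e F 6 0 0 = 1 := by simp [e]
  have E02 : e F 6 0 2 = 0 := by simp [e]
  have E04 : e F 6 0 4 = 0 := by simp [e]
  have E20 : e F 6 2 0 = 0 := by simp [e]
  have E22 : e F 6 2 2 = 1 := by simp [e]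
  have E24 : e F 6 2 4 = 0 := by simp [e]
  have E40 : e F 6 4 0 = 0 := by simp [e]
  have E42 : e F 6 4 2 = 0 := by simp [e]
  have E44 : e F 6 4 4 = 1 := by simp [e]
  set t := g (e F 6 0) 0 with ht
  set s := g (e F 6 2) 2 with hsdef
  set r := g (e F 6 4) 4 with hrdef
  -- lines
  have l1 : ∃ a : F, a • (e F 6 0 + e F 6 2) = g (e F 6 0 + e F 6 2) := by
    rw [← Submodule.mem_span_singleton, ← h1]
    exact Submodule.mem_map_of_mem (Submodule.mem_span_singleton_self _)
  have l3 : ∃ a : F, a • (e F 6 0 + e F 6 4) = g (e F 6 0 + e F 6 4) := by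
    rw [← Submodule.mem_span_singleton, ← h3]
    exact Submodule.mem_map_of_mem (Submodule.mem_span_singleton_self _)
  have l5 : ∃ a : F, a • (e F 6 2 + mu • e F 6 4) = g (e F 6 2 + lam • e F 6 4) := by
    rw [← Submodule.mem_span_singleton, ← h5]
    exact Submodule.mem_map_of_mem (Submodule.mem_span_singleton_self _)
  obtain ⟨a, ha⟩ := l1
  obtain ⟨b, hb⟩ := l3
  obtain ⟨c, hc⟩ := l5
  rw [map_add] at ha hb
  rw [map_add, map_smul] at hc
  have ha0 := congrFun ha 0
  have ha2 := congrFun ha 2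
  have hb0 := congrFun hb 0
  have hb4 := congrFun hb 4
  have hc2 := congrFun hc 2
  have hc4 := congrFun hc 4
  simp only [Pi.add_apply, Pi.smul_apply, smul_eq_mul, E00, E02, E04, E20, E22, E24,
    E40, E42, E44, z02, z04, z20, z24, z40, z42, ← ht, ← hsdef, ← hrdef] at ha0 ha2 hb0 hb4 hc2 hc4
  -- ha0 : a * (1 + 0) = t + 0, etc.
  have hat : a = t := by linear_combination ha0
  have has : a = s := by linear_combination ha2
  have hbt : b = t := by linear_combination hb0
  have hbr : b = r := by linear_combination hb4
  have hcs : c = s := by linear_combination hc2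
  have hc4' : c * mu = lam * r := by linear_combination hc4
  have htne : t ≠ 0 := by
    intro h
    have hz : g (e F 6 0) = 0 := by
      funext j
      fin_cases j
      · exact h
      · exact coord _ 1 (by
          rintro x hx
          simp only [Set.mem_insert_iff, Set.mem_singleton_iff] at hx
          rcases hx with rfl | rfl | rfl <;> exact Pi.single_eq_of_ne (by decide) _) _ m0b
      · exact z02
      · exact coord _ 3 (by
          rintro x hx
          simp only [Set.mem_insert_iff, Set.mem_singleton_iff] at hx
          rcases hx with rfl | rfl | rfl <;> exact Pi.single_eq_of_ne (by decide) _) _ m0a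
      · exact z04
      · exact coord _ 5 (by
          rintro x hx
          simp only [Set.mem_insert_iff, Set.mem_singleton_iff] at hx
          rcases hx with rfl | rfl | rfl <;> exact Pi.single_eq_of_ne (by decide) _) _ m0a
    have h0 : e F 6 0 = (0 : Fin 6 → F) := g.injective (by rw [hz, map_zero])
    have := congrFun h0 0
    rw [E00] at this
    exact one_ne_zero this
  -- conclude
  have hst : s = t := by rw [← has, hat]
  have hrt : r = t := by rw [← hbr, hbt]
  have : t * mu = lam * t := by linear_combination hc4' - mu * hcs - mu * hst + lam * hrt
  have := mul_left_cancel₀ htne (by rw [this, mul_comm lam t] : t * mu = t * lam)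
  exact this.symm
end

section
/- Let F be an infinite field of characteristic not 2 and consider F^5 with basis f_1,...,f_5 and symmetric bilinear form (f_i, f_j) = δ_{i,6-j}. For λ, μ ∈ F^×, suppose g ∈ O_5(F) satisfies: g(span(f_1+f_3−(1/2)f_5)) = span(f_1+f_3−(1/2)f_5), g(span(f_1+f_2)) = span(f_1+f_2), g(span(f_1,f_2)) = span(f_1,f_2), g(span(f_4+λf_5)) = span(f_4+μf_5), and g(span(f_4,f_5)) = span(f_4,f_5). Then λ = μ. -/
lemma bform5 (F : Type*) [Field F] (u v : Fin 5 → F) :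
    bform F 5 u v = u 0 * v 4 + u 1 * v 3 + u 2 * v 2 + u 3 * v 1 + u 4 * v 0 := by
  simp [bform, Fin.sum_univ_five, Fin.rev]

lemma e_apply (F : Type*) [Field F] (i j : Fin 5) : e F 5 i j = if i = j then 1 else 0 := by
  simp [e, Pi.single_apply, eq_comm]

/-- Lemma 3.5 of the paper: in `F^5` with the split form, if `g ∈ O₅(F)`
stabilizes `span(f₁+f₃−(1/2)f₅)`, `span(f₁+f₂)`, `span(f₁,f₂)`, `span(f₄,f₅)` and maps
`span(f₄+λf₅)` to `span(f₄+μf₅)`, then `λ = μ`. -/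
theorem o5_lemma (F : Type*) [Field F] [Infinite F] (hchar : (2 : F) ≠ 0)
    (lam mu : F) (hlam : lam ≠ 0) (hmu : mu ≠ 0)
    (g : (Fin 5 → F) ≃ₗ[F] (Fin 5 → F))
    (hg : ∀ u v : Fin 5 → F, bform F 5 (g u) (g v) = bform F 5 u v)
    (h1 : Submodule.map g.toLinearMap
        (Submodule.span F {e F 5 0 + e F 5 2 - (2 : F)⁻¹ • e F 5 4}) =
        Submodule.span F {e F 5 0 + e F 5 2 - (2 : F)⁻¹ • e F 5 4})
    (h2 : Submodule.map g.toLinearMap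
        (Submodule.span F {e F 5 0 + e F 5 1}) = Submodule.span F {e F 5 0 + e F 5 1})
    (h3 : Submodule.map g.toLinearMap
        (Submodule.span F {e F 5 0, e F 5 1}) = Submodule.span F {e F 5 0, e F 5 1})
    (h4 : Submodule.map g.toLinearMap
        (Submodule.span F {e F 5 3 + lam • e F 5 4}) =
        Submodule.span F {e F 5 3 + mu • e F 5 4})
    (h5 : Submodule.map g.toLinearMap
        (Submodule.span F {e F 5 3, e F 5 4}) = Submodule.span F {e F 5 3, e F 5 4}) :
    lam = mu := by
  set w : Fin 5 → F := e F 5 0 + e F 5 2 - (2 : F)⁻¹ • e F 5 4 with hw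
  obtain ⟨a, ha⟩ := Submodule.mem_span_singleton.mp
    (h1 ▸ Submodule.mem_map_of_mem (Submodule.mem_span_singleton_self w))
  obtain ⟨b, hb⟩ := Submodule.mem_span_singleton.mp
    (h2 ▸ Submodule.mem_map_of_mem (Submodule.mem_span_singleton_self (e F 5 0 + e F 5 1)))
  obtain ⟨c, hc⟩ := Submodule.mem_span_singleton.mp
    (h4 ▸ Submodule.mem_map_of_mem (Submodule.mem_span_singleton_self (e F 5 3 + lam • e F 5 4)))
  obtain ⟨α, β, hα⟩ := Submodule.mem_span_pair.mp
    (h3 ▸ Submodule.mem_map_of_mem (Submodule.subset_span (by simp : e F 5 0 ∈ _)))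
  obtain ⟨γ, δ, hγ⟩ := Submodule.mem_span_pair.mp
    (h3 ▸ Submodule.mem_map_of_mem (Submodule.subset_span (by simp : e F 5 1 ∈ _)))
  obtain ⟨p, q, hp⟩ := Submodule.mem_span_pair.mp
    (h5 ▸ Submodule.mem_map_of_mem (Submodule.subset_span (by simp : e F 5 3 ∈ _)))
  obtain ⟨r, s, hr⟩ := Submodule.mem_span_pair.mp
    (h5 ▸ Submodule.mem_map_of_mem (Submodule.subset_span (by simp : e F 5 4 ∈ _)))
  simp only [LinearEquiv.coe_coe] at ha hb hc hα hγ hp hr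
  -- g f3
  have he2 : e F 5 2 = w - e F 5 0 + (2:F)⁻¹ • e F 5 4 := by
    rw [hw]; abel
  have hf3 : a • w - (α • e F 5 0 + β • e F 5 1) + (2:F)⁻¹ • (r • e F 5 3 + s • e F 5 4)
      = g (e F 5 2) := by
    rw [he2, map_add, map_sub, map_smul, ← ha, ← hα, ← hr]
  -- scalar equations
  have E15 := hg (e F 5 0) (e F 5 4)
  rw [← hα, ← hr, bform5, bform5] at E15
  simp [e_apply, hw] at E15
  have E24 := hg (e F 5 1) (e F 5 3)
  rw [← hγ, ← hp, bform5, bform5] at E24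
  simp [e_apply, hw] at E24
  have E14 := hg (e F 5 0) (e F 5 3)
  rw [← hα, ← hp, bform5, bform5] at E14
  simp [e_apply, hw] at E14
  have E25 := hg (e F 5 1) (e F 5 4)
  rw [← hγ, ← hr, bform5, bform5] at E25
  simp [e_apply, hw] at E25
  have E31 := hg (e F 5 2) (e F 5 0)
  rw [← hf3, ← hα, bform5, bform5] at E31
  simp [e_apply, hw] at E31
  have E32 := hg (e F 5 2) (e F 5 1)
  rw [← hf3, ← hγ, bform5, bform5] at E32
  simp [e_apply, hw] at E32
  have E34 := hg (e F 5 2) (e F 5 3)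
  rw [← hf3, ← hp, bform5, bform5] at E34
  simp [e_apply, hw] at E34
  have E35 := hg (e F 5 2) (e F 5 4)
  rw [← hf3, ← hr, bform5, bform5] at E35
  simp [e_apply, hw] at E35
  have hbb := hb
  rw [map_add, ← hα, ← hγ] at hbb
  have hb0 := congrFun hbb 0
  have hb1 := congrFun hbb 1
  simp [e_apply] at hb0 hb1
  have hcc := hc
  rw [map_add, map_smul, ← hp, ← hr] at hcc
  have hc3 := congrFun hcc 3
  have hc4 := congrFun hcc 4
  simp [e_apply] at hc3 hc4
  have h2i : (2:F) * 2⁻¹ = 1 := mul_inv_cancel₀ hchar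
  have E31' : r * β + (s - a) * α = 0 := by
    linear_combination 2 * E31 - (r * β + (s - a) * α) * h2i
  have E32' : r * δ + (s - a) * γ = 0 := by
    linear_combination 2 * E32 - (r * δ + (s - a) * γ) * h2i
  have haalpha : a * α = 1 := by linear_combination E15 - E31'
  have ha0 : a ≠ 0 := left_ne_zero_of_mul_eq_one haalpha
  have hγ0 : γ = 0 := by
    have h : a * γ = 0 := by linear_combination E25 - E32'
    exact (mul_eq_zero.mp h).resolve_left ha0
  have hq0 : q = 0 := by
    have h : a * q = 0 := by linear_combination E34 + E14
    exact (mul_eq_zero.mp h).resolve_left ha0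
  have has : a * s = 1 := by linear_combination E35 + E15
  have hδp : δ * p = 1 := by linear_combination E24 - q * hγ0
  have hp0 : p ≠ 0 := right_ne_zero_of_mul_eq_one hδp
  have hβ0 : β = 0 := by
    have h : β * p = 0 := by linear_combination E14 - α * hq0
    exact (mul_eq_zero.mp h).resolve_right hp0
  have hr0 : r = 0 := by
    have h : δ * r = 0 := by linear_combination E25 - s * hγ0
    exact (mul_eq_zero.mp h).resolve_left (left_ne_zero_of_mul_eq_one hδp)
  have hαs : α * s = 1 := by linear_combination E15 - r * hβ0
  have hs0 : s ≠ 0 := right_ne_zero_of_mul_eq_one has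
  have hαa : α = a := mul_right_cancel₀ hs0 (by rw [hαs, has])
  have haa : a * a = 1 := hαa ▸ haalpha
  have hαδ : α = δ := by linear_combination hb1 - hb0 + hβ0 - hγ0
  have hsa : s = a := mul_left_cancel₀ ha0 (has.trans haa.symm)
  have hap : a * p = 1 := by linear_combination hδp + p * hαδ - p * hαa
  have hpa : p = a := mul_left_cancel₀ ha0 (hap.trans haa.symm)
  have hca : c = a := by linear_combination hc3 + lam * hr0 + hpa
  have hmua : a * mu = lam * a := by linear_combination hc4 - mu * hca + lam * hsa + hq0
  linear_combination (mu - lam) * haa - a * hmua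
end

section
/- Let F be an infinite field of characteristic not 2 and consider F^6 with basis f_1,...,f_6 and symmetric bilinear form (f_i, f_j) = δ_{i,7-j}. Set V = span(f_2+f_4, f_3−f_5, f_6), U_-^1 = span(f_4), U_-^2 = span(f_4, f_5), U_+^1 = span(f_1+f_3), and for λ ∈ F^× set U_+^{2,λ} = span(f_1+f_3, λf_2+f_3). If g ∈ O_6(F) satisfies gV = V, gU_-^1 = U_-^1, gU_-^2 = U_-^2, gU_+^1 = U_+^1, and gU_+^{2,λ} = U_+^{2,μ}, then λ/μ is a square in F^×. -/
private lemma rev0' : Fin.rev (0:Fin 6) = 5 := by decide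
private lemma rev1' : Fin.rev (1:Fin 6) = 4 := by decide
private lemma rev2' : Fin.rev (2:Fin 6) = 3 := by decide
private lemma rev3' : Fin.rev (3:Fin 6) = 2 := by decide
private lemma rev4' : Fin.rev (4:Fin 6) = 1 := by decide
private lemma rev5' : Fin.rev (5:Fin 6) = 0 := by decide

/-- Lemma 3.22 of the paper: in `F^6` with the split form, if `g ∈ O₆(F)`
stabilizes `V = span(f₂+f₄, f₃−f₅, f₆)`, `span(f₄)`, `span(f₄,f₅)`, `span(f₁+f₃)` and maps
`span(f₁+f₃, λf₂+f₃)` to `span(f₁+f₃, μf₂+f₃)`, then `λ/μ` is a square in `F^×`. -/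
theorem o6_square_lemma (F : Type*) [Field F] [Infinite F] (hchar : (2 : F) ≠ 0)
    (lam mu : F) (hlam : lam ≠ 0) (hmu : mu ≠ 0)
    (g : (Fin 6 → F) ≃ₗ[F] (Fin 6 → F))
    (hg : ∀ u v : Fin 6 → F, bform F 6 (g u) (g v) = bform F 6 u v)
    (hV : Submodule.map g.toLinearMap
        (Submodule.span F {e F 6 1 + e F 6 3, e F 6 2 - e F 6 4, e F 6 5}) =
        Submodule.span F {e F 6 1 + e F 6 3, e F 6 2 - e F 6 4, e F 6 5})
    (hU1 : Submodule.map g.toLinearMap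
        (Submodule.span F {e F 6 3}) = Submodule.span F {e F 6 3})
    (hU2 : Submodule.map g.toLinearMap
        (Submodule.span F {e F 6 3, e F 6 4}) = Submodule.span F {e F 6 3, e F 6 4})
    (hP1 : Submodule.map g.toLinearMap
        (Submodule.span F {e F 6 0 + e F 6 2}) = Submodule.span F {e F 6 0 + e F 6 2})
    (hP2 : Submodule.map g.toLinearMap
        (Submodule.span F {e F 6 0 + e F 6 2, lam • e F 6 1 + e F 6 2}) =
        Submodule.span F {e F 6 0 + e F 6 2, mu • e F 6 1 + e F 6 2}) :
    ∃ c : F, c ≠ 0 ∧ lam / mu = c ^ 2 := by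
  classical
  -- g e3 = a • e3
  have h3 : g (e F 6 3) ∈ Submodule.span F {e F 6 3} := by
    rw [← hU1]; exact ⟨e F 6 3, Submodule.mem_span_singleton_self _, rfl⟩
  rw [Submodule.mem_span_singleton] at h3
  obtain ⟨a, ha⟩ := h3
  -- g (e0+e2) = b • (e0+e2)
  have hP : g (e F 6 0 + e F 6 2) ∈ Submodule.span F {e F 6 0 + e F 6 2} := by
    rw [← hP1]; exact ⟨_, Submodule.mem_span_singleton_self _, rfl⟩
  rw [Submodule.mem_span_singleton] at hP
  obtain ⟨b, hb⟩ := hP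
  -- g e4 = c • e3 + d • e4
  have h4 : g (e F 6 4) ∈ Submodule.span F {e F 6 3, e F 6 4} := by
    rw [← hU2]
    exact ⟨e F 6 4, Submodule.subset_span (Set.mem_insert_of_mem _ rfl), rfl⟩
  rw [Submodule.mem_span_pair] at h4
  obtain ⟨c, d, hcd⟩ := h4
  -- g v1 ∈ V
  have hv1 : g (e F 6 1 + e F 6 3) ∈
      Submodule.span F {e F 6 1 + e F 6 3, e F 6 2 - e F 6 4, e F 6 5} := by
    rw [← hV]; exact ⟨_, Submodule.subset_span (Set.mem_insert _ _), rfl⟩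
  rw [Submodule.mem_span_insert] at hv1
  obtain ⟨p1, z1, hz1, hgv1⟩ := hv1
  rw [Submodule.mem_span_pair] at hz1
  obtain ⟨q1, r1, hz1'⟩ := hz1
  -- g v2 ∈ V
  have hv2 : g (e F 6 2 - e F 6 4) ∈
      Submodule.span F {e F 6 1 + e F 6 3, e F 6 2 - e F 6 4, e F 6 5} := by
    rw [← hV]
    exact ⟨_, Submodule.subset_span (Set.mem_insert_of_mem _ (Set.mem_insert _ _)), rfl⟩
  rw [Submodule.mem_span_insert] at hv2
  obtain ⟨p2, z2, hz2, hgv2⟩ := hv2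
  rw [Submodule.mem_span_pair] at hz2
  obtain ⟨q2, r2, hz2'⟩ := hz2
  subst hz1' hz2'
  -- g (lam•e1+e2) ∈ span{e0+e2, mu•e1+e2}
  have hw : g (lam • e F 6 1 + e F 6 2) ∈
      Submodule.span F {e F 6 0 + e F 6 2, mu • e F 6 1 + e F 6 2} := by
    rw [← hP2]
    exact ⟨_, Submodule.subset_span (Set.mem_insert_of_mem _ rfl), rfl⟩
  rw [Submodule.mem_span_pair] at hw
  obtain ⟨s, t, hst⟩ := hw
  -- expand g (lam•e1+e2)
  have key : g (lam • e F 6 1 + e F 6 2) =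
      lam • g (e F 6 1 + e F 6 3) - lam • g (e F 6 3)
        + g (e F 6 2 - e F 6 4) + g (e F 6 4) := by
    rw [← map_smul, ← map_smul, ← map_sub, ← map_add, ← map_add]
    congr 1
    module
  rw [key, hgv1, ← ha, hgv2, ← hcd] at hst
  -- coordinate equations
  have E0 := congrFun hst 0
  have E1 := congrFun hst 1
  have E2 := congrFun hst 2
  have E3 := congrFun hst 3
  have E4 := congrFun hst 4
  have E5 := congrFun hst 5
  simp [e, Pi.single_apply] at E0 E1 E2 E3 E4 E5
  -- bform equations
  have B1 := hg (e F 6 3) (e F 6 0 + e F 6 2)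
  have B2 := hg (e F 6 4) (e F 6 0 + e F 6 2)
  have B3 := hg (e F 6 3) (e F 6 1 + e F 6 3)
  have B4 := hg (e F 6 3) (e F 6 2 - e F 6 4)
  have B6 := hg (e F 6 4) (e F 6 2 - e F 6 4)
  have B7 := hg (e F 6 0 + e F 6 2) (e F 6 1 + e F 6 3)
  have B8 := hg (e F 6 0 + e F 6 2) (e F 6 2 - e F 6 4)
  simp only [← ha, ← hb, ← hcd, hgv1, hgv2] at B1 B2 B3 B4 B6 B7 B8
  simp [bform, Fin.sum_univ_six, rev0', rev1', rev2', rev3', rev4', rev5',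
    e, Pi.single_apply, show (Fin.last 5 : Fin 6) = 5 from rfl] at B1 B2 B3 B4 B6 B7 B8
  have ha0 : a ≠ 0 := left_ne_zero_of_mul_eq_one B1
  have hb0 : b ≠ 0 := right_ne_zero_of_mul_eq_one B1
  have hc0 : c = 0 := B2.resolve_right hb0
  have hq1 : q1 = 0 := B3.resolve_left ha0
  have hq2 : q2 ≠ 0 := right_ne_zero_of_mul_eq_one B4
  have hd : d = q2 := by linear_combination (-1 : F) * E4 + lam * hq1
  have hd0 : d ≠ 0 := hd ▸ hq2
  have hp2 : p2 = 0 := by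
    have h : d * p2 = 0 := by linear_combination B6 - q2 * hc0
    exact (mul_eq_zero.mp h).resolve_left hd0
  have hr2 : r2 = 0 := by
    have h : b * r2 = 0 := by linear_combination B8 - b * hp2
    exact (mul_eq_zero.mp h).resolve_left hb0
  have hr1 : r1 = 0 := by
    have h : lam * r1 = 0 := by linear_combination (-1 : F) * E5 - hr2
    exact (mul_eq_zero.mp h).resolve_left hlam
  have hp1 : p1 = a := by
    have h : lam * (p1 - a) = 0 := by linear_combination (-1 : F) * E3 - hp2 - hc0
    exact sub_eq_zero.mp ((mul_eq_zero.mp h).resolve_left hlam)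
  have hq2b : q2 = b := mul_left_cancel₀ ha0 (B4.trans B1.symm)
  have ht : t = b := by linear_combination E2 - E0 + lam * hq1 + hq2b
  rw [ht, hp1, hp2] at E1
  refine ⟨b, hb0, ?_⟩
  rw [div_eq_iff hmu]
  linear_combination (-lam) * B1 - b * E1
end

section
/- Let F be an arbitrary field, G = GL_n(F), B the Borel subgroup of upper triangular matrices, and B' = { g ∈ B : g e_n ∈ F e_n } (block upper triangular with an (n−1)×(n−1) upper triangular block and a 1×1 block, with zero off-diagonal block in the last column above the (n,n) entry). Then the double coset space B \ G / B' is finite. -/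
/-- The set of invertible upper triangular matrices (the Borel `B`) in `GL_n(F)`. -/
def borelSet (F : Type*) [Field F] (n : ℕ) : Set (Matrix (Fin n) (Fin n) F)ˣ :=
  {g | ∀ i j : Fin n, (j : ℕ) < (i : ℕ) → (g : Matrix (Fin n) (Fin n) F) i j = 0}

/-- The subgroup `B' = {g ∈ B : g e_n ∈ F e_n}`: upper triangular block-diagonal
matrices `diag(A, b)` with `A ∈ B_{n-1}` and `b ∈ F^×`. -/
def borelPrimeSet (F : Type*) [Field F] (n : ℕ) : Set (Matrix (Fin n) (Fin n) F)ˣ :=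
  {g | (∀ i j : Fin n, (j : ℕ) < (i : ℕ) → (g : Matrix (Fin n) (Fin n) F) i j = 0) ∧
    ∀ i j : Fin n, (i : ℕ) + 1 < n → (j : ℕ) + 1 = n →
      (g : Matrix (Fin n) (Fin n) F) i j = 0}

namespace BorelAux

variable {F : Type*} [Field F] {m : ℕ}

/-- Upper triangular predicate. -/
def UTp (A : Matrix (Fin m) (Fin m) F) : Prop :=
  ∀ i j : Fin m, (j : ℕ) < (i : ℕ) → A i j = 0

/-- Last-column predicate. -/
def LCp (A : Matrix (Fin m) (Fin m) F) : Prop :=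
  ∀ i j : Fin m, (i : ℕ) + 1 < m → (j : ℕ) + 1 = m → A i j = 0

lemma utp_iff_blockTriangular {A : Matrix (Fin m) (Fin m) F} :
    UTp A ↔ A.BlockTriangular (Fin.val) := by
  constructor
  · intro h i j hij; exact h i j hij
  · intro h i j hij; exact h hij

lemma lcp_iff_blockTriangular {A : Matrix (Fin m) (Fin m) F} (hA : UTp A) :
    LCp A ↔ A.BlockTriangular (fun i : Fin m => if (i : ℕ) + 1 = m then 0 else 1) := by
  constructor
  · intro h i j hij
    by_cases hj : (j : ℕ) + 1 = m
    · by_cases hi : (i : ℕ) + 1 = m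
      · simp [hi, hj] at hij
      · exact h i j (lt_of_le_of_ne (Nat.succ_le_of_lt i.2) hi) hj
    · by_cases hi : (i : ℕ) + 1 = m <;> simp [hi, hj] at hij
  · intro h i j hi hj
    have hi' : (i : ℕ) + 1 ≠ m := by omega
    exact h (by simp [hi', hj])

lemma UTp.mul {A B : Matrix (Fin m) (Fin m) F} (hA : UTp A) (hB : UTp B) : UTp (A * B) := by
  rw [utp_iff_blockTriangular] at *
  exact hA.mul hB

lemma LCp.mul {A B : Matrix (Fin m) (Fin m) F} (hA : LCp A) (hB : LCp B) : LCp (A * B) := by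
  intro i j hi hj
  rw [Matrix.mul_apply]
  apply Finset.sum_eq_zero
  intro k _
  by_cases hk : (k : ℕ) + 1 < m
  · rw [hB k j hk hj, mul_zero]
  · have hk' : (k : ℕ) + 1 = m := by have := k.2; omega
    rw [hA i k hi hk', zero_mul]

lemma UTp.one : UTp (1 : Matrix (Fin m) (Fin m) F) := by
  intro i j hij
  rw [Matrix.one_apply_ne (by intro h; subst h; omega)]

lemma LCp.one : LCp (1 : Matrix (Fin m) (Fin m) F) := by
  intro i j hi hj
  rw [Matrix.one_apply_ne (by intro h; subst h; omega)]

lemma UTp.inv {A : Matrix (Fin m) (Fin m) F} (hu : IsUnit A) (hA : UTp A) : UTp A⁻¹ := by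
  letI := hu.invertible
  rw [utp_iff_blockTriangular] at *
  exact Matrix.blockTriangular_inv_of_blockTriangular hA

lemma LCp.inv {A : Matrix (Fin m) (Fin m) F} (hu : IsUnit A) (hA : UTp A) (hA' : LCp A) :
    LCp A⁻¹ := by
  letI := hu.invertible
  rw [lcp_iff_blockTriangular (hA.inv hu)]
  rw [lcp_iff_blockTriangular hA] at hA'
  exact Matrix.blockTriangular_inv_of_blockTriangular hA'

/-- split equivalence -/
def splitE (p : Fin (m + 1)) : (Fin m ⊕ Unit) ≃ Fin (m + 1) :=
  ((finSuccEquiv' p).trans (Equiv.optionEquivSumPUnit _)).symm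

@[simp] lemma splitE_inl (p : Fin (m + 1)) (i : Fin m) :
    splitE p (Sum.inl i) = p.succAbove i := by
  simp [splitE, Equiv.optionEquivSumPUnit, finSuccEquiv'_symm_some]

@[simp] lemma splitE_inr (p : Fin (m + 1)) (u : Unit) : splitE p (Sum.inr u) = p := by
  simp [splitE, Equiv.optionEquivSumPUnit, finSuccEquiv'_symm_none]

lemma sum_two (f : Fin m → F) (p q : Fin m) (hpq : p ≠ q)
    (h : ∀ k, k ≠ p → k ≠ q → f k = 0) : ∑ k, f k = f p + f q := by
  classical
  have hcong : ∀ k ∈ Finset.univ, f k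
      = (if k = p then f p else 0) + (if k = q then f q else 0) := by
    intro k _
    by_cases h1 : k = p
    · subst h1; simp [hpq]
    · by_cases h2 : k = q
      · subst h2; simp [h1]
      · simp [h1, h2, h k h1 h2]
  rw [Finset.sum_congr rfl hcong, Finset.sum_add_distrib]
  simp

lemma ut_diag_ne_zero {A : Matrix (Fin m) (Fin m) F} (hu : IsUnit A) (hUT : UTp A) :
    ∀ i, A i i ≠ 0 := by
  intro i
  have hdet : A.det ≠ 0 := by
    intro h
    rw [Matrix.isUnit_iff_isUnit_det, h] at hu
    exact not_isUnit_zero hu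
  rw [Matrix.det_of_upperTriangular (by intro a b hab; exact hUT a b hab)] at hdet
  intro h
  exact hdet (Finset.prod_eq_zero (Finset.mem_univ i) h)

lemma isUnit_of_ut_diag {A : Matrix (Fin m) (Fin m) F} (hUT : UTp A)
    (hdiag : ∀ i, A i i ≠ 0) : IsUnit A := by
  rw [Matrix.isUnit_iff_isUnit_det,
    Matrix.det_of_upperTriangular (by intro a b hab; exact hUT a b hab)]
  rw [isUnit_iff_ne_zero]
  exact Finset.prod_ne_zero_iff.mpr fun i _ => hdiag i


/-- succAbove hits the top index iff the argument is the top index of `Fin m`,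
provided `p` is not the last index. -/
lemma succAbove_eq_last_iff {p : Fin (m + 1)} (hp : p ≠ Fin.last m) (k : Fin m) :
    p.succAbove k = Fin.last m ↔ (k : ℕ) + 1 = m := by
  have hpv : (p : ℕ) < m := by
    have := p.isLt
    have : (p : ℕ) ≠ m := fun h => hp (Fin.ext h)
    omega
  rw [Fin.succAbove]
  split_ifs with h
  · simp only [Fin.ext_iff, Fin.coe_castSucc, Fin.val_last]
    have hk := k.isLt
    rw [Fin.lt_def] at h
    simp only [Fin.coe_castSucc] at h
    constructor
    · omega
    · intro hkm; omega
  · simp only [Fin.ext_iff, Fin.val_succ, Fin.val_last]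

/-- The main assembling lemma. -/
lemma assemble {X1 : Matrix (Fin (m + 1)) (Fin (m + 1)) F} {j0 : Fin (m + 1)} {δ c : F}
    (hδ : δ = 0 ∨ δ = 1) (hc : c ≠ 0)
    (hrow : ∀ l, X1 (Fin.last m) l = if l = j0 then 1 else if l = Fin.last m then δ else 0)
    (hcol : ∀ i, i ≠ Fin.last m → X1 i j0 = 0)
    {b b' : Matrix (Fin m) (Fin m) F}
    (hbu : IsUnit b) (hbUT : UTp b) (hb'u : IsUnit b') (hb'UT : UTp b') (hb'LC : LCp b')
    (hcdiag : ∀ k : Fin m, (k : ℕ) + 1 = m → b' k k = c)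
    (hN : ∀ i j, (b * X1.submatrix Fin.castSucc j0.succAbove * b') i j = 0 ∨
      (b * X1.submatrix Fin.castSucc j0.succAbove * b') i j = 1) :
    ∃ B B' : Matrix (Fin (m + 1)) (Fin (m + 1)) F,
      IsUnit B ∧ UTp B ∧ IsUnit B' ∧ UTp B' ∧ LCp B' ∧
      ∀ i j, (B * X1 * B') i j = 0 ∨ (B * X1 * B') i j = 1 := by
  classical
  set er := splitE (m := m) (Fin.last m) with her
  set ec := splitE j0 with hec
  set M := X1.submatrix Fin.castSucc j0.succAbove with hM
  set A : Matrix (Fin m ⊕ Unit) (Fin m ⊕ Unit) F :=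
    Matrix.fromBlocks b 0 0 (c⁻¹ • 1) with hA
  set A' : Matrix (Fin m ⊕ Unit) (Fin m ⊕ Unit) F :=
    Matrix.fromBlocks b' 0 0 (c • 1) with hA'
  set vmat : Matrix Unit (Fin m) F := Matrix.of fun _ j => X1 (Fin.last m) (j0.succAbove j)
    with hv
  -- the split of X1
  have hsplit : X1.submatrix (⇑er) (⇑ec) = Matrix.fromBlocks M 0 vmat 1 := by
    ext x y
    cases x with
    | inl i =>
      cases y with
      | inl j =>
        simp [her, hec, hM, Fin.succAbove_last]
      | inr u =>
        simp only [her, hec, Matrix.submatrix_apply, splitE_inl, splitE_inr,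
          Matrix.fromBlocks_apply₁₂, Matrix.zero_apply, Fin.succAbove_last]
        exact hcol _ (Fin.castSucc_lt_last i).ne
    | inr u =>
      cases y with
      | inl j =>
        simp [her, hec, hv]
      | inr w =>
        simp only [her, hec, Matrix.submatrix_apply, splitE_inr, Matrix.fromBlocks_apply₂₂]
        rw [hrow j0, if_pos rfl, Matrix.one_apply, if_pos (Subsingleton.elim u w)]
  -- the product over the sum type
  have hprod : A * X1.submatrix (⇑er) (⇑ec) * A'
      = Matrix.fromBlocks (b * M * b') 0 (c⁻¹ • (vmat * b')) 1 := by
    rw [hsplit, hA, hA', Matrix.fromBlocks_multiply, Matrix.fromBlocks_multiply]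
    simp [Matrix.smul_mul, Matrix.mul_smul, smul_smul, inv_mul_cancel₀ hc, mul_inv_cancel₀ hc]
  -- the lower-left entries of the product are 0 or 1
  have hlow : ∀ (u : Unit) (y : Fin m),
      (c⁻¹ • (vmat * b')) u y = 0 ∨ (c⁻¹ • (vmat * b')) u y = 1 := by
    intro u y
    rw [Matrix.smul_apply, Matrix.mul_apply]
    by_cases hj0 : j0 = Fin.last m
    · have hz : ∀ k : Fin m, vmat u k = 0 := by
        intro k
        show X1 (Fin.last m) (j0.succAbove k) = 0
        rw [hrow, if_neg (Fin.succAbove_ne j0 k), if_neg]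
        subst hj0
        rw [Fin.succAbove_last]
        exact (Fin.castSucc_lt_last k).ne
      left
      simp [hz]
    · have hvk : ∀ k : Fin m, vmat u k = if (k : ℕ) + 1 = m then δ else 0 := by
        intro k
        show X1 (Fin.last m) (j0.succAbove k) = _
        rw [hrow, if_neg (Fin.succAbove_ne j0 k)]
        by_cases hk : (k : ℕ) + 1 = m
        · rw [if_pos ((succAbove_eq_last_iff hj0 k).mpr hk), if_pos hk]
        · rw [if_neg (fun h => hk ((succAbove_eq_last_iff hj0 k).mp h)), if_neg hk]
      have hm : 0 < m := by
        rcases Nat.eq_zero_or_pos m with h0 | h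
        · exfalso; subst h0; exact hj0 (Fin.ext (by omega))
        · exact h
      set kstar : Fin m := ⟨m - 1, by omega⟩ with hkstar
      have hsum : ∑ k, vmat u k * b' k y = δ * b' kstar y := by
        rw [Finset.sum_eq_single kstar]
        · rw [hvk, if_pos (by simp [hkstar]; omega)]
        · intro k _ hk
          rw [hvk, if_neg, zero_mul]
          intro hkm
          exact hk (Fin.ext (by simp [hkstar]; omega))
        · intro h; exact absurd (Finset.mem_univ kstar) h
      rw [hsum]
      by_cases hy' : y = kstar
      · rw [hy', hcdiag kstar (by simp [hkstar]; omega)]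
        rcases hδ with h | h
        · left; rw [h, zero_mul, smul_zero]
        · right; rw [h, one_mul, smul_eq_mul, inv_mul_cancel₀ hc]
      · left
        have hylt : (y : ℕ) < (kstar : ℕ) := by
          have h1 : (y : ℕ) ≠ m - 1 := fun h => hy' (Fin.ext (by simp [hkstar, h]))
          have := y.isLt
          simp only [hkstar]
          omega
        rw [hb'UT kstar y hylt, mul_zero, smul_zero]
  -- final matrices
  refine ⟨A.submatrix (⇑er.symm) (⇑er.symm), A'.submatrix (⇑ec.symm) (⇑ec.symm),
    ?_, ?_, ?_, ?_, ?_, ?_⟩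
  · rw [Matrix.isUnit_iff_isUnit_det, Matrix.det_submatrix_equiv_self, hA,
      Matrix.det_fromBlocks_zero₂₁]
    have h1 : ((c⁻¹ • 1 : Matrix Unit Unit F)).det = c⁻¹ := by
      simp [Matrix.det_unique]
    rw [h1]
    exact ((Matrix.isUnit_iff_isUnit_det b).mp hbu).mul
      (isUnit_iff_ne_zero.mpr (inv_ne_zero hc))
  · intro i j hij
    obtain ⟨x, rfl⟩ := er.surjective i
    obtain ⟨y, rfl⟩ := er.surjective j
    rw [Matrix.submatrix_apply, Equiv.symm_apply_apply, Equiv.symm_apply_apply]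
    cases x with
    | inl x =>
      cases y with
      | inl y =>
        rw [hA, Matrix.fromBlocks_apply₁₁]
        apply hbUT
        simpa [her] using hij
      | inr u => rw [hA, Matrix.fromBlocks_apply₁₂, Matrix.zero_apply]
    | inr u =>
      cases y with
      | inl y => rw [hA, Matrix.fromBlocks_apply₂₁, Matrix.zero_apply]
      | inr w => exfalso; simp [her] at hij
  · rw [Matrix.isUnit_iff_isUnit_det, Matrix.det_submatrix_equiv_self, hA',
      Matrix.det_fromBlocks_zero₂₁]
    have h1 : ((c • 1 : Matrix Unit Unit F)).det = c := by
      simp [Matrix.det_unique]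
    rw [h1]
    exact ((Matrix.isUnit_iff_isUnit_det b').mp hb'u).mul (isUnit_iff_ne_zero.mpr hc)
  · intro i j hij
    obtain ⟨x, rfl⟩ := ec.surjective i
    obtain ⟨y, rfl⟩ := ec.surjective j
    rw [Matrix.submatrix_apply, Equiv.symm_apply_apply, Equiv.symm_apply_apply]
    cases x with
    | inl x =>
      cases y with
      | inl y =>
        rw [hA', Matrix.fromBlocks_apply₁₁]
        apply hb'UT
        have h2 : j0.succAbove y < j0.succAbove x := by
          rw [Fin.lt_def]
          simpa [hec] using hij
        exact (Fin.strictMono_succAbove j0).lt_iff_lt.mp h2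
      | inr u => rw [hA', Matrix.fromBlocks_apply₁₂, Matrix.zero_apply]
    | inr u =>
      cases y with
      | inl y => rw [hA', Matrix.fromBlocks_apply₂₁, Matrix.zero_apply]
      | inr w => exfalso; simp [hec] at hij
  · intro i j hi hj
    obtain ⟨x, rfl⟩ := ec.surjective i
    obtain ⟨y, rfl⟩ := ec.surjective j
    rw [Matrix.submatrix_apply, Equiv.symm_apply_apply, Equiv.symm_apply_apply]
    cases y with
    | inr u =>
      cases x with
      | inl x => rw [hA', Matrix.fromBlocks_apply₁₂, Matrix.zero_apply]
      | inr w =>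
        exfalso
        simp only [hec, splitE_inr] at hi hj
        omega
    | inl y =>
      have hyl : ((j0.succAbove y : Fin (m + 1)) : ℕ) + 1 = m + 1 := by
        simpa [hec] using hj
      have hj0 : j0 ≠ Fin.last m := by
        intro h
        subst h
        rw [Fin.succAbove_last] at hyl
        have := y.isLt
        simp at hyl
        omega
      have hym : (y : ℕ) + 1 = m := by
        refine (succAbove_eq_last_iff hj0 y).mp ?_
        rw [Fin.ext_iff, Fin.val_last]
        omega
      cases x with
      | inr u => rw [hA', Matrix.fromBlocks_apply₂₁, Matrix.zero_apply]
      | inl x =>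
        rw [hA', Matrix.fromBlocks_apply₁₁]
        apply hb'LC x y _ hym
        have hxl : ((j0.succAbove x : Fin (m + 1)) : ℕ) + 1 < m + 1 := by
          simpa [hec] using hi
        have hxne : (x : ℕ) + 1 ≠ m := by
          intro h
          have := (succAbove_eq_last_iff hj0 x).mpr h
          rw [this] at hxl
          simp at hxl
        have := x.isLt
        omega
  · -- the product entries
    have h1 : X1 = (X1.submatrix (⇑er) (⇑ec)).submatrix (⇑er.symm) (⇑ec.symm) := by
      rw [Matrix.submatrix_submatrix]
      ext i j
      simp
    have hBX : A.submatrix (⇑er.symm) (⇑er.symm) * X1 * A'.submatrix (⇑ec.symm) (⇑ec.symm)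
        = (A * X1.submatrix (⇑er) (⇑ec) * A').submatrix (⇑er.symm) (⇑ec.symm) := by
      conv_lhs => rw [h1]
      rw [Matrix.submatrix_mul_equiv, Matrix.submatrix_mul_equiv]
    intro i j
    rw [hBX, hprod, Matrix.submatrix_apply]
    rcases hx : er.symm i with x | u <;> rcases hy : ec.symm j with y | w
    · rw [Matrix.fromBlocks_apply₁₁]; exact hN x y
    · rw [Matrix.fromBlocks_apply₁₂, Matrix.zero_apply]; left; rfl
    · rw [Matrix.fromBlocks_apply₂₁]; exact hlow u y
    · rw [Matrix.fromBlocks_apply₂₂, Matrix.one_apply, if_pos (Subsingleton.elim u w)]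
      right; rfl


/-- The Borel subgroup. -/
def borelSubgroup (F : Type*) [Field F] (n : ℕ) : Subgroup (Matrix (Fin n) (Fin n) F)ˣ where
  carrier := borelSet F n
  one_mem' := by
    intro i j hij
    show (1 : Matrix (Fin n) (Fin n) F) i j = 0
    exact UTp.one i j hij
  mul_mem' := by
    intro a b ha hb
    intro i j hij
    show ((a : Matrix (Fin n) (Fin n) F) * (b : Matrix (Fin n) (Fin n) F)) i j = 0
    exact UTp.mul ha hb i j hij
  inv_mem' := by
    intro a ha i j hij
    rw [show ((a⁻¹ : (Matrix (Fin n) (Fin n) F)ˣ) : Matrix (Fin n) (Fin n) F)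
        = (a : Matrix (Fin n) (Fin n) F)⁻¹ from Matrix.coe_units_inv a]
    exact UTp.inv a.isUnit ha i j hij

/-- The Borel-prime subgroup. -/
def borelPrimeSubgroup (F : Type*) [Field F] (n : ℕ) : Subgroup (Matrix (Fin n) (Fin n) F)ˣ where
  carrier := borelPrimeSet F n
  one_mem' := ⟨fun i j hij => UTp.one i j hij, fun i j hi hj => LCp.one i j hi hj⟩
  mul_mem' := by
    intro a b ha hb
    refine ⟨fun i j hij => ?_, fun i j hi hj => ?_⟩
    · exact UTp.mul ha.1 hb.1 i j hij
    · exact LCp.mul ha.2 hb.2 i j hi hj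
  inv_mem' := by
    intro a ha
    have h1 : ((a⁻¹ : (Matrix (Fin n) (Fin n) F)ˣ) : Matrix (Fin n) (Fin n) F)
        = (a : Matrix (Fin n) (Fin n) F)⁻¹ := Matrix.coe_units_inv a
    refine ⟨fun i j hij => ?_, fun i j hi hj => ?_⟩
    · rw [h1]; exact UTp.inv a.isUnit ha.1 i j hij
    · rw [h1]; exact LCp.inv a.isUnit ha.1 ha.2 i j hi hj

lemma key (F : Type*) [Field F] :
    ∀ (n : ℕ) (X : Matrix (Fin n) (Fin n) F), IsUnit X →
      ∃ b b' : Matrix (Fin n) (Fin n) F, IsUnit b ∧ UTp b ∧ IsUnit b' ∧ UTp b' ∧ LCp b' ∧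
        ∀ i j, (b * X * b') i j = 0 ∨ (b * X * b') i j = 1 := by
  intro n
  induction n with
  | zero =>
    intro X _
    exact ⟨1, 1, isUnit_one, fun i => i.elim0, isUnit_one, fun i => i.elim0,
      fun i => i.elim0, fun i => i.elim0⟩
  | succ n IH =>
    intro X hX
    classical
    -- find the leftmost nonzero entry of the bottom row
    have hrowne : ∃ j, X (Fin.last n) j ≠ 0 := by
      by_contra h
      push_neg at h
      have hdet : X.det = 0 := Matrix.det_eq_zero_of_row_eq_zero (Fin.last n) h
      rw [Matrix.isUnit_iff_isUnit_det, hdet] at hX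
      exact not_isUnit_zero hX
    obtain ⟨j1, hj1⟩ := hrowne
    set T : Finset (Fin (n + 1)) := Finset.univ.filter (fun j => X (Fin.last n) j ≠ 0) with hT
    have hTne : T.Nonempty := ⟨j1, by simp [hT, hj1]⟩
    set j0 := T.min' hTne with hj0def
    have hj0 : X (Fin.last n) j0 ≠ 0 := by
      have := T.min'_mem hTne
      simp only [hT, Finset.mem_filter] at this
      exact this.2
    have hmin : ∀ l : Fin (n + 1), (l : ℕ) < (j0 : ℕ) → X (Fin.last n) l = 0 := by
      intro l hl
      by_contra hne
      have hle : j0 ≤ l := T.min'_le l (by simp [hT, hne])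
      rw [Fin.le_def] at hle
      omega
    set a := (X (Fin.last n) j0)⁻¹ with hadef
    have ha : X (Fin.last n) j0 * a = 1 := mul_inv_cancel₀ hj0
    set d0 := X (Fin.last n) (Fin.last n) with hd0def
    set δ : F := if j0 = Fin.last n then 0 else if d0 = 0 then 0 else 1 with hδdef
    have hδ : δ = 0 ∨ δ = 1 := by
      rw [hδdef]; split_ifs <;> simp
    -- the right multiplier
    set R : Matrix (Fin (n + 1)) (Fin (n + 1)) F := Matrix.of fun k l =>
      if k = l then (if k = j0 then a else if (k = Fin.last n ∧ d0 ≠ 0) then d0⁻¹ else 1)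
      else if k = j0 ∧ (j0 : ℕ) < (l : ℕ) ∧ l ≠ Fin.last n then -(a * X (Fin.last n) l) else 0
      with hRdef
    have hRapp : ∀ k l, R k l = if k = l then
          (if k = j0 then a else if (k = Fin.last n ∧ d0 ≠ 0) then d0⁻¹ else 1)
        else if k = j0 ∧ (j0 : ℕ) < (l : ℕ) ∧ l ≠ Fin.last n
          then -(a * X (Fin.last n) l) else 0 := fun k l => rfl
    have hRUT : UTp R := by
      intro k l hkl
      rw [hRapp, if_neg (by intro h; subst h; omega), if_neg]
      rintro ⟨rfl, h2, -⟩
      omega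
    have hRLC : LCp R := by
      intro k l hk hl
      have hkl : k ≠ l := by intro h; subst h; omega
      have hll : l = Fin.last n := Fin.ext (by rw [Fin.val_last]; omega)
      rw [hRapp, if_neg hkl, if_neg]
      rintro ⟨-, -, h3⟩
      exact h3 hll
    have hRdiag : ∀ k, R k k ≠ 0 := by
      intro k
      rw [hRapp, if_pos rfl]
      split_ifs with h1 h2
      · exact inv_ne_zero hj0
      · exact inv_ne_zero h2.2
      · exact one_ne_zero
    have hRu : IsUnit R := isUnit_of_ut_diag hRUT hRdiag
    -- bottom row of X * R
    have hXRrow : ∀ l, (X * R) (Fin.last n) l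
        = if l = j0 then 1 else if l = Fin.last n then δ else 0 := by
      intro l
      rw [Matrix.mul_apply]
      by_cases hlj : l = j0
      · subst hlj
        rw [if_pos rfl, Finset.sum_eq_single j0]
        · rw [hRapp, if_pos rfl, if_pos rfl]
          exact ha
        · intro k _ hk
          rw [hRapp, if_neg hk, if_neg, mul_zero]
          rintro ⟨rfl, h2, -⟩
          omega
        · intro h; exact absurd (Finset.mem_univ j0) h
      · rw [if_neg hlj]
        by_cases hll : l = Fin.last n
        · subst hll
          have hj0ne : j0 ≠ Fin.last n := fun h => hlj h.symm
          rw [if_pos rfl, Finset.sum_eq_single (Fin.last n)]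
          · rw [hRapp, if_pos rfl, if_neg hlj]
            by_cases hd : d0 = 0
            · rw [if_neg (by rintro ⟨-, hd2⟩; exact hd2 hd), mul_one, hδdef,
                if_neg hj0ne, if_pos hd, ← hd0def]
              exact hd
            · rw [if_pos ⟨rfl, hd⟩, hδdef, if_neg hj0ne, if_neg hd, ← hd0def]
              exact mul_inv_cancel₀ hd
          · intro k _ hk
            rw [hRapp, if_neg hk, if_neg, mul_zero]
            rintro ⟨-, -, h3⟩
            exact h3 rfl
          · intro h; exact absurd (Finset.mem_univ _) h
        · rw [if_neg hll]
          by_cases hlt : (l : ℕ) < (j0 : ℕ)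
          · rw [Finset.sum_eq_single l]
            · rw [hmin l hlt, zero_mul]
            · intro k _ hk
              rw [hRapp, if_neg hk, if_neg, mul_zero]
              rintro ⟨rfl, hlt2, -⟩
              omega
            · intro h; exact absurd (Finset.mem_univ _) h
          · have hvne : (l : ℕ) ≠ (j0 : ℕ) := fun h => hlj (Fin.ext h)
            have hgt : (j0 : ℕ) < (l : ℕ) := by omega
            have hj0l : j0 ≠ l := fun h => hlj h.symm
            rw [sum_two _ j0 l hj0l]
            · rw [hRapp, if_neg hj0l, if_pos ⟨rfl, hgt, hll⟩, hRapp, if_pos rfl,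
                if_neg (fun h => hlj h), if_neg]
              · rw [mul_one, mul_neg, ← mul_assoc, ha, one_mul, neg_add_cancel]
              · rintro ⟨rfl, -⟩
                exact hll rfl
            · intro k hk1 hk2
              rw [hRapp, if_neg hk2, if_neg, mul_zero]
              rintro ⟨rfl, -, -⟩
              exact hk1 rfl
    -- column j0 of X * R
    have hXRcol : ∀ i, (X * R) i j0 = X i j0 * a := by
      intro i
      rw [Matrix.mul_apply, Finset.sum_eq_single j0]
      · rw [hRapp, if_pos rfl, if_pos rfl]
      · intro k _ hk
        rw [hRapp, if_neg hk, if_neg, mul_zero]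
        rintro ⟨rfl, h2, -⟩
        omega
      · intro h; exact absurd (Finset.mem_univ _) h
    have hXRlastj0 : (X * R) (Fin.last n) j0 = 1 := by
      rw [hXRrow, if_pos rfl]
    -- the left multiplier
    set L : Matrix (Fin (n + 1)) (Fin (n + 1)) F := Matrix.of fun i k =>
      if i = k then 1 else if k = Fin.last n then -((X * R) i j0) else 0 with hLdef
    have hLapp : ∀ i k, L i k = if i = k then 1
        else if k = Fin.last n then -((X * R) i j0) else 0 := fun i k => rfl
    have hLUT : UTp L := by
      intro i k hik
      rw [hLapp, if_neg (by intro h; subst h; omega), if_neg]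
      intro h
      subst h
      have := i.isLt
      rw [Fin.val_last] at hik
      omega
    have hLu : IsUnit L := by
      apply isUnit_of_ut_diag hLUT
      intro i
      rw [hLapp, if_pos rfl]
      exact one_ne_zero
    set X1 := L * (X * R) with hX1def
    have hX1u : IsUnit X1 := hLu.mul (hX.mul hRu)
    have hrowX1 : ∀ l, X1 (Fin.last n) l
        = if l = j0 then 1 else if l = Fin.last n then δ else 0 := by
      intro l
      rw [← hXRrow l, hX1def, Matrix.mul_apply, Finset.sum_eq_single (Fin.last n)]
      · rw [hLapp, if_pos rfl, one_mul]
      · intro k _ hk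
        rw [hLapp, if_neg (fun h => hk h.symm), if_neg hk, zero_mul]
      · intro h; exact absurd (Finset.mem_univ _) h
    have hcolX1 : ∀ i, i ≠ Fin.last n → X1 i j0 = 0 := by
      intro i hi
      rw [hX1def, Matrix.mul_apply, sum_two _ i (Fin.last n) hi]
      · rw [hLapp, if_pos rfl, one_mul, hLapp, if_neg hi, if_pos rfl, hXRlastj0,
          mul_one, add_neg_cancel]
      · intro k hk1 hk2
        rw [hLapp, if_neg (fun h => hk1 h.symm), if_neg hk2, zero_mul]
    -- the minor is invertible
    set M := X1.submatrix Fin.castSucc j0.succAbove with hMdef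
    have hX1lastj0 : X1 (Fin.last n) j0 = 1 := by rw [hrowX1, if_pos rfl]
    have hdet : X1.det
        = (-1) ^ ((Fin.last n : ℕ) + (j0 : ℕ)) * X1 (Fin.last n) j0 * M.det := by
      rw [Matrix.det_succ_column X1 j0, Finset.sum_eq_single (Fin.last n)]
      · rw [hMdef, Fin.succAbove_last]
      · intro k _ hk
        rw [hcolX1 k hk, mul_zero, zero_mul]
      · intro h; exact absurd (Finset.mem_univ _) h
    have hMu : IsUnit M := by
      rw [Matrix.isUnit_iff_isUnit_det, isUnit_iff_ne_zero]
      intro h0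
      have hd : X1.det ≠ 0 := by
        rw [Matrix.isUnit_iff_isUnit_det, isUnit_iff_ne_zero] at hX1u
        exact hX1u
      rw [hdet, h0, mul_zero] at hd
      exact hd rfl
    obtain ⟨b, b', hbu, hbUT, hb'u, hb'UT, hb'LC, hN⟩ := IH M hMu
    -- the corner constant
    set c : F := dite (0 < n)
      (fun h => b' ⟨n - 1, by omega⟩ ⟨n - 1, by omega⟩) (fun _ => (1 : F)) with hcdef
    have hc : c ≠ 0 := by
      rw [hcdef]
      by_cases h : 0 < n
      · rw [dif_pos h]
        exact ut_diag_ne_zero hb'u hb'UT _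
      · rw [dif_neg h]
        exact one_ne_zero
    have hcdiag : ∀ k : Fin n, (k : ℕ) + 1 = n → b' k k = c := by
      intro k hk
      have hn : 0 < n := by omega
      rw [hcdef, dif_pos hn]
      have : k = (⟨n - 1, by omega⟩ : Fin n) := Fin.ext (by simp; omega)
      rw [this]
    obtain ⟨B, B', hBu, hBUT, hB'u, hB'UT, hB'LC, hfin⟩ :=
      assemble hδ hc hrowX1 hcolX1 hbu hbUT hb'u hb'UT hb'LC hcdiag hN
    refine ⟨B * L, R * B', hBu.mul hLu, hBUT.mul hLUT, hRu.mul hB'u, hRUT.mul hB'UT,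
      hRLC.mul hB'LC, ?_⟩
    have hEq : B * L * X * (R * B') = B * X1 * B' := by
      rw [hX1def]
      simp only [mul_assoc]
    intro i j
    rw [hEq]
    exact hfin i j

end BorelAux

open BorelAux in
/-- Lemma 11.1 / \cite{H}: the double coset space `B \ GL_n(F) / B'`
is finite, over an arbitrary field. -/
theorem borel_borelPrime_double_cosets_finite (F : Type*) [Field F] (n : ℕ) :
    Finite (DoubleCoset.Quotient (borelSet F n) (borelPrimeSet F n)) := by
  classical
  let S := {A : Matrix (Fin n) (Fin n) F // IsUnit A ∧ ∀ i j, A i j = 0 ∨ A i j = 1}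
  have hSfin : Finite S := by
    have hinj : Function.Injective
        (fun A : S => (fun i j => A.1 i j = 1 : Fin n → Fin n → Prop)) := by
      intro A B h
      apply Subtype.ext; ext i j
      have hij := congrFun (congrFun h i) j
      simp only [eq_iff_iff] at hij
      rcases A.2.2 i j with hA | hA <;> rcases B.2.2 i j with hB | hB <;>
        rw [hA, hB] <;> simp only [hA, hB] at hij <;>
        first
          | rfl
          | exact hij.mpr trivial
          | exact hij.mp trivial
          | exact (hij.mp trivial).symm
    exact Finite.of_injective _ hinj
  have hsurj : Function.Surjective
      (fun A : S => (Quotient.mk (DoubleCoset.setoid (borelSet F n) (borelPrimeSet F n)) A.2.1.unit :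
        DoubleCoset.Quotient (borelSet F n) (borelPrimeSet F n))) := by
    intro q
    obtain ⟨g, rfl⟩ := Quotient.exists_rep q
    obtain ⟨b, b', hb, hbUT, hb', hb'UT, hb'LC, h01⟩ :=
      key F n (g : Matrix (Fin n) (Fin n) F) g.isUnit
    have hs : IsUnit (b * (g : Matrix (Fin n) (Fin n) F) * b') := (hb.mul g.isUnit).mul hb'
    refine ⟨⟨b * (g : Matrix (Fin n) (Fin n) F) * b', hs, h01⟩, ?_⟩
    apply Quotient.sound
    have hbmem : hb.unit ∈ borelSubgroup F n := by
      show hb.unit ∈ borelSet F n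
      intro i j hij
      rw [hb.unit_spec]
      exact hbUT i j hij
    have hb'mem : hb'.unit ∈ borelPrimeSubgroup F n := by
      show hb'.unit ∈ borelPrimeSet F n
      refine ⟨fun i j hij => ?_, fun i j hi hj => ?_⟩
      · rw [hb'.unit_spec]; exact hb'UT i j hij
      · rw [hb'.unit_spec]; exact hb'LC i j hi hj
    have heq : hs.unit = hb.unit * g * hb'.unit := by
      apply Units.ext
      simp [hs.unit_spec, hb.unit_spec, hb'.unit_spec]
    have hrel : (DoubleCoset.setoid ((borelSubgroup F n : Set _)) ((borelPrimeSubgroup F n : Set _)))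
        hs.unit g := by
      rw [DoubleCoset.rel_iff]
      refine ⟨hb.unit⁻¹, (borelSubgroup F n).inv_mem hbmem,
        hb'.unit⁻¹, (borelPrimeSubgroup F n).inv_mem hb'mem, ?_⟩
      rw [heq]
      group
    exact hrel
  exact Finite.of_surjective _ hsurj
end

section
/- Let F be an arbitrary field and n ≥ 2. Let H_1 be the subgroup of GL_n(F) of matrices of the block form (a x 0; 0 a^{-1} 0; 0 0 B) with a ∈ F^×, x ∈ F, B ∈ GL_{n−2}(F) (a 2×2 upper triangular block with inverse diagonal entries, direct sum with GL_{n−2}). Then for every k, the group H_1 has finitely many orbits on the Grassmannian of k-dimensional subspaces of F^n. -/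
open Module Submodule Set

section Helpers

variable {F : Type*} [Field F] {N : Type*} [AddCommGroup N] [Module F N] [FiniteDimensional F N]

lemma helper0 (B : Submodule F N) (d : ℕ) (hd : Module.finrank F B = d) :
    ∃ u : Fin d → N, (∀ i, u i ∈ B) ∧ LinearIndependent F u ∧
      Submodule.span F (Set.range u) = B := by
  classical
  let b := (Module.finBasis F B).reindex (finCongr hd)
  refine ⟨fun i => (b i : N), fun i => (b i).2, ?_, ?_⟩
  · exact b.linearIndependent.map' B.subtype (Submodule.ker_subtype B)
  · have : Set.range (fun i => (b i : N)) = B.subtype '' (Set.range b) := by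
      rw [← Set.range_comp]; rfl
    rw [this, ← Submodule.map_span, b.span_eq, Submodule.map_top, Submodule.range_subtype]

lemma helper_ext {ι : Type*} [Fintype ι] (B : Submodule F N) (f : ι → N)
    (hf : LinearIndependent F f) (hfB : ∀ i, f i ∈ B) (d : ℕ)
    (hd : Module.finrank F B = Fintype.card ι + d) :
    ∃ z : Fin d → N, (∀ i, z i ∈ B) ∧ LinearIndependent F (Sum.elim f z) ∧
      Submodule.span F (Set.range (Sum.elim f z)) = B := by
  classical
  set U := Submodule.span F (Set.range f) with hU
  have hUB : U ≤ B := Submodule.span_le.2 (Set.range_subset_iff.2 hfB)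
  obtain ⟨Co, hCo⟩ := Submodule.exists_isCompl U
  set W := Co ⊓ B with hWdef
  have hdisj : Disjoint U W := hCo.disjoint.mono_right inf_le_left
  have hsup : U ⊔ W = B := by
    rw [hWdef, ← sup_inf_assoc_of_le Co hUB, hCo.sup_eq_top, top_inf_eq]
  have hdimU : Module.finrank F U = Fintype.card ι := finrank_span_eq_card hf
  have hdimW : Module.finrank F W = d := by
    have h1 := Submodule.finrank_sup_add_finrank_inf_eq U W
    rw [hsup, hdisj.eq_bot, hd, hdimU, finrank_bot] at h1
    omega
  obtain ⟨z, hzW, hzind, hzspan⟩ := helper0 W d hdimW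
  refine ⟨fun i => z i, fun i => (inf_le_right : Co ⊓ B ≤ B) (hzW i), ?_, ?_⟩
  · exact hf.sum_type hzind (by rw [hzspan, ← hU]; exact hdisj)
  · rw [Sum.elim_range, Submodule.span_union, hzspan, ← hU, hsup]

end Helpers
lemma helper_twist {F : Type*} [Field F] {N : Type*} [AddCommGroup N] [Module F N]
    {c g : ℕ} (w : Fin c → N) (τ : Fin g → N)
    (hind : LinearIndependent F (Sum.elim w τ)) (Q : Matrix (Fin g) (Fin g) F) (hQ : IsUnit Q) :
    LinearIndependent F (Sum.elim w (fun i => ∑ j, Q i j • τ j)) := by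
  rw [Fintype.linearIndependent_iff] at hind ⊢
  intro φ hφ
  have key : ∀ x, Sum.elim (fun a => φ (Sum.inl a))
      (fun j => ∑ i, φ (Sum.inr i) * Q i j) x = 0 := by
    apply hind
    rw [Fintype.sum_sum_type] at hφ ⊢
    simp only [Sum.elim_inl, Sum.elim_inr] at hφ ⊢
    have hs : ∑ x : Fin g, (∑ i, φ (Sum.inr i) * Q i x) • τ x
        = ∑ x : Fin g, φ (Sum.inr x) • ∑ j, Q x j • τ j := by
      calc ∑ x, (∑ i, φ (Sum.inr i) * Q i x) • τ x
          = ∑ x, ∑ i, (φ (Sum.inr i) * Q i x) • τ x := by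
            simp_rw [Finset.sum_smul]
        _ = ∑ i, ∑ x, (φ (Sum.inr i) * Q i x) • τ x := Finset.sum_comm
        _ = ∑ i, φ (Sum.inr i) • ∑ x, Q i x • τ x := by
            simp_rw [Finset.smul_sum, smul_smul]
    rw [hs]
    exact hφ
  have h1 : ∀ a, φ (Sum.inl a) = 0 := fun a => key (Sum.inl a)
  have h2 : ∀ i, φ (Sum.inr i) = 0 := by
    have hv : Matrix.vecMul (fun i => φ (Sum.inr i)) Q = Matrix.vecMul (0 : Fin g → F) Q := by
      rw [Matrix.zero_vecMul]
      funext j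
      exact key (Sum.inr j)
    have := Matrix.vecMul_injective_iff_isUnit.2 hQ hv
    exact fun i => congrFun this i
  rintro (a | i)
  · exact h1 a
  · exact h2 i
lemma mk1 {F : Type*} [Field F] (v : Fin 2 → F) (hv : v ≠ 0) :
    ∃ (b : Matrix (Fin 2) (Fin 2) F) (j : Fin 2), b 1 0 = 0 ∧ b 0 0 * b 1 1 = 1 ∧
      b.mulVec (Pi.single j 1) = v := by
  by_cases hβ : v 1 = 0
  · have hα : v 0 ≠ 0 := by
      intro h0; apply hv; funext i; fin_cases i <;> simp [h0, hβ]
    refine ⟨!![v 0, 0; 0, (v 0)⁻¹], 0, by simp, by simp [hα], ?_⟩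
    rw [Matrix.mulVec_single]
    funext i; fin_cases i <;> simp [hβ]
  · refine ⟨!![(v 1)⁻¹, v 0; 0, v 1], 1, by simp, by simp [hβ], ?_⟩
    rw [Matrix.mulVec_single]
    funext i; fin_cases i <;> simp

lemma span_single_eq {F : Type*} [Field F] (v u : Fin 2 → F) (c : F) (hc : c ≠ 0)
    (h : c • v = u) : Submodule.span F {v} = Submodule.span F ({u} : Set (Fin 2 → F)) := by
  apply le_antisymm <;> rw [Submodule.span_le, Set.singleton_subset_iff] <;>
    rw [SetLike.mem_coe, Submodule.mem_span_singleton]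
  · exact ⟨c⁻¹, by rw [← h, smul_smul, inv_mul_cancel₀ hc, one_smul]⟩
  · exact ⟨c, h⟩
lemma lemmaA {F : Type*} [Field F] {a g : ℕ} (L : Fin a → (Fin 2 → F)) (p : Fin g → (Fin 2 → F))
    (hind : LinearIndependent F (Sum.elim L p)) :
    ∃ (b : Matrix (Fin 2) (Fin 2) F) (σ : Fin a → Fin 2) (ρ : Fin g → Fin 2)
      (Q : Matrix (Fin g) (Fin g) F) (tc : Fin g → Fin a → F),
      b 1 0 = 0 ∧ b 0 0 * b 1 1 = 1 ∧ IsUnit Q ∧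
      Submodule.span F (Set.range fun j => b.mulVec (Pi.single (σ j) 1)) =
        Submodule.span F (Set.range L) ∧
      ∀ i, (∑ j, Q i j • p j) + (∑ j, tc i j • L j) = b.mulVec (Pi.single (ρ i) 1) := by
  classical
  have hcard : a + g ≤ 2 := by
    have h1 := hind.fintype_card_le_finrank
    simpa using h1
  have hLind : LinearIndependent F L := by
    have := hind.comp Sum.inl Sum.inl_injective
    simpa [Sum.elim_comp_inl] using this
  have hpind : LinearIndependent F p := by
    have := hind.comp Sum.inr Sum.inr_injective
    simpa [Sum.elim_comp_inr] using this
  match a, g, hcard with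
  | (a+3), g, h => exact absurd h (by omega)
  | 2, (g+1), h => exact absurd h (by omega)
  | 1, (g+2), h => exact absurd h (by omega)
  | 0, 0, _ =>
    exact ⟨1, Fin.elim0, Fin.elim0, 1, Fin.elim0, by simp [Matrix.one_apply], by simp,
      isUnit_one, by simp, fun i => i.elim0⟩
  | 1, 0, _ =>
    obtain ⟨b, j, hb1, hb2, hb3⟩ := mk1 (L 0) (hLind.ne_zero 0)
    refine ⟨b, fun _ => j, Fin.elim0, 1, Fin.elim0, hb1, hb2, isUnit_one, ?_, fun i => i.elim0⟩
    rw [Set.range_unique, Set.range_unique]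
    simp [hb3]
  | 0, 1, _ =>
    obtain ⟨b, j, hb1, hb2, hb3⟩ := mk1 (p 0) (hpind.ne_zero 0)
    refine ⟨b, Fin.elim0, fun _ => j, 1, fun _ => Fin.elim0, hb1, hb2, isUnit_one, by simp, ?_⟩
    intro i
    have h00 : (1 : Matrix (Fin 1) (Fin 1) F) i 0 = 1 := by
      rw [Subsingleton.elim i (0 : Fin 1)]; rfl
    simp [Fin.sum_univ_one, h00, hb3]
  | 2, 0, _ =>
    refine ⟨1, id, Fin.elim0, 1, Fin.elim0, by simp [Matrix.one_apply], by simp,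
      isUnit_one, ?_, fun i => i.elim0⟩
    have h1 : Submodule.span F (Set.range L) = ⊤ := by
      apply Submodule.eq_top_of_finrank_eq
      rw [finrank_span_eq_card hLind]
      simp
    have h2 : Submodule.span F
        (Set.range fun j : Fin 2 => (Pi.single j 1 : Fin 2 → F)) = ⊤ := by
      rw [eq_top_iff]
      rintro v -
      have hv : v = v 0 • (Pi.single 0 1 : Fin 2 → F) + v 1 • (Pi.single 1 1 : Fin 2 → F) := by
        funext i; fin_cases i <;> simp
      rw [hv]
      exact Submodule.add_mem _
        (Submodule.smul_mem _ _ (Submodule.subset_span ⟨0, rfl⟩))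
        (Submodule.smul_mem _ _ (Submodule.subset_span ⟨1, rfl⟩))
    rw [h1]
    have he : (fun j : Fin 2 => (1 : Matrix (Fin 2) (Fin 2) F).mulVec (Pi.single (id j) 1)) =
        fun j : Fin 2 => (Pi.single j 1 : Fin 2 → F) := by
      funext j; rw [Matrix.one_mulVec]; rfl
    rw [he, h2]
  | 0, 2, _ =>
    have hspan : Submodule.span F (Set.range p) = ⊤ := by
      apply Submodule.eq_top_of_finrank_eq
      rw [finrank_span_eq_card hpind]
      simp
    have hex : ∀ i : Fin 2, ∃ cf : Fin 2 → F, ∑ j, cf j • p j = Pi.single i 1 := by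
      intro i
      rw [← mem_span_range_iff_exists_fun, hspan]
      trivial
    choose Qf hQf using hex
    have hQP : (show Matrix (Fin 2) (Fin 2) F from Qf) * (show Matrix (Fin 2) (Fin 2) F from
        fun i j => p i j) = 1 := by
      ext i k
      rw [Matrix.mul_apply, Matrix.one_apply]
      have h := congrFun (hQf i) k
      rw [Finset.sum_apply] at h
      simp only [Pi.smul_apply, smul_eq_mul] at h
      rw [h, Pi.single_apply]
      by_cases hik : i = k <;> simp [hik, eq_comm]
    have hQunit : IsUnit (show Matrix (Fin 2) (Fin 2) F from Qf) := by
      rw [Matrix.isUnit_iff_isUnit_det]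
      exact IsUnit.of_mul_eq_one _ (by rw [← Matrix.det_mul, hQP, Matrix.det_one])
    refine ⟨1, Fin.elim0, id, show Matrix (Fin 2) (Fin 2) F from Qf, fun _ => Fin.elim0,
      by simp [Matrix.one_apply], by simp, hQunit, by simp, ?_⟩
    intro i
    rw [show (∑ j : Fin 0, (fun (_ : Fin 2) => Fin.elim0) i j • L j) = 0 from by simp, add_zero,
      Matrix.one_mulVec]
    exact hQf i
  | 1, 1, _ =>
    have hpair : ∀ s t : F, s • L 0 + t • p 0 = 0 → s = 0 ∧ t = 0 := by
      intro s t hst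
      rw [Fintype.linearIndependent_iff] at hind
      have := hind (Sum.elim (fun _ => s) (fun _ => t)) (by
        rw [Fintype.sum_sum_type, Fin.sum_univ_one, Fin.sum_univ_one]
        simpa using hst)
      exact ⟨this (Sum.inl 0), this (Sum.inr 0)⟩
    by_cases hβ : L 0 1 = 0
    · -- L 0 is a multiple of e₀
      have hα : L 0 0 ≠ 0 := by
        intro h0
        have := hLind.ne_zero 0
        apply this; funext i; fin_cases i <;> simp [h0, hβ]
      have hp1 : p 0 1 ≠ 0 := by
        intro h1
        have hrel : (p 0 0) • L 0 + (-(L 0 0)) • p 0 = 0 := by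
          funext i; fin_cases i
          · show p 0 0 * L 0 0 + -(L 0 0) * p 0 0 = 0
            ring
          · show p 0 0 * L 0 1 + -(L 0 0) * p 0 1 = 0
            rw [hβ, h1]; ring
        exact hα (neg_eq_zero.mp (hpair _ _ hrel).2)
      refine ⟨!![(p 0 1)⁻¹, p 0 0; 0, p 0 1], fun _ => 0, fun _ => 1, 1, 0,
        by simp, by simp [hp1], isUnit_one, ?_, ?_⟩
      · rw [Set.range_unique, Set.range_unique]
        apply span_single_eq _ _ ((L 0 0) * (p 0 1)) (mul_ne_zero hα hp1)
        rw [Matrix.mulVec_single]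
        funext i; fin_cases i
        · show L 0 0 * p 0 1 * ((p 0 1)⁻¹ * 1) = L 0 0
          field_simp
        · show L 0 0 * p 0 1 * (0 * 1) = L 0 1
          rw [hβ]; ring
      · intro i
        have h00 : (1 : Matrix (Fin 1) (Fin 1) F) i 0 = 1 := by
          rw [Subsingleton.elim i (0 : Fin 1)]; rfl
        rw [Fin.sum_univ_one, Fin.sum_univ_one, h00, one_smul]
        rw [Matrix.mulVec_single]
        funext j; fin_cases j
        · show p 0 0 + (0 : Fin 1 → Fin 1 → F) i 0 * L 0 0 = p 0 0 * 1
          simp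
        · show p 0 1 + (0 : Fin 1 → Fin 1 → F) i 0 * L 0 1 = p 0 1 * 1
          simp
    · -- L 0 1 ≠ 0
      have hδ : p 0 0 * L 0 1 - p 0 1 * L 0 0 ≠ 0 := by
        intro h0
        have hrel : (p 0 1) • L 0 + (-(L 0 1)) • p 0 = 0 := by
          funext i; fin_cases i
          · show p 0 1 * L 0 0 + -(L 0 1) * p 0 0 = 0
            linear_combination -h0
          · show p 0 1 * L 0 1 + -(L 0 1) * p 0 1 = 0
            ring
        exact hβ (neg_eq_zero.mp (hpair _ _ hrel).2)
      refine ⟨!![(L 0 1)⁻¹, L 0 0; 0, L 0 1], fun _ => 1, fun _ => 0,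
        !![(p 0 0 * L 0 1 - p 0 1 * L 0 0)⁻¹],
        fun _ _ => -(p 0 1) * (L 0 1 * (p 0 0 * L 0 1 - p 0 1 * L 0 0))⁻¹,
        by simp, by simp [hβ], ?_, ?_, ?_⟩
      · rw [Matrix.isUnit_iff_isUnit_det, Matrix.det_fin_one]
        have h11 : (!![(p 0 0 * L 0 1 - p 0 1 * L 0 0)⁻¹] : Matrix (Fin 1) (Fin 1) F) 0 0
            = (p 0 0 * L 0 1 - p 0 1 * L 0 0)⁻¹ := by simp
        rw [h11]
        exact isUnit_iff_ne_zero.2 (inv_ne_zero hδ)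
      · rw [Set.range_unique, Set.range_unique]
        have hcol : (!![(L 0 1)⁻¹, L 0 0; 0, L 0 1]).mulVec (Pi.single (1 : Fin 2) 1) = L 0 := by
          rw [Matrix.mulVec_single]
          funext i; fin_cases i
          · show L 0 0 * 1 = L 0 0
            ring
          · show L 0 1 * 1 = L 0 1
            ring
        simp [hcol]
      · intro i
        have hQ00 : (!![(p 0 0 * L 0 1 - p 0 1 * L 0 0)⁻¹] :
            Matrix (Fin 1) (Fin 1) F) i 0 = (p 0 0 * L 0 1 - p 0 1 * L 0 0)⁻¹ := by
          rw [Subsingleton.elim i (0 : Fin 1)]; simp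
        rw [Fin.sum_univ_one, Fin.sum_univ_one, hQ00, Matrix.mulVec_single]
        funext j; fin_cases j
        · show (p 0 0 * L 0 1 - p 0 1 * L 0 0)⁻¹ * p 0 0 +
            -(p 0 1) * (L 0 1 * (p 0 0 * L 0 1 - p 0 1 * L 0 0))⁻¹ * L 0 0
            = (L 0 1)⁻¹ * 1
          field_simp
          ring
        · show (p 0 0 * L 0 1 - p 0 1 * L 0 0)⁻¹ * p 0 1 +
            -(p 0 1) * (L 0 1 * (p 0 0 * L 0 1 - p 0 1 * L 0 0))⁻¹ * L 0 1
            = 0 * 1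
          field_simp
          ring
def splitEq {p q N : ℕ} (h : N = p + q) : Fin N ≃ Fin p ⊕ Fin q :=
  (finCongr h).trans finSumFinEquiv.symm

lemma splitEq_lt {p q N : ℕ} (h : N = p + q) (i : Fin N) (hi : (i : ℕ) < p) :
    splitEq h i = Sum.inl ⟨i, hi⟩ := by
  have h1 : (finCongr h) i = Fin.castAdd q ⟨i, hi⟩ := by
    apply Fin.ext; simp
  simp only [splitEq, Equiv.trans_apply, h1, finSumFinEquiv_symm_apply_castAdd]

lemma splitEq_ge {p q N : ℕ} (h : N = p + q) (i : Fin N) (hi : p ≤ (i : ℕ)) :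
    splitEq h i = Sum.inr ⟨(i : ℕ) - p, by have := i.isLt; omega⟩ := by
  have h1 : (finCongr h) i = Fin.natAdd p ⟨(i : ℕ) - p, by have := i.isLt; omega⟩ := by
    apply Fin.ext; simp; omega
  simp only [splitEq, Equiv.trans_apply, h1, finSumFinEquiv_symm_apply_natAdd]

section CoordMaps

variable (F : Type*) [Field F] (n : ℕ)

def hmap (hn : 2 ≤ n) : (Fin n → F) →ₗ[F] (Fin 2 → F) :=
  LinearMap.funLeft F F (Fin.castLE hn)

def tmap : (Fin n → F) →ₗ[F] (Fin (n - 2) → F) :=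
  LinearMap.funLeft F F (fun i => ⟨(i : ℕ) + 2, by have := i.isLt; omega⟩)

def emb1 (hn : 2 ≤ n) : (Fin 2 → F) →ₗ[F] (Fin n → F) where
  toFun v := fun i => if hi : (i : ℕ) < 2 then v ⟨i, hi⟩ else 0
  map_add' x y := by funext i; by_cases hi : (i : ℕ) ≤ 1 <;> simp [hi]
  map_smul' c x := by funext i; by_cases hi : (i : ℕ) ≤ 1 <;> simp [hi]

def emb2 : (Fin (n - 2) → F) →ₗ[F] (Fin n → F) where
  toFun v := fun i => if hi : 2 ≤ (i : ℕ) then v ⟨(i : ℕ) - 2, by have := i.isLt; omega⟩ else 0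
  map_add' x y := by funext i; by_cases hi : 2 ≤ (i : ℕ) <;> simp [hi]
  map_smul' c x := by funext i; by_cases hi : 2 ≤ (i : ℕ) <;> simp [hi]

variable {F n}

lemma hmap_emb1 (hn : 2 ≤ n) (v : Fin 2 → F) : hmap F n hn (emb1 F n hn v) = v := by
  funext j
  have hj : ((Fin.castLE hn j : Fin n) : ℕ) < 2 := j.isLt
  simp only [hmap, emb1, LinearMap.funLeft_apply, LinearMap.coe_mk, AddHom.coe_mk]
  rw [dif_pos hj]
  congr 1

lemma tmap_emb2 (v : Fin (n - 2) → F) : tmap F n (emb2 F n v) = v := by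
  funext j
  simp only [tmap, emb2, LinearMap.funLeft_apply, LinearMap.coe_mk, AddHom.coe_mk]
  rw [dif_pos (by omega : 2 ≤ (j : ℕ) + 2)]
  congr 1

lemma hmap_emb2 (hn : 2 ≤ n) (v : Fin (n - 2) → F) : hmap F n hn (emb2 F n v) = 0 := by
  funext j
  have hj : ¬ (2 ≤ ((Fin.castLE hn j : Fin n) : ℕ)) := by
    have := j.isLt; simp only [Fin.coe_castLE]; omega
  simp only [hmap, emb2, LinearMap.funLeft_apply, LinearMap.coe_mk, AddHom.coe_mk]
  rw [dif_neg hj]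
  rfl

lemma tmap_emb1 (hn : 2 ≤ n) (v : Fin 2 → F) : tmap F n (emb1 F n hn v) = 0 := by
  funext j
  simp only [tmap, emb1, LinearMap.funLeft_apply, LinearMap.coe_mk, AddHom.coe_mk]
  rw [dif_neg (by omega : ¬ ((j : ℕ) + 2 < 2))]
  rfl

lemma decomp (hn : 2 ≤ n) (v : Fin n → F) :
    emb1 F n hn (hmap F n hn v) + emb2 F n (tmap F n v) = v := by
  funext i
  simp only [Pi.add_apply, emb1, emb2, hmap, tmap, LinearMap.funLeft_apply, LinearMap.coe_mk,
    AddHom.coe_mk]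
  by_cases hi : (i : ℕ) < 2
  · rw [dif_pos hi, dif_neg (by omega)]
    simp only [add_zero]
    congr 1
  · rw [dif_neg hi, dif_pos (by omega)]
    simp only [zero_add]
    congr 1
    apply Fin.ext
    simp
    omega

end CoordMaps
set_option maxHeartbeats 1600000 in
set_option synthInstance.maxHeartbeats 400000 in
/-- Lemma 11.13 of the paper: the subgroup `H₁` of `GL_n(F)` of matrices
`(a x 0; 0 a⁻¹ 0; 0 0 B)` with `a ∈ F^×`, `x ∈ F`, `B ∈ GL_{n-2}(F)` has finitely many
orbits on the Grassmannian of `k`-dimensional subspaces of `F^n`, over any field. -/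
theorem H1_finitely_many_grassmannian_orbits (F : Type*) [Field F] (n : ℕ) (hn : 2 ≤ n)
    (k : ℕ) :
    ∃ T : Set (Submodule F (Fin n → F)), T.Finite ∧
      ∀ V : Submodule F (Fin n → F), Module.finrank F V = k →
        ∃ W ∈ T, ∃ M : Matrix (Fin n) (Fin n) F,
          IsUnit M ∧
          (∀ i j : Fin n,
            (((i : ℕ) < 2 ∧ 2 ≤ (j : ℕ)) ∨ (2 ≤ (i : ℕ) ∧ (j : ℕ) < 2)) → M i j = 0) ∧
          M ⟨1, by omega⟩ ⟨0, by omega⟩ = 0 ∧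
          M ⟨0, by omega⟩ ⟨0, by omega⟩ * M ⟨1, by omega⟩ ⟨1, by omega⟩ = 1 ∧
          Submodule.map (Matrix.toLin' M) W = V := by
  classical
  refine ⟨Submodule.span F '' {s : Set (Fin n → F) | ∀ v ∈ s, ∀ i, v i = 0 ∨ v i = 1}, ?_, ?_⟩
  · apply Set.Finite.image
    have hS : ({v : Fin n → F | ∀ i, v i = 0 ∨ v i = 1}).Finite := by
      have hsub : {v : Fin n → F | ∀ i, v i = 0 ∨ v i = 1} ⊆
          Set.pi Set.univ (fun _ => ({0, 1} : Set F)) := by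
        intro v hv i _
        rcases hv i with h | h <;> simp [h]
      exact (Set.Finite.pi (fun _ => (Set.finite_singleton (1:F)).insert 0)).subset hsub
    exact hS.finite_subsets.subset (fun s hs v hv => hs v hv)
  intro V _
  -- basic submodules
  set K₂ := Submodule.map (tmap F n) (V ⊓ LinearMap.ker (hmap F n hn)) with hK₂def
  set T₂ := Submodule.map (tmap F n) V with hT₂def
  set L := V ⊓ LinearMap.ker (tmap F n) with hLdef
  set c := Module.finrank F K₂ with hcdef
  set a := Module.finrank F L with hadef
  have hKT : K₂ ≤ T₂ := Submodule.map_mono inf_le_left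
  have hcle : c ≤ Module.finrank F T₂ := Submodule.finrank_mono hKT
  set g := Module.finrank F T₂ - c with hgdef
  have hcg : Module.finrank F T₂ = c + g := by omega
  have hcgle : c + g ≤ n - 2 := by
    rw [← hcg]
    calc Module.finrank F T₂ ≤ Module.finrank F (Fin (n-2) → F) := T₂.finrank_le
      _ = n - 2 := by simp
  -- tail families
  obtain ⟨w, hwK, hwind, hwspan⟩ := helper0 K₂ c rfl
  obtain ⟨τ, hτT, hwτind, hwτspan⟩ :=
    helper_ext T₂ w hwind (fun i => hKT (hwK i)) g (by rw [hcg]; simp)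
  -- lifts of τ
  have hτlift : ∀ i, ∃ x, x ∈ V ∧ tmap F n x = τ i := by
    intro i
    obtain ⟨x, hx, hxx⟩ := hτT i
    exact ⟨x, hx, hxx⟩
  choose vh hvhV hvhτ using hτlift
  -- basis of L
  obtain ⟨ℓ, hℓL, hℓind, hℓspan⟩ := helper0 L a rfl
  have hℓV : ∀ j, ℓ j ∈ V := fun j => (hℓL j).1
  have hℓt : ∀ j, tmap F n (ℓ j) = 0 := fun j => (hℓL j).2
  have hℓdec : ∀ j, emb1 F n hn (hmap F n hn (ℓ j)) = ℓ j := by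
    intro j
    have := decomp hn (ℓ j)
    rw [hℓt j, map_zero, add_zero] at this
    exact this
  -- lifted w
  have hwE : ∀ j, emb2 F n (w j) ∈ V ∧ tmap F n (emb2 F n (w j)) = w j ∧
      hmap F n hn (emb2 F n (w j)) = 0 := by
    intro j
    obtain ⟨x, hx, hxx⟩ := hwK j
    have hxdec : emb2 F n (w j) = x := by
      have hd := decomp hn x
      have : hmap F n hn x = 0 := hx.2
      rw [this, map_zero, zero_add, hxx] at hd
      exact hd
    exact ⟨hxdec ▸ hx.1, tmap_emb2 _, hmap_emb2 hn _⟩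
  -- head independence
  have hheads : LinearIndependent F
      (Sum.elim (fun j => hmap F n hn (ℓ j)) (fun i => hmap F n hn (vh i))) := by
    rw [Fintype.linearIndependent_iff]
    intro φ hφ
    set u : Fin n → F := (∑ j, φ (Sum.inl j) • ℓ j) + (∑ i, φ (Sum.inr i) • vh i) with hudef
    have huV : u ∈ V := V.add_mem (Submodule.sum_mem _ fun j _ => V.smul_mem _ (hℓV j))
      (Submodule.sum_mem _ fun i _ => V.smul_mem _ (hvhV i))
    have huh : hmap F n hn u = 0 := by
      rw [hudef]
      simp only [map_add, map_sum, map_smul]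
      rw [Fintype.sum_sum_type] at hφ
      simp only [Sum.elim_inl, Sum.elim_inr] at hφ
      exact hφ
    have hut : tmap F n u = ∑ i, φ (Sum.inr i) • τ i := by
      rw [hudef]
      simp only [map_add, map_sum, map_smul]
      rw [show (∑ j, φ (Sum.inl j) • tmap F n (ℓ j)) = 0 from by simp [hℓt], zero_add]
      exact Finset.sum_congr rfl fun i _ => by rw [hvhτ i]
    have hutK : tmap F n u ∈ K₂ := by
      rw [hK₂def]
      exact Submodule.mem_map_of_mem ⟨huV, by simpa [LinearMap.mem_ker] using huh⟩
    rw [← hwspan, mem_span_range_iff_exists_fun] at hutK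
    obtain ⟨α, hα⟩ := hutK
    have hzero : ∀ x, (Sum.elim α (fun i => -φ (Sum.inr i))) x = 0 := by
      rw [Fintype.linearIndependent_iff] at hwτind
      apply hwτind
      rw [Fintype.sum_sum_type]
      simp only [Sum.elim_inl, Sum.elim_inr]
      rw [hα]
      have hneg : ∑ i, -φ (Sum.inr i) • τ i = -(∑ i, φ (Sum.inr i) • τ i) := by
        rw [← Finset.sum_neg_distrib]
        exact Finset.sum_congr rfl fun i _ => by rw [neg_smul]
      rw [hneg, ← hut, add_neg_cancel]
    have hφinr : ∀ i, φ (Sum.inr i) = 0 := by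
      intro i
      have := hzero (Sum.inr i)
      simpa using this
    have huz : u = ∑ j, φ (Sum.inl j) • ℓ j := by
      rw [hudef]
      simp [hφinr]
    have huzero : u = 0 := by
      have hd := decomp hn u
      rw [huh, map_zero, zero_add] at hd
      rw [← hd]
      have htu : tmap F n u = 0 := by rw [hut]; simp [hφinr]
      rw [htu, map_zero]
    have hφinl : ∀ j, φ (Sum.inl j) = 0 := by
      rw [Fintype.linearIndependent_iff] at hℓind
      exact hℓind _ (by rw [← huz, huzero])
    rintro (j | i)
    · exact hφinl j
    · exact hφinr i
  obtain ⟨b, σ, ρ, Q, tc, hb1, hb2, hQ, hbspan, hbglue⟩ := lemmaA _ _ hheads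
  -- modified glue vectors
  set τ' : Fin g → (Fin (n - 2) → F) := fun i => ∑ j, Q i j • τ j with hτ'def
  set v' : Fin g → (Fin n → F) := fun i => (∑ j, Q i j • vh j) + (∑ j, tc i j • ℓ j) with hv'def
  have hv'V : ∀ i, v' i ∈ V := by
    intro i
    exact V.add_mem (Submodule.sum_mem _ fun j _ => V.smul_mem _ (hvhV j))
      (Submodule.sum_mem _ fun j _ => V.smul_mem _ (hℓV j))
  have hv'h : ∀ i, hmap F n hn (v' i) = b.mulVec (Pi.single (ρ i) 1) := by
    intro i
    rw [hv'def]
    simp only [map_add, map_sum, map_smul]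
    exact hbglue i
  have hv't : ∀ i, tmap F n (v' i) = τ' i := by
    intro i
    rw [hv'def, hτ'def]
    simp only [map_add, map_sum, map_smul]
    rw [show (∑ j, tc i j • tmap F n (ℓ j)) = 0 from by simp [hℓt], add_zero]
    congr 1
    funext j
    rw [hvhτ j]
  have hwτ'ind : LinearIndependent F (Sum.elim w τ') := helper_twist w τ hwτind Q hQ
  -- extend to a basis of the tail space
  obtain ⟨z, -, hbigind, hbigspan⟩ :=
    helper_ext (⊤ : Submodule F (Fin (n - 2) → F)) (Sum.elim w τ') hwτ'ind (fun i => trivial)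
      (n - 2 - (c + g)) (by rw [finrank_top]; simp; omega)
  -- the tail column family
  have hsplit : n - 2 = (c + g) + (n - 2 - (c + g)) := by omega
  set eqv : Fin (n - 2) ≃ (Fin c ⊕ Fin g) ⊕ Fin (n - 2 - (c + g)) :=
    (splitEq hsplit).trans (Equiv.sumCongr (splitEq (p := c) (q := g) rfl) (Equiv.refl _)) with heqvdef
  set colFam : Fin (n - 2) → (Fin (n - 2) → F) := (Sum.elim (Sum.elim w τ') z) ∘ eqv
    with hcolFamdef
  have hcol1 : ∀ (j : Fin (n - 2)) (hj : (j : ℕ) < c), colFam j = w ⟨j, hj⟩ := by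
    intro j hj
    have h1 : splitEq hsplit j = Sum.inl ⟨(j : ℕ), by omega⟩ := splitEq_lt _ _ (by omega)
    have h2 : splitEq (p := c) (q := g) rfl ⟨(j : ℕ), by omega⟩ = Sum.inl ⟨(j : ℕ), hj⟩ :=
      splitEq_lt rfl _ hj
    simp [hcolFamdef, heqvdef, h1, h2]
  have hcol2 : ∀ (j : Fin (n - 2)) (hj1 : c ≤ (j : ℕ)) (hj2 : (j : ℕ) < c + g),
      colFam j = τ' ⟨(j : ℕ) - c, by omega⟩ := by
    intro j hj1 hj2
    have h1 : splitEq hsplit j = Sum.inl ⟨(j : ℕ), by omega⟩ := splitEq_lt _ _ (by omega)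
    have h2 : splitEq (p := c) (q := g) rfl ⟨(j : ℕ), by omega⟩ =
        Sum.inr ⟨(j : ℕ) - c, by omega⟩ := splitEq_ge rfl _ hj1
    simp [hcolFamdef, heqvdef, h1, h2]
  -- colFam is a basis
  have hcolind : LinearIndependent F colFam := hbigind.comp eqv eqv.injective
  have hcolspan : Submodule.span F (Set.range colFam) = ⊤ := by
    have hr : Set.range colFam = Set.range (Sum.elim (Sum.elim w τ') z) :=
      Function.Surjective.range_comp eqv.surjective _
    rw [hr, hbigspan]
  -- the tail-block matrix
  set Cm : Matrix (Fin (n - 2)) (Fin (n - 2)) F := Matrix.of (fun i j => colFam j i) with hCmdef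
  have hCunit : IsUnit Cm := by
    let Bcol : Basis (Fin (n - 2)) F (Fin (n - 2) → F) :=
      Basis.mk hcolind (le_of_eq hcolspan.symm)
    have hCeq : Cm = (Pi.basisFun F (Fin (n - 2))).toMatrix Bcol := by
      apply Matrix.ext
      intro i j
      rw [Basis.toMatrix_apply, Pi.basisFun_repr, Basis.coe_mk]
      rfl
    rw [hCeq]
    letI := (Pi.basisFun F (Fin (n - 2))).invertibleToMatrix Bcol
    exact isUnit_of_invertible _
  have hbunit : IsUnit b := by
    rw [Matrix.isUnit_iff_isUnit_det, Matrix.det_fin_two, hb1, mul_zero, sub_zero, hb2]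
    exact isUnit_one
  have hn2 : n = 2 + (n - 2) := by omega
  set M : Matrix (Fin n) (Fin n) F :=
    (Matrix.fromBlocks b 0 0 Cm).submatrix (splitEq hn2) (splitEq hn2) with hMdef
  have hMunit : IsUnit M := by
    rw [Matrix.isUnit_iff_isUnit_det, hMdef, Matrix.det_submatrix_equiv_self,
      Matrix.det_fromBlocks_zero₂₁]
    exact ((Matrix.isUnit_iff_isUnit_det b).mp hbunit).mul
      ((Matrix.isUnit_iff_isUnit_det Cm).mp hCunit)
  have hMentry : ∀ i j : Fin n,
      M i j = Matrix.fromBlocks b 0 0 Cm (splitEq hn2 i) (splitEq hn2 j) := fun i j => rfl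
  have hMcross : ∀ i j : Fin n,
      (((i : ℕ) < 2 ∧ 2 ≤ (j : ℕ)) ∨ (2 ≤ (i : ℕ) ∧ (j : ℕ) < 2)) → M i j = 0 := by
    intro i j hij
    rw [hMentry]
    rcases hij with ⟨hi, hj⟩ | ⟨hi, hj⟩
    · rw [splitEq_lt hn2 i hi, splitEq_ge hn2 j hj]
      rw [Matrix.fromBlocks_apply₁₂]
      rfl
    · rw [splitEq_ge hn2 i hi, splitEq_lt hn2 j hj]
      rw [Matrix.fromBlocks_apply₂₁]
      rfl
  have hM10 : M ⟨1, by omega⟩ ⟨0, by omega⟩ = 0 := by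
    rw [hMentry, splitEq_lt hn2 _ (by norm_num), splitEq_lt hn2 _ (by norm_num),
      Matrix.fromBlocks_apply₁₁]
    exact hb1
  have hMmul : M ⟨0, by omega⟩ ⟨0, by omega⟩ * M ⟨1, by omega⟩ ⟨1, by omega⟩ = 1 := by
    rw [hMentry, hMentry, splitEq_lt hn2 ⟨0, by omega⟩ (by norm_num),
      splitEq_lt hn2 ⟨1, by omega⟩ (by norm_num),
      Matrix.fromBlocks_apply₁₁, Matrix.fromBlocks_apply₁₁]
    exact hb2
  -- column value lemmas
  have hcolM : ∀ (j : Fin n), Matrix.toLin' M (Pi.single j 1) = fun i => M i j := by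
    intro j
    rw [Matrix.toLin'_apply, Matrix.mulVec_single]
    funext i
    exact mul_one _
  have hcolhead : ∀ (j2 : Fin 2),
      (fun i => M i (Fin.castLE hn j2)) = emb1 F n hn (b.mulVec (Pi.single j2 1)) := by
    intro j2
    funext i
    rw [hMentry]
    have hjlt : ((Fin.castLE hn j2 : Fin n) : ℕ) < 2 := j2.isLt
    by_cases hi : (i : ℕ) < 2
    · rw [splitEq_lt hn2 i hi, splitEq_lt hn2 _ hjlt, Matrix.fromBlocks_apply₁₁]
      simp only [emb1, LinearMap.coe_mk, AddHom.coe_mk]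
      rw [dif_pos hi, Matrix.mulVec_single]
      show b ⟨(i : ℕ), hi⟩ ⟨((Fin.castLE hn j2 : Fin n) : ℕ), hjlt⟩ = b ⟨(i : ℕ), hi⟩ j2 * 1
      rw [mul_one]
      congr 1
    · rw [splitEq_lt hn2 _ hjlt, splitEq_ge hn2 i (by omega), Matrix.fromBlocks_apply₂₁]
      simp only [emb1, LinearMap.coe_mk, AddHom.coe_mk]
      rw [dif_neg hi]
      rfl
  set zidx : Fin (n - 2) → Fin n := fun jz => ⟨(jz : ℕ) + 2, by have := jz.isLt; omega⟩
    with hzidxdef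
  have hcoltail : ∀ (jz : Fin (n - 2)),
      (fun i => M i (zidx jz)) = emb2 F n (colFam jz) := by
    intro jz
    funext i
    rw [hMentry]
    have hzval : ((zidx jz : Fin n) : ℕ) = (jz : ℕ) + 2 := rfl
    by_cases hi : (i : ℕ) < 2
    · rw [splitEq_lt hn2 i hi, splitEq_ge hn2 _ (by rw [hzval]; omega),
        Matrix.fromBlocks_apply₁₂]
      simp only [emb2, LinearMap.coe_mk, AddHom.coe_mk]
      rw [dif_neg (by omega)]
      rfl
    · rw [splitEq_ge hn2 i (by omega), splitEq_ge hn2 _ (by rw [hzval]; omega),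
        Matrix.fromBlocks_apply₂₂]
      simp only [emb2, LinearMap.coe_mk, AddHom.coe_mk]
      rw [dif_pos (by omega)]
      rw [hCmdef]
      show colFam ⟨((zidx jz : Fin n) : ℕ) - 2, _⟩ ⟨(i : ℕ) - 2, _⟩ = colFam jz ⟨(i : ℕ) - 2, _⟩
      congr 1
  -- the 0-1 generators
  set GEN : (Fin a ⊕ (Fin g ⊕ Fin c)) → (Fin n → F) :=
    Sum.elim (fun j => Pi.single (Fin.castLE hn (σ j)) 1)
      (Sum.elim
        (fun i => Pi.single (Fin.castLE hn (ρ i)) 1 +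
          Pi.single (zidx ⟨c + (i : ℕ), by have := i.isLt; omega⟩) 1)
        (fun j => Pi.single (zidx ⟨(j : ℕ), by have := j.isLt; omega⟩) 1)) with hGENdef
  have h01single : ∀ (u i : Fin n), (Pi.single u 1 : Fin n → F) i = 0 ∨
      (Pi.single u 1 : Fin n → F) i = 1 := by
    intro u i
    by_cases hiu : i = u
    · right; rw [hiu, Pi.single_eq_same]
    · left; rw [Pi.single_eq_of_ne hiu]
  have h01 : ∀ v ∈ Set.range GEN, ∀ i, v i = 0 ∨ v i = 1 := by
    rintro v ⟨x, rfl⟩ i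
    rw [hGENdef]
    rcases x with j | (i' | j)
    · exact h01single _ i
    · simp only [Sum.elim_inl, Sum.elim_inr]
      have hne : Fin.castLE hn (ρ i') ≠ zidx ⟨c + (i' : ℕ), by have := i'.isLt; omega⟩ := by
        intro hcontra
        have h1 : ((Fin.castLE hn (ρ i') : Fin n) : ℕ) < 2 := (ρ i').isLt
        have h2 : ((zidx ⟨c + (i' : ℕ), by have := i'.isLt; omega⟩ : Fin n) : ℕ) = c + i' + 2 :=
          rfl
        rw [hcontra, h2] at h1
        omega
      by_cases hi1 : i = Fin.castLE hn (ρ i')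
      · right
        rw [Pi.add_apply, hi1, Pi.single_eq_same, Pi.single_eq_of_ne hne, add_zero]
      · by_cases hi2 : i = zidx ⟨c + (i' : ℕ), by have := i'.isLt; omega⟩
        · right
          rw [Pi.add_apply, Pi.single_eq_of_ne hi1, hi2, Pi.single_eq_same, zero_add]
        · left
          rw [Pi.add_apply, Pi.single_eq_of_ne hi1, Pi.single_eq_of_ne hi2, add_zero]
    · exact h01single _ i
  refine ⟨Submodule.span F (Set.range GEN), ⟨Set.range GEN, h01, rfl⟩, M, hMunit, hMcross,
    hM10, hMmul, ?_⟩
  -- now the span computation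
  rw [Submodule.map_span, ← Set.range_comp]
  have hIM : (Matrix.toLin' M) ∘ GEN =
      Sum.elim (fun j => emb1 F n hn (b.mulVec (Pi.single (σ j) 1)))
        (Sum.elim v' (fun j => emb2 F n (w j))) := by
    funext x
    rcases x with j | (i | j)
    · show Matrix.toLin' M (Pi.single (Fin.castLE hn (σ j)) 1) = _
      rw [hcolM, hcolhead]
      rfl
    · show Matrix.toLin' M (Pi.single (Fin.castLE hn (ρ i)) 1 +
        Pi.single (zidx ⟨c + (i : ℕ), by have := i.isLt; omega⟩) 1) = v' i
      rw [map_add, hcolM, hcolM, hcolhead, hcoltail]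
      have hcf : colFam ⟨c + (i : ℕ), by have := i.isLt; omega⟩ = τ' i := by
        have hix : (⟨(c + (i : ℕ)) - c, by have := i.isLt; omega⟩ : Fin g) = i := by
          apply Fin.ext
          simp
        rw [hcol2 _ (by show c ≤ c + (i : ℕ); omega)
          (by show c + (i : ℕ) < c + g; have := i.isLt; omega), hix]
      rw [hcf, ← hv'h i, ← hv't i]
      exact decomp hn (v' i)
    · show Matrix.toLin' M (Pi.single (zidx ⟨(j : ℕ), by have := j.isLt; omega⟩) 1) = _
      rw [hcolM, hcoltail]
      have hcf : colFam ⟨(j : ℕ), by have := j.isLt; omega⟩ = w j := by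
        rw [hcol1 _ (by show (j : ℕ) < c; exact j.isLt)]
      rw [hcf]
      rfl
  rw [hIM]
  -- head span equality
  have hheadspan : Submodule.span F
      (Set.range (fun j => emb1 F n hn (b.mulVec (Pi.single (σ j) 1))))
      = Submodule.span F (Set.range ℓ) := by
    have h1 := congrArg (Submodule.map (emb1 F n hn)) hbspan
    rw [Submodule.map_span, Submodule.map_span, ← Set.range_comp, ← Set.range_comp] at h1
    have h2 : (emb1 F n hn) ∘ (fun j => hmap F n hn (ℓ j)) = ℓ := by
      funext j
      exact hℓdec j
    rw [h2] at h1
    exact h1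
  -- the key claim : span of the adapted family is V
  have hBig : Submodule.span F
      (Set.range (Sum.elim ℓ (Sum.elim v' (fun j => emb2 F n (w j))))) = V := by
    apply Submodule.eq_of_le_of_finrank_le
    · rw [Submodule.span_le, Set.range_subset_iff]
      rintro (j | (i | j))
      · exact hℓV j
      · exact hv'V i
      · exact (hwE j).1
    · have hbigVind : LinearIndependent F
          (Sum.elim ℓ (Sum.elim v' (fun j => emb2 F n (w j)))) := by
        rw [Fintype.linearIndependent_iff]
        intro φ hφ
        have htm : ∑ x, φ x •
            (tmap F n) (Sum.elim ℓ (Sum.elim v' (fun j => emb2 F n (w j))) x) = 0 := by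
          have h3 := congrArg (tmap F n) hφ
          rw [map_sum, map_zero] at h3
          simpa [map_smul] using h3
        have hψ : ∀ x, Sum.elim (fun j => φ (Sum.inr (Sum.inr j)))
            (fun i => φ (Sum.inr (Sum.inl i))) x = 0 := by
          rw [Fintype.linearIndependent_iff] at hwτ'ind
          apply hwτ'ind
          rw [Fintype.sum_sum_type]
          simp only [Sum.elim_inl, Sum.elim_inr]
          rw [Fintype.sum_sum_type] at htm
          simp only [Sum.elim_inl, Sum.elim_inr] at htm
          rw [Fintype.sum_sum_type] at htm
          simp only [Sum.elim_inl, Sum.elim_inr] at htm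
          simp only [hℓt, hv't, tmap_emb2, smul_zero, Finset.sum_const_zero, zero_add] at htm
          rw [add_comm] at htm
          exact htm
        have hφinl : ∀ j, φ (Sum.inl j) = 0 := by
          rw [Fintype.linearIndependent_iff] at hℓind
          apply hℓind
          rw [Fintype.sum_sum_type] at hφ
          simp only [Sum.elim_inl, Sum.elim_inr] at hφ
          rw [Fintype.sum_sum_type] at hφ
          have hz1 : ∀ i, φ (Sum.inr (Sum.inl i)) = 0 := fun i => hψ (Sum.inr i)
          have hz2 : ∀ j, φ (Sum.inr (Sum.inr j)) = 0 := fun j => hψ (Sum.inl j)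
          simp only [hz1, hz2, zero_smul, Finset.sum_const_zero, add_zero] at hφ
          exact hφ
        rintro (j | (i | j))
        · exact hφinl j
        · exact hψ (Sum.inr i)
        · exact hψ (Sum.inl j)
      rw [finrank_span_eq_card hbigVind]
      have hrn : Module.finrank F V = (c + g) + a := by
        have h1 := LinearMap.finrank_range_add_finrank_ker ((tmap F n).comp V.subtype)
        have h2 : LinearMap.range ((tmap F n).comp V.subtype) = T₂ := by
          rw [LinearMap.range_comp, Submodule.range_subtype, hT₂def]
        have h3 : Module.finrank F
            (LinearMap.ker ((tmap F n).comp V.subtype)) = a := by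
          rw [LinearMap.ker_comp]
          have h4 : Submodule.map V.subtype
              (Submodule.comap V.subtype (LinearMap.ker (tmap F n))) = L := by
            rw [Submodule.map_comap_subtype, hLdef]
          have h5 := Submodule.finrank_map_subtype_eq V
            (Submodule.comap V.subtype (LinearMap.ker (tmap F n)))
          rw [h4] at h5
          rw [← h5]
        rw [h2, h3, hcg] at h1
        omega
      rw [hrn]
      simp only [Fintype.card_sum, Fintype.card_fin]
      omega
  rw [Sum.elim_range, Submodule.span_union, hheadspan]
  rw [Sum.elim_range, Submodule.span_union] at hBig
  rw [← hBig]
end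

section
/- Let F be an arbitrary field. Let U = F^{m+n} = U_1 ⊕ U_2 with U_1 = span(e_1,...,e_m), U_2 = span(e_{m+1},...,e_{m+n}). Let B_{(1)} ⊂ GL(U_1) and B_{(2)} ⊂ GL(U_2) be the upper triangular Borel subgroups. Then for every 2-dimensional subspace S of U there exists a basis v_1, v_2 of S such that for all λ, μ ∈ F^× there is an element g ∈ B_{(1)} × B_{(2)} (acting block-diagonally on U) with g v_1 = λ v_1 and g v_2 = μ v_2. -/
namespace BorelPlane

open Matrix

variable {F : Type*} [Field F] {N : ℕ}

def IsPiv (x : Fin N → F) (p : Fin N) : Prop := x p ≠ 0 ∧ ∀ j, p < j → x j = 0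

def Sep (x y : Fin N → F) : Prop := ∀ p, ¬ (IsPiv x p ∧ IsPiv y p)

lemma sep_symm {x y : Fin N → F} (h : Sep x y) : Sep y x :=
  fun p hp => h p ⟨hp.2, hp.1⟩

lemma isPiv_unique {x : Fin N → F} {p q : Fin N} (hp : IsPiv x p) (hq : IsPiv x q) : p = q := by
  rcases lt_trichotomy p q with h | h | h
  · exact absurd (hp.2 q h) hq.1
  · exact h
  · exact absurd (hq.2 p h) hp.1

lemma exists_isPiv {x : Fin N → F} (h : x ≠ 0) : ∃ p, IsPiv x p := by
  classical
  set s := Finset.univ.filter (fun j => x j ≠ 0) with hs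
  have hne : s.Nonempty := by
    have hex : ∃ j, x j ≠ 0 := by
      by_contra hc
      push_neg at hc
      exact h (funext fun j => hc j)
    obtain ⟨j, hj⟩ := hex
    exact ⟨j, by simp [hs, hj]⟩
  refine ⟨s.max' hne, ?_, ?_⟩
  · have := s.max'_mem hne
    simp only [hs, Finset.mem_filter] at this
    exact this.2
  · intro j hj
    by_contra hxj
    have hmem : j ∈ s := by simp [hs, hxj]
    exact absurd (s.le_max' j hmem) (not_le.2 hj)

lemma sep_kill {x : Fin N → F} {p : Fin N} (hx : IsPiv x p) (y : Fin N → F) :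
    Sep x (y - (y p * (x p)⁻¹) • x) := by
  rintro q ⟨hq1, hq2⟩
  have : q = p := isPiv_unique hq1 hx
  subst this
  apply hq2.1
  simp only [Pi.sub_apply, Pi.smul_apply, smul_eq_mul]
  rw [mul_assoc, inv_mul_cancel₀ hx.1, mul_one, sub_self]

lemma isPiv_sub_smul {x y : Fin N → F} {p q : Fin N} (hx : IsPiv x p) (hy : IsPiv y q)
    (h : q < p) (c : F) : IsPiv (x - c • y) p := by
  constructor
  · simp [hy.2 p h, hx.1]
  · intro j hj
    simp [hx.2 j hj, hy.2 j (h.trans hj)]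

lemma sep_of_piv_ne {x y : Fin N → F} {p q : Fin N} (hx : IsPiv x p) (hy : IsPiv y q)
    (h : p ≠ q) : Sep x y := by
  rintro r ⟨hr1, hr2⟩
  exact h ((isPiv_unique hr1 hx).symm.trans (isPiv_unique hr2 hy))

lemma sep_zero_right (x : Fin N → F) : Sep x 0 := by
  rintro p ⟨-, hp⟩; exact hp.1 rfl

def delta (p : Fin N) (c : F) : Fin N → F := fun j => if j = p then c else 0

lemma delta_dot (p : Fin N) (c : F) (x : Fin N → F) : delta p c ⬝ᵥ x = c * x p := by
  simp [delta, dotProduct, ite_mul]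

lemma tri_delta {y : Fin N → F} {q : Fin N} (hq : IsPiv y q) (c : F) :
    ∀ i j, j < i → y i * delta q c j = 0 := by
  intro i j hj
  by_cases h : j = q
  · subst h
    simp [hq.2 i hj]
  · simp [delta, h]

lemma supp_delta {q : Fin N} {c : F} : ∀ j, delta q c j ≠ 0 → j = q := by
  intro j hj
  by_contra h
  simp [delta, h] at hj

def Good (x y : Fin N → F) : Prop :=
  ∃ ψ₁ ψ₂ : Fin N → F,
    (ψ₁ ⬝ᵥ x) • x = x ∧ (ψ₂ ⬝ᵥ y) • y = y ∧ ψ₁ ⬝ᵥ y = 0 ∧ ψ₂ ⬝ᵥ x = 0 ∧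
    (∀ i j, j < i → x i * ψ₁ j = 0) ∧ (∀ i j, j < i → y i * ψ₂ j = 0) ∧
    (∀ j, ψ₁ j ≠ 0 → x j ≠ 0 ∨ y j ≠ 0) ∧ (∀ j, ψ₂ j ≠ 0 → x j ≠ 0 ∨ y j ≠ 0)

lemma good_swap {x y : Fin N → F} (h : Good x y) : Good y x := by
  obtain ⟨ψ₁, ψ₂, h1, h2, h3, h4, h5, h6, h7, h8⟩ := h
  exact ⟨ψ₂, ψ₁, h2, h1, h4, h3, h6, h5, fun j hj => (h8 j hj).symm, fun j hj => (h7 j hj).symm⟩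

lemma good_zero_left (y : Fin N → F) : Good 0 y := by
  by_cases hy : y = 0
  · subst hy
    exact ⟨0, 0, by simp, by simp, by simp, by simp, by simp, by simp, by simp, by simp⟩
  · obtain ⟨p, hp⟩ := exists_isPiv hy
    refine ⟨0, delta p (y p)⁻¹, by simp, ?_, by simp, by simp, by simp,
      tri_delta hp _, by simp, ?_⟩
    · rw [delta_dot, inv_mul_cancel₀ hp.1, one_smul]
    · intro j hj
      right
      rw [supp_delta j hj]
      exact hp.1

lemma good_of_lt {x y : Fin N → F} {p q : Fin N} (hx : IsPiv x p) (hy : IsPiv y q)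
    (hpq : p < q) : Good x y := by
  refine ⟨delta p (x p)⁻¹ + delta q (-((x p)⁻¹ * y p * (y q)⁻¹)),
          delta q (y q)⁻¹, ?_, ?_, ?_, ?_, ?_, ?_, ?_, ?_⟩
  · rw [add_dotProduct, delta_dot, delta_dot, inv_mul_cancel₀ hx.1, hx.2 q hpq]
    simp
  · rw [delta_dot, inv_mul_cancel₀ hy.1, one_smul]
  · rw [add_dotProduct, delta_dot, delta_dot]
    have h1 : x p ≠ 0 := hx.1
    have h2 : y q ≠ 0 := hy.1
    field_simp
    ring
  · rw [delta_dot, hx.2 q hpq, mul_zero]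
  · intro i j hj
    by_cases hxi : x i = 0
    · simp [hxi]
    · have hip : i ≤ p := by
        by_contra hc
        exact hxi (hx.2 i (not_le.1 hc))
      have h1 : j ≠ p := ne_of_lt (lt_of_lt_of_le hj hip)
      have h2 : j ≠ q := ne_of_lt (lt_of_lt_of_le hj (hip.trans hpq.le))
      simp [delta, h1, h2]
  · exact tri_delta hy _
  · intro j hj
    simp only [delta, Pi.add_apply] at hj
    rcases eq_or_ne j p with h1 | h1
    · subst h1; exact Or.inl hx.1
    rcases eq_or_ne j q with h2 | h2
    · subst h2; exact Or.inr hy.1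
    · simp [h1, h2] at hj
  · intro j hj
    rw [supp_delta j hj]
    exact Or.inr hy.1

lemma good_of_sep {x y : Fin N → F} (h : Sep x y) : Good x y := by
  by_cases hx : x = 0
  · subst hx; exact good_zero_left y
  by_cases hy : y = 0
  · subst hy; exact good_swap (good_zero_left x)
  obtain ⟨p, hp⟩ := exists_isPiv hx
  obtain ⟨q, hq⟩ := exists_isPiv hy
  have hne : p ≠ q := by
    rintro rfl; exact h p ⟨hp, hq⟩
  rcases hne.lt_or_gt with hlt | hlt
  · exact good_of_lt hp hq hlt
  · exact good_swap (good_of_lt hq hp hlt)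

end BorelPlane
namespace BorelPlane

variable {F : Type*} [Field F] {N : ℕ}

/-- block-1 part of a vector (coordinates `< m`). -/
def blk1 (m : ℕ) (v : Fin N → F) : Fin N → F := fun i => if (i : ℕ) < m then v i else 0

/-- block-2 part of a vector (coordinates `≥ m`). -/
def blk2 (m : ℕ) (v : Fin N → F) : Fin N → F := fun i => if (i : ℕ) < m then 0 else v i

lemma blk1_add_blk2 (m : ℕ) (v : Fin N → F) : blk1 m v + blk2 m v = v := by
  funext i
  by_cases h : (i : ℕ) < m <;> simp [blk1, blk2, h]

lemma blk1_sub_smul (m : ℕ) (u w : Fin N → F) (c : F) :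
    blk1 m (u - c • w) = blk1 m u - c • blk1 m w := by
  funext i
  by_cases h : (i : ℕ) < m <;> simp [blk1, h]

lemma blk2_sub_smul (m : ℕ) (u w : Fin N → F) (c : F) :
    blk2 m (u - c • w) = blk2 m u - c • blk2 m w := by
  funext i
  by_cases h : (i : ℕ) < m <;> simp [blk2, h]

lemma blk1_support {m : ℕ} {v : Fin N → F} {j : Fin N} (h : blk1 m v j ≠ 0) : (j : ℕ) < m := by
  by_contra hc
  simp [blk1, hc] at h

lemma blk2_support {m : ℕ} {v : Fin N → F} {j : Fin N} (h : blk2 m v j ≠ 0) : ¬ (j : ℕ) < m := by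
  by_contra hc
  simp [blk2, hc] at h

lemma span_pair_sub_smul (u w : Fin N → F) (c : F) :
    Submodule.span F {u - c • w, w} = Submodule.span F {u, w} := by
  apply le_antisymm
  · rw [Submodule.span_le]
    rintro z (rfl | rfl)
    · exact sub_mem (Submodule.subset_span (Set.mem_insert _ _))
        (Submodule.smul_mem _ _ (Submodule.subset_span (Set.mem_insert_of_mem _ rfl)))
    · exact Submodule.subset_span (Set.mem_insert_of_mem _ rfl)
  · rw [Submodule.span_le]
    rintro z (rfl | rfl)
    · have h1 : z - c • w ∈ Submodule.span F {z - c • w, w} :=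
        Submodule.subset_span (Set.mem_insert _ _)
      have h2 : w ∈ Submodule.span F {z - c • w, w} :=
        Submodule.subset_span (Set.mem_insert_of_mem _ rfl)
      have h3 := add_mem h1 (Submodule.smul_mem _ c h2)
      simpa using h3
    · exact Submodule.subset_span (Set.mem_insert_of_mem _ rfl)

/-- Fix the second block by modifying `v₁`, assuming `blk1 v₂` cannot disturb `blk1 v₁`. -/
lemma step2_aux (m : ℕ) (v₁ v₂ : Fin N → F)
    (hside : blk1 m v₂ = 0 ∨ ∃ p₁ p₂, IsPiv (blk1 m v₁) p₁ ∧ IsPiv (blk1 m v₂) p₂ ∧ p₂ < p₁)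
    (hsep1 : Sep (blk1 m v₁) (blk1 m v₂))
    {q : Fin N} (hq₁ : IsPiv (blk2 m v₁) q) (hq₂ : IsPiv (blk2 m v₂) q) :
    ∃ w₁, Submodule.span F {w₁, v₂} = Submodule.span F {v₁, v₂} ∧
      Sep (blk1 m w₁) (blk1 m v₂) ∧ Sep (blk2 m w₁) (blk2 m v₂) := by
  set c : F := blk2 m v₁ q * (blk2 m v₂ q)⁻¹ with hc
  refine ⟨v₁ - c • v₂, span_pair_sub_smul v₁ v₂ c, ?_, ?_⟩
  · rw [blk1_sub_smul]
    rcases hside with h0 | ⟨p₁, p₂, hp₁, hp₂, hlt⟩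
    · rw [h0, smul_zero, sub_zero]
      exact sep_zero_right _
    · have hpiv : IsPiv (blk1 m v₁ - c • blk1 m v₂) p₁ := isPiv_sub_smul hp₁ hp₂ hlt c
      have hne : p₁ ≠ p₂ := by
        rintro rfl
        exact hsep1 p₁ ⟨hp₁, hp₂⟩
      exact sep_of_piv_ne hpiv hp₂ hne
  · rw [blk2_sub_smul]
    exact sep_symm (sep_kill hq₂ (blk2 m v₁))

lemma norm_step2 (m : ℕ) (v₁ v₂ : Fin N → F) (hsep1 : Sep (blk1 m v₁) (blk1 m v₂)) :
    ∃ w₁ w₂, Submodule.span F {w₁, w₂} = Submodule.span F {v₁, v₂} ∧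
      Sep (blk1 m w₁) (blk1 m w₂) ∧ Sep (blk2 m w₁) (blk2 m w₂) := by
  by_cases hq : ∃ q, IsPiv (blk2 m v₁) q ∧ IsPiv (blk2 m v₂) q
  · obtain ⟨q, hq₁, hq₂⟩ := hq
    -- decide which vector to modify
    have main : (blk1 m v₂ = 0 ∨ ∃ p₁ p₂, IsPiv (blk1 m v₁) p₁ ∧ IsPiv (blk1 m v₂) p₂ ∧ p₂ < p₁) ∨
        (blk1 m v₁ = 0 ∨ ∃ p₁ p₂, IsPiv (blk1 m v₂) p₁ ∧ IsPiv (blk1 m v₁) p₂ ∧ p₂ < p₁) := by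
      by_cases h2 : blk1 m v₂ = 0
      · exact Or.inl (Or.inl h2)
      by_cases h1 : blk1 m v₁ = 0
      · exact Or.inr (Or.inl h1)
      obtain ⟨p₁, hp₁⟩ := exists_isPiv h1
      obtain ⟨p₂, hp₂⟩ := exists_isPiv h2
      have hne : p₁ ≠ p₂ := by rintro rfl; exact hsep1 p₁ ⟨hp₁, hp₂⟩
      rcases hne.lt_or_gt with hlt | hlt
      · exact Or.inr (Or.inr ⟨p₂, p₁, hp₂, hp₁, hlt⟩)
      · exact Or.inl (Or.inr ⟨p₁, p₂, hp₁, hp₂, hlt⟩)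
    rcases main with hside | hside
    · obtain ⟨w₁, hspan, hs1, hs2⟩ := step2_aux m v₁ v₂ hside hsep1 hq₁ hq₂
      exact ⟨w₁, v₂, hspan, hs1, hs2⟩
    · obtain ⟨w₂, hspan, hs1, hs2⟩ := step2_aux m v₂ v₁ hside (sep_symm hsep1) hq₂ hq₁
      refine ⟨v₁, w₂, ?_, sep_symm hs1, sep_symm hs2⟩
      rw [Set.pair_comm v₁ w₂, hspan, Set.pair_comm v₂ v₁]
  · push_neg at hq
    exact ⟨v₁, v₂, rfl, hsep1, fun q hcon => hq q hcon.1 hcon.2⟩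

lemma norm_main (m : ℕ) (u₁ u₂ : Fin N → F) :
    ∃ v₁ v₂, Submodule.span F {v₁, v₂} = Submodule.span F {u₁, u₂} ∧
      Sep (blk1 m v₁) (blk1 m v₂) ∧ Sep (blk2 m v₁) (blk2 m v₂) := by
  by_cases hp : ∃ p, IsPiv (blk1 m u₁) p ∧ IsPiv (blk1 m u₂) p
  · obtain ⟨p, hp₁, hp₂⟩ := hp
    set c : F := blk1 m u₂ p * (blk1 m u₁ p)⁻¹ with hc
    have hsep1 : Sep (blk1 m u₁) (blk1 m (u₂ - c • u₁)) := by
      rw [blk1_sub_smul]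
      exact sep_kill hp₁ (blk1 m u₂)
    obtain ⟨v₁, v₂, hspan, hs1, hs2⟩ := norm_step2 m u₁ (u₂ - c • u₁) hsep1
    refine ⟨v₁, v₂, ?_, hs1, hs2⟩
    rw [hspan]
    rw [Set.pair_comm u₁ (u₂ - c • u₁), span_pair_sub_smul u₂ u₁ c, Set.pair_comm u₂ u₁]
  · push_neg at hp
    exact norm_step2 m u₁ u₂ (fun p hcon => hp p hcon.1 hcon.2)

end BorelPlane
namespace BorelPlane

open Matrix

variable {F : Type*} [Field F] {N : ℕ}

lemma vmv_mulVec (a ψ v : Fin N → F) : vecMulVec a ψ *ᵥ v = (ψ ⬝ᵥ v) • a := by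
  funext i
  simp only [mulVec, dotProduct, vecMulVec_apply, Pi.smul_apply, smul_eq_mul]
  rw [Finset.sum_mul]
  exact Finset.sum_congr rfl fun k _ => by ring

lemma vmv_mul_vmv (a ψ b φ : Fin N → F) :
    vecMulVec a ψ * vecMulVec b φ = (ψ ⬝ᵥ b) • vecMulVec a φ := by
  ext i j
  simp only [mul_apply, vecMulVec_apply, Matrix.smul_apply, dotProduct, smul_eq_mul]
  rw [Finset.sum_mul]
  exact Finset.sum_congr rfl fun k _ => by ring

lemma smul_vmv (c : F) (a ψ : Fin N → F) : c • vecMulVec a ψ = vecMulVec (c • a) ψ := by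
  ext i j
  simp [vecMulVec_apply, mul_assoc]

lemma dot_zero_of {ψ z : Fin N → F} (h : ∀ j, ψ j = 0 ∨ z j = 0) : ψ ⬝ᵥ z = 0 := by
  unfold dotProduct
  apply Finset.sum_eq_zero
  intro j _
  rcases h j with h' | h' <;> simp [h']

lemma core (m : ℕ) (v₁ v₂ : Fin N → F)
    (g1 : Good (blk1 m v₁) (blk1 m v₂)) (g2 : Good (blk2 m v₁) (blk2 m v₂))
    (lam mu : F) (hl : lam ≠ 0) (hm : mu ≠ 0) :
    ∃ M : Matrix (Fin N) (Fin N) F, IsUnit M ∧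
      (∀ i j : Fin N, (j : ℕ) < (i : ℕ) → M i j = 0) ∧
      (∀ i j : Fin N, (i : ℕ) < m → m ≤ (j : ℕ) → M i j = 0) ∧
      M *ᵥ v₁ = lam • v₁ ∧ M *ᵥ v₂ = mu • v₂ := by
  obtain ⟨ψ₁, ψ₂, a1, a2, a3, a4, a5, a6, a7, a8⟩ := g1
  obtain ⟨χ₁, χ₂, b1, b2, b3, b4, b5, b6, b7, b8⟩ := g2
  set x₁ := blk1 m v₁ with hx₁
  set x₂ := blk1 m v₂ with hx₂
  set y₁ := blk2 m v₁ with hy₁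
  set y₂ := blk2 m v₂ with hy₂
  have hψ₁ : ∀ j, ψ₁ j ≠ 0 → (j : ℕ) < m :=
    fun j hj => (a7 j hj).elim blk1_support blk1_support
  have hψ₂ : ∀ j, ψ₂ j ≠ 0 → (j : ℕ) < m :=
    fun j hj => (a8 j hj).elim blk1_support blk1_support
  have hχ₁ : ∀ j, χ₁ j ≠ 0 → ¬ (j : ℕ) < m :=
    fun j hj => (b7 j hj).elim blk2_support blk2_support
  have hχ₂ : ∀ j, χ₂ j ≠ 0 → ¬ (j : ℕ) < m :=
    fun j hj => (b8 j hj).elim blk2_support blk2_support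
  -- cross-block dot products vanish
  have dψy : ∀ (ψ : Fin N → F), (∀ j, ψ j ≠ 0 → (j : ℕ) < m) → ∀ w, ψ ⬝ᵥ blk2 m w = 0 := by
    intro ψ hψ w
    apply dot_zero_of
    intro j
    by_cases h : ψ j = 0
    · exact Or.inl h
    · exact Or.inr (by simp [blk2, hψ j h])
  have dχx : ∀ (χ : Fin N → F), (∀ j, χ j ≠ 0 → ¬ (j : ℕ) < m) → ∀ w, χ ⬝ᵥ blk1 m w = 0 := by
    intro χ hχ w
    apply dot_zero_of
    intro j
    by_cases h : χ j = 0
    · exact Or.inl h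
    · exact Or.inr (by simp [blk1, hχ j h])
  set A : Matrix (Fin N) (Fin N) F := vecMulVec x₁ ψ₁ + vecMulVec y₁ χ₁ with hA
  set B : Matrix (Fin N) (Fin N) F := vecMulVec x₂ ψ₂ + vecMulVec y₂ χ₂ with hB
  have hA2 : A * A = A := by
    rw [hA, add_mul, mul_add, mul_add, vmv_mul_vmv, vmv_mul_vmv, vmv_mul_vmv, vmv_mul_vmv,
      dψy ψ₁ hψ₁ v₁, dχx χ₁ hχ₁ v₁, zero_smul, zero_smul, add_zero, zero_add,
      smul_vmv, smul_vmv, a1, b1]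
  have hB2 : B * B = B := by
    rw [hB, add_mul, mul_add, mul_add, vmv_mul_vmv, vmv_mul_vmv, vmv_mul_vmv, vmv_mul_vmv,
      dψy ψ₂ hψ₂ v₂, dχx χ₂ hχ₂ v₂, zero_smul, zero_smul, add_zero, zero_add,
      smul_vmv, smul_vmv, a2, b2]
  have hAB : A * B = 0 := by
    rw [hA, hB, add_mul, mul_add, mul_add, vmv_mul_vmv, vmv_mul_vmv, vmv_mul_vmv, vmv_mul_vmv,
      dψy ψ₁ hψ₁ v₂, dχx χ₁ hχ₁ v₂, a3, b3]
    simp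
  have hBA : B * A = 0 := by
    rw [hA, hB, add_mul, mul_add, mul_add, vmv_mul_vmv, vmv_mul_vmv, vmv_mul_vmv, vmv_mul_vmv,
      dψy ψ₂ hψ₂ v₁, dχx χ₂ hχ₂ v₁, a4, b4]
    simp
  have hexp : ∀ α β α' β' : F,
      (1 + α • A + β • B) * (1 + α' • A + β' • B)
        = 1 + (α + α' + α * α') • A + (β + β' + β * β') • B := by
    intro α β α' β'
    simp only [add_mul, mul_add, one_mul, mul_one, smul_mul_assoc, mul_smul_comm,
      hA2, hB2, hAB, hBA, smul_zero, add_zero, smul_smul]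
    module
  set M : Matrix (Fin N) (Fin N) F := 1 + (lam - 1) • A + (mu - 1) • B with hM
  have hunit : IsUnit M := by
    have hmul : M * (1 + (lam⁻¹ - 1) • A + (mu⁻¹ - 1) • B) = 1 := by
      rw [hM, hexp]
      have c1 : (lam - 1) + (lam⁻¹ - 1) + (lam - 1) * (lam⁻¹ - 1) = 0 := by
        field_simp
        ring
      have c2 : (mu - 1) + (mu⁻¹ - 1) + (mu - 1) * (mu⁻¹ - 1) = 0 := by
        field_simp
        ring
      rw [c1, c2, zero_smul, zero_smul, add_zero, add_zero]
    have := invertibleOfRightInverse _ _ hmul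
    exact isUnit_of_invertible M
  -- action on v₁ and v₂
  have hv₁ : x₁ + y₁ = v₁ := blk1_add_blk2 m v₁
  have hv₂ : x₂ + y₂ = v₂ := blk1_add_blk2 m v₂
  have hAv₁ : A *ᵥ v₁ = v₁ := by
    rw [hA, add_mulVec, vmv_mulVec, vmv_mulVec, ← hv₁, dotProduct_add, dotProduct_add,
      dψy ψ₁ hψ₁ v₁, dχx χ₁ hχ₁ v₁]
    rw [add_zero, zero_add, a1, b1]
  have hBv₁ : B *ᵥ v₁ = 0 := by
    rw [hB, add_mulVec, vmv_mulVec, vmv_mulVec, ← hv₁, dotProduct_add, dotProduct_add,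
      dψy ψ₂ hψ₂ v₁, dχx χ₂ hχ₂ v₁]
    rw [add_zero, zero_add, a4, b4]
    simp
  have hAv₂ : A *ᵥ v₂ = 0 := by
    rw [hA, add_mulVec, vmv_mulVec, vmv_mulVec, ← hv₂, dotProduct_add, dotProduct_add,
      dψy ψ₁ hψ₁ v₂, dχx χ₁ hχ₁ v₂]
    rw [add_zero, zero_add, a3, b3]
    simp
  have hBv₂ : B *ᵥ v₂ = v₂ := by
    rw [hB, add_mulVec, vmv_mulVec, vmv_mulVec, ← hv₂, dotProduct_add, dotProduct_add,
      dψy ψ₂ hψ₂ v₂, dχx χ₂ hχ₂ v₂]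
    rw [add_zero, zero_add, a2, b2]
  refine ⟨M, hunit, ?_, ?_, ?_, ?_⟩
  · intro i j hji
    have hij : j < i := hji
    have hne : i ≠ j := fun h => by subst h; exact lt_irrefl _ hij
    rw [hM, hA, hB]
    simp only [Matrix.add_apply, Matrix.smul_apply, vecMulVec_apply, smul_eq_mul,
      Matrix.one_apply_ne hne]
    rw [a5 i j hij, a6 i j hij, b5 i j hij, b6 i j hij]
    ring
  · intro i j him hjm
    have hne : i ≠ j := fun h => by subst h; exact absurd hjm (not_le.2 him)
    have hψ₁j : ψ₁ j = 0 := by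
      by_contra h; exact absurd (hψ₁ j h) (not_lt.2 hjm)
    have hψ₂j : ψ₂ j = 0 := by
      by_contra h; exact absurd (hψ₂ j h) (not_lt.2 hjm)
    have hy₁i : y₁ i = 0 := by simp [hy₁, blk2, him]
    have hy₂i : y₂ i = 0 := by simp [hy₂, blk2, him]
    rw [hM, hA, hB]
    simp only [Matrix.add_apply, Matrix.smul_apply, vecMulVec_apply, smul_eq_mul,
      Matrix.one_apply_ne hne]
    rw [hψ₁j, hψ₂j, hy₁i, hy₂i]
    ring
  · rw [hM, add_mulVec, add_mulVec, one_mulVec, smul_mulVec, smul_mulVec,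
      hAv₁, hBv₁, smul_zero, add_zero, sub_smul, one_smul]
    abel
  · rw [hM, add_mulVec, add_mulVec, one_mulVec, smul_mulVec, smul_mulVec,
      hAv₂, hBv₂, smul_zero, add_zero, sub_smul, one_smul]
    abel

end BorelPlane
open BorelPlane in
/-- Lemma 11.5 of the paper: with `U = F^{m+n} = U₁ ⊕ U₂` and the product
of the upper triangular Borels `B₍₁₎ × B₍₂₎` acting block-diagonally, every 2-dimensional
subspace `S` admits a basis `v₁, v₂` such that for all `λ, μ ∈ F^×` some element of
`B₍₁₎ × B₍₂₎` scales `v₁` by `λ` and `v₂` by `μ`. -/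
theorem borel_product_diagonalizes_plane (F : Type*) [Field F] (m n : ℕ)
    (S : Submodule F (Fin (m + n) → F)) (hS : Module.finrank F S = 2) :
    ∃ v₁ v₂ : Fin (m + n) → F,
      Submodule.span F {v₁, v₂} = S ∧
      ∀ lam mu : F, lam ≠ 0 → mu ≠ 0 →
        ∃ M : Matrix (Fin (m + n)) (Fin (m + n)) F,
          IsUnit M ∧
          (∀ i j : Fin (m + n), (j : ℕ) < (i : ℕ) → M i j = 0) ∧
          (∀ i j : Fin (m + n), (i : ℕ) < m → m ≤ (j : ℕ) → M i j = 0) ∧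
          M.mulVec v₁ = lam • v₁ ∧ M.mulVec v₂ = mu • v₂ := by
  classical
  let Bb : Module.Basis (Fin 2) F S := Module.finBasisOfFinrankEq F S hS
  set u₁ : Fin (m + n) → F := ((Bb 0 : S) : Fin (m + n) → F) with hu₁
  set u₂ : Fin (m + n) → F := ((Bb 1 : S) : Fin (m + n) → F) with hu₂
  have hrange : Set.range (fun i : Fin 2 => ((Bb i : S) : Fin (m + n) → F)) = {u₁, u₂} := by
    ext z
    constructor
    · rintro ⟨i, rfl⟩
      fin_cases i
      · exact Set.mem_insert _ _
      · exact Set.mem_insert_of_mem _ rfl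
    · rintro (rfl | rfl)
      · exact ⟨0, rfl⟩
      · exact ⟨1, rfl⟩
  have hspan : Submodule.span F {u₁, u₂} = S := by
    rw [← hrange]
    have hcomp : (fun i : Fin 2 => ((Bb i : S) : Fin (m + n) → F))
        = (S.subtype : S →ₗ[F] (Fin (m + n) → F)) ∘ Bb := by
      funext i; rfl
    rw [hcomp, Set.range_comp, Submodule.span_image, Module.Basis.span_eq, Submodule.map_top,
      Submodule.range_subtype]
  obtain ⟨v₁, v₂, hsp, hs1, hs2⟩ := norm_main (F := F) (N := m + n) m u₁ u₂
  refine ⟨v₁, v₂, by rw [hsp, hspan], ?_⟩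
  intro lam mu hl hm
  exact core m v₁ v₂ (good_of_sep hs1) (good_of_sep hs2) lam mu hl hm
end

section
/- Let F be an infinite field of characteristic not 2, n ≥ 2, and let G = O_{2n}(F) act diagonally on the product of k ≥ 4 isotropic Grassmannians M_{(α_1)} × ... × M_{(α_k)} (each M_{(α)} being the set of α-dimensional isotropic subspaces of F^{2n}, 1 ≤ α_j ≤ n). Then the number of G-orbits is infinite. -/
open Submodule

/-- A subspace `V` is isotropic if the form vanishes identically on it. -/
def IsIsotropic (F : Type*) [Field F] (m : ℕ) (V : Submodule F (Fin m → F)) : Prop :=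
  ∀ u ∈ V, ∀ v ∈ V, bform F m u v = 0

/-- standard basis vector -/
def ee (F : Type*) [Field F] {m : ℕ} (i : Fin m) : Fin m → F := Pi.single i 1

section BformLemmas

variable (F : Type*) [Field F] {m : ℕ}

theorem bform_zero_left (v : Fin m → F) : bform F m 0 v = 0 := by simp [bform]

theorem bform_zero_right (u : Fin m → F) : bform F m u 0 = 0 := by simp [bform]

theorem bform_add_left (u u' v : Fin m → F) :
    bform F m (u + u') v = bform F m u v + bform F m u' v := by
  simp [bform, add_mul, Finset.sum_add_distrib]

theorem bform_add_right (u v v' : Fin m → F) :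
    bform F m u (v + v') = bform F m u v + bform F m u v' := by
  simp [bform, mul_add, Finset.sum_add_distrib]

theorem bform_sub_left (u u' v : Fin m → F) :
    bform F m (u - u') v = bform F m u v - bform F m u' v := by
  simp [bform, sub_mul, Finset.sum_sub_distrib]

theorem bform_sub_right (u v v' : Fin m → F) :
    bform F m u (v - v') = bform F m u v - bform F m u v' := by
  simp [bform, mul_sub, Finset.sum_sub_distrib]

theorem bform_smul_left (c : F) (u v : Fin m → F) :
    bform F m (c • u) v = c * bform F m u v := by
  simp only [bform, Pi.smul_apply, smul_eq_mul, Finset.mul_sum]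
  exact Finset.sum_congr rfl fun i _ => by ring

theorem bform_smul_right (c : F) (u v : Fin m → F) :
    bform F m u (c • v) = c * bform F m u v := by
  simp only [bform, Pi.smul_apply, smul_eq_mul, Finset.mul_sum]
  exact Finset.sum_congr rfl fun i _ => by ring

theorem bform_ee_left (i : Fin m) (x : Fin m → F) :
    bform F m (ee F i) x = x i.rev := by
  simp only [bform, ee, Pi.single_apply, ite_mul, one_mul, zero_mul]
  rw [Finset.sum_ite_eq' Finset.univ i (fun j => x j.rev)]
  simp

theorem bform_ee_right (i : Fin m) (x : Fin m → F) :
    bform F m x (ee F i) = x i.rev := by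
  simp only [bform, ee, Pi.single_apply, mul_ite, mul_one, mul_zero]
  have h : ∀ j : Fin m, (Fin.rev j = i) = (j = Fin.rev i) := by
    intro j
    apply propext
    constructor
    · intro h; rw [← h, Fin.rev_rev]
    · intro h; rw [h, Fin.rev_rev]
  simp_rw [h]
  rw [Finset.sum_ite_eq' Finset.univ i.rev (fun j => x j)]
  simp

theorem bEE (a b : Fin m) :
    bform F m (ee F a) (ee F b) = if a.val + b.val + 1 = m then 1 else 0 := by
  rw [bform_ee_left, ee, Pi.single_apply]
  refine if_congr ?_ rfl rfl
  rw [Fin.ext_iff, Fin.val_rev]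
  have := a.isLt; have := b.isLt
  omega

theorem bEE1 (a b : Fin m) (h : a.val + b.val + 1 = m) :
    bform F m (ee F a) (ee F b) = 1 := by rw [bEE, if_pos h]

theorem bEE0 (a b : Fin m) (h : a.val + b.val + 1 ≠ m) :
    bform F m (ee F a) (ee F b) = 0 := by rw [bEE, if_neg h]

end BformLemmas
section Pad

variable (F : Type*) [Field F] (n : ℕ)

/-- support condition: vanishing on the middle coordinates -/
def Hsupp (x : Fin (2 * n) → F) : Prop :=
  ∀ j : Fin (2 * n), 2 ≤ j.val → j.val ≤ 2 * n - 3 → x j = 0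

theorem hsupp_ee (hn : 2 ≤ n) (a : Fin (2 * n)) (ha : a.val ≤ 1 ∨ 2 * n - 2 ≤ a.val) :
    Hsupp F n (ee F a) := by
  intro j h2 h3
  rw [ee, Pi.single_apply, if_neg]
  rw [Fin.ext_iff]
  omega

theorem Hsupp.add {x y : Fin (2 * n) → F} (hx : Hsupp F n x) (hy : Hsupp F n y) :
    Hsupp F n (x + y) := fun j h2 h3 => by
  simp [Pi.add_apply, hx j h2 h3, hy j h2 h3]

theorem Hsupp.sub {x y : Fin (2 * n) → F} (hx : Hsupp F n x) (hy : Hsupp F n y) :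
    Hsupp F n (x - y) := fun j h2 h3 => by
  simp [Pi.sub_apply, hx j h2 h3, hy j h2 h3]

theorem Hsupp.smul (c : F) {x : Fin (2 * n) → F} (hx : Hsupp F n x) :
    Hsupp F n (c • x) := fun j h2 h3 => by
  simp [Pi.smul_apply, hx j h2 h3]

/-- the set of middle basis vectors used as padding -/
def padSet : Set (Fin (2 * n) → F) :=
  {v | ∃ i : Fin (2 * n), 2 ≤ i.val ∧ i.val ≤ n - 1 ∧ v = ee F i}

def padM : Submodule F (Fin (2 * n) → F) := Submodule.span F (padSet F n)

theorem pad_orth_right (hn : 2 ≤ n) {x : Fin (2 * n) → F} (hx : Hsupp F n x) :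
    ∀ p ∈ padM F n, bform F (2 * n) x p = 0 := by
  intro p hp
  induction hp using Submodule.span_induction with
  | mem y hy =>
    obtain ⟨i, h2, h3, rfl⟩ := hy
    rw [bform_ee_right]
    exact hx _ (by rw [Fin.val_rev]; omega) (by rw [Fin.val_rev]; have := i.isLt; omega)
  | zero => exact bform_zero_right F x
  | add y z hy hz ihy ihz => rw [bform_add_right, ihy, ihz, add_zero]
  | smul a y hy ih => rw [bform_smul_right, ih, mul_zero]

theorem pad_orth_left (hn : 2 ≤ n) {x : Fin (2 * n) → F} (hx : Hsupp F n x) :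
    ∀ p ∈ padM F n, bform F (2 * n) p x = 0 := by
  intro p hp
  induction hp using Submodule.span_induction with
  | mem y hy =>
    obtain ⟨i, h2, h3, rfl⟩ := hy
    rw [bform_ee_left]
    exact hx _ (by rw [Fin.val_rev]; omega) (by rw [Fin.val_rev]; have := i.isLt; omega)
  | zero => exact bform_zero_left F x
  | add y z hy hz ihy ihz => rw [bform_add_left, ihy, ihz, add_zero]
  | smul a y hy ih => rw [bform_smul_left, ih, mul_zero]

theorem pad_pad (hn : 2 ≤ n) :
    ∀ p ∈ padM F n, ∀ q ∈ padM F n, bform F (2 * n) p q = 0 := by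
  intro p hp
  induction hp using Submodule.span_induction with
  | mem y hy =>
    obtain ⟨i, h2, h3, rfl⟩ := hy
    intro q hq
    induction hq using Submodule.span_induction with
    | mem z hz =>
      obtain ⟨j, g2, g3, rfl⟩ := hz
      exact bEE0 F i j (by omega)
    | zero => exact bform_zero_right F _
    | add y z hy hz ihy ihz => rw [bform_add_right, ihy, ihz, add_zero]
    | smul a y hy ih => rw [bform_smul_right, ih, mul_zero]
  | zero => intro q hq; exact bform_zero_left F q
  | add y z hy hz ihy ihz =>
    intro q hq; rw [bform_add_left, ihy q hq, ihz q hq, add_zero]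
  | smul a y hy ih =>
    intro q hq; rw [bform_smul_left, ih q hq, mul_zero]

end Pad
section Conf

variable (F : Type*) [Field F] (n : ℕ)

/-- generators of a configuration subspace: a main vector, a second vector,
and padding by middle basis vectors -/
def gvec (c : ℕ) (main second : Fin (2 * n) → F) : Fin c → (Fin (2 * n) → F) :=
  fun i =>
    if i.val = 0 then main
    else if i.val = 1 then second
    else if h : i.val < 2 * n then ee F ⟨i.val, h⟩ else 0

def conf (c : ℕ) (main second : Fin (2 * n) → F) : Submodule F (Fin (2 * n) → F) :=
  Submodule.span F (Set.range (gvec F n c main second))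

theorem main_mem_conf (c : ℕ) (hc : 1 ≤ c) (main second : Fin (2 * n) → F) :
    main ∈ conf F n c main second :=
  Submodule.subset_span ⟨⟨0, hc⟩, by simp [gvec]⟩

theorem conf_le (c : ℕ) (hc : c ≤ n) (main second : Fin (2 * n) → F) :
    conf F n c main second ≤
      Submodule.span F (insert main (insert second (padSet F n))) := by
  apply Submodule.span_le.mpr
  rintro x ⟨i, rfl⟩
  apply Submodule.subset_span
  unfold gvec
  split_ifs with h0 h1 h2
  · exact Set.mem_insert _ _
  · exact Set.mem_insert_of_mem _ (Set.mem_insert _ _)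
  · refine Set.mem_insert_of_mem _ (Set.mem_insert_of_mem _ ⟨⟨i.val, h2⟩, (show 2 ≤ i.val by omega),
      (show i.val ≤ n - 1 by have := i.isLt; omega), rfl⟩)
  · exact absurd (by have := i.isLt; omega) h2

theorem conf_decomp (c : ℕ) (hc : c ≤ n) (main second : Fin (2 * n) → F)
    {x : Fin (2 * n) → F} (hx : x ∈ conf F n c main second) :
    ∃ a b : F, ∃ p ∈ padM F n, x = a • main + (b • second + p) := by
  have h1 := conf_le F n c hc main second hx
  rw [Submodule.mem_span_insert] at h1
  obtain ⟨a, z, hz, rfl⟩ := h1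
  rw [Submodule.mem_span_insert] at hz
  obtain ⟨b, p, hp, rfl⟩ := hz
  exact ⟨a, b, p, hp, rfl⟩

theorem conf_isotropic (hn : 2 ≤ n) (c : ℕ) (hc : c ≤ n) (main second : Fin (2 * n) → F)
    (hm : Hsupp F n main) (hs : Hsupp F n second)
    (q1 : bform F (2 * n) main main = 0) (q2 : bform F (2 * n) main second = 0)
    (q3 : bform F (2 * n) second main = 0) (q4 : bform F (2 * n) second second = 0) :
    IsIsotropic F (2 * n) (conf F n c main second) := by
  intro u hu v hv
  obtain ⟨a, b, p, hp, rfl⟩ := conf_decomp F n c hc main second hu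
  obtain ⟨a', b', p', hp', rfl⟩ := conf_decomp F n c hc main second hv
  simp only [bform_add_left, bform_add_right, bform_smul_left, bform_smul_right]
  rw [q1, q2, q3, q4,
    pad_orth_right F n hn hm p' hp', pad_orth_right F n hn hs p' hp',
    pad_orth_left F n hn hm p hp, pad_orth_left F n hn hs p hp,
    pad_pad F n hn p hp p' hp']
  ring

theorem conf_finrank (hn : 2 ≤ n) (c : ℕ) (hc : c ≤ n) (main second : Fin (2 * n) → F)
    (hm : Hsupp F n main) (hs : Hsupp F n second)
    (k1 k2 : Fin (2 * n)) (hk1 : k1.val ≤ 1 ∨ 2 * n - 2 ≤ k1.val)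
    (hk2 : k2.val ≤ 1 ∨ 2 * n - 2 ≤ k2.val)
    (m1 : main k1 ≠ 0) (m2 : main k2 = 0) (s1 : second k1 = 0) (s2 : second k2 ≠ 0) :
    Module.finrank F (conf F n c main second) = c := by
  rw [conf, finrank_span_eq_card, Fintype.card_fin]
  rw [Fintype.linearIndependent_iff]
  intro g hg
  have hval : ∀ y : Fin (2 * n), ∑ i, g i * gvec F n c main second i y = 0 := by
    intro y
    have := congrFun hg y
    simpa using this
  have gv0 : ∀ (i : Fin c), i.val = 0 → gvec F n c main second i = main := by
    intro i hi; simp [gvec, hi]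
  have gv1 : ∀ (i : Fin c), i.val = 1 → gvec F n c main second i = second := by
    intro i hi; simp [gvec, hi]
  have gvp : ∀ (i : Fin c), 2 ≤ i.val → ∀ (h : i.val < 2 * n),
      gvec F n c main second i = ee F ⟨i.val, h⟩ := by
    intro i hi h
    unfold gvec
    rw [if_neg (by omega), if_neg (by omega), dif_pos h]
  -- the value of a generator at an "outer" coordinate
  have outer : ∀ (i : Fin c), 2 ≤ i.val → ∀ y : Fin (2 * n),
      (y.val ≤ 1 ∨ 2 * n - 2 ≤ y.val) → gvec F n c main second i y = 0 := by
    intro i hi y hy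
    rw [gvp i hi (by have := i.isLt; omega), ee, Pi.single_apply, if_neg]
    rw [Fin.ext_iff]
    simp only []
    have := i.isLt
    omega
  intro i
  rcases Nat.lt_or_ge i.val 2 with hi | hi
  · rcases Nat.lt_or_ge i.val 1 with hi0 | hi1
    · -- i.val = 0, evaluate at k1
      have h := hval k1
      rw [Finset.sum_eq_single i ?_ ?_] at h
      · rw [gv0 i (by omega)] at h
        exact (mul_eq_zero.mp h).resolve_right m1
      · intro b _ hb
        rcases Nat.lt_or_ge b.val 2 with hb2 | hb2
        · rcases Nat.lt_or_ge b.val 1 with hb0 | hb1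
          · exact absurd (Fin.ext (by omega) : b = i) hb
          · rw [gv1 b (by omega), s1, mul_zero]
        · rw [outer b hb2 k1 hk1, mul_zero]
      · intro hni; exact absurd (Finset.mem_univ i) hni
    · -- i.val = 1, evaluate at k2
      have h := hval k2
      rw [Finset.sum_eq_single i ?_ ?_] at h
      · rw [gv1 i (by omega)] at h
        exact (mul_eq_zero.mp h).resolve_right s2
      · intro b _ hb
        rcases Nat.lt_or_ge b.val 2 with hb2 | hb2
        · rcases Nat.lt_or_ge b.val 1 with hb0 | hb1
          · rw [gv0 b (by omega), m2, mul_zero]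
          · exact absurd (Fin.ext (by omega) : b = i) hb
        · rw [outer b hb2 k2 hk2, mul_zero]
      · intro hni; exact absurd (Finset.mem_univ i) hni
  · -- pad index, evaluate at its own coordinate
    have hilt : i.val < 2 * n := by have := i.isLt; omega
    have h := hval ⟨i.val, hilt⟩
    rw [Finset.sum_eq_single i ?_ ?_] at h
    · rw [gvp i hi hilt, ee, Pi.single_apply, if_pos rfl, mul_one] at h
      exact h
    · intro b _ hb
      rcases Nat.lt_or_ge b.val 2 with hb2 | hb2
      · rcases Nat.lt_or_ge b.val 1 with hb0 | hb1
        · rw [gv0 b (by omega)]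
          rw [hm ⟨i.val, hilt⟩ hi (show i.val ≤ 2 * n - 3 by have := i.isLt; omega), mul_zero]
        · rw [gv1 b (by omega)]
          rw [hs ⟨i.val, hilt⟩ hi (show i.val ≤ 2 * n - 3 by have := i.isLt; omega), mul_zero]
      · rw [gvp b hb2 (by have := b.isLt; omega), ee, Pi.single_apply, if_neg, mul_zero]
        rw [Fin.ext_iff]
        simp only []
        exact fun hc' => hb (Fin.ext (by omega))
    · intro hni; exact absurd (Finset.mem_univ i) hni
end Conf
section Slots

theorem finval {m a : ℕ} (h : a < m) : ((⟨a, h⟩ : Fin m) : ℕ) = a := rfl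

variable (F : Type*) [Field F] (n : ℕ)

theorem ee_same {m : ℕ} (i : Fin m) : ee F i i = 1 := by simp [ee]

theorem ee_ne {m : ℕ} (i j : Fin m) (h : j.val ≠ i.val) : ee F i j = 0 := by
  rw [ee, Pi.single_apply, if_neg]
  exact fun hc => h (by rw [hc])

/-- the moving configuration vectors -/
def mainV (hn : 2 ≤ n) (t : F) : ℕ → (Fin (2 * n) → F)
  | 0 => ee F ⟨1, by omega⟩
  | 1 => ee F ⟨2 * n - 2, by omega⟩
  | 2 => (1 : F) • ee F ⟨2 * n - 1, by omega⟩ - ee F ⟨2 * n - 2, by omega⟩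
  | 3 => ee F ⟨0, by omega⟩ + t • ee F ⟨1, by omega⟩
  | _ => ee F ⟨0, by omega⟩

def secondV (hn : 2 ≤ n) (t : F) : ℕ → (Fin (2 * n) → F)
  | 0 => ee F ⟨2 * n - 1, by omega⟩
  | 1 => ee F ⟨0, by omega⟩
  | 2 => ee F ⟨0, by omega⟩ + (1 : F) • ee F ⟨1, by omega⟩
  | 3 => t • ee F ⟨2 * n - 1, by omega⟩ - ee F ⟨2 * n - 2, by omega⟩
  | _ => ee F ⟨1, by omega⟩

/-- all the facts needed about a (main, second) pair -/
def SlotOK (main second : Fin (2 * n) → F) : Prop :=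
  Hsupp F n main ∧ Hsupp F n second ∧
  bform F (2 * n) main main = 0 ∧ bform F (2 * n) main second = 0 ∧
  bform F (2 * n) second main = 0 ∧ bform F (2 * n) second second = 0 ∧
  ∃ k1 k2 : Fin (2 * n), (k1.val ≤ 1 ∨ 2 * n - 2 ≤ k1.val) ∧
    (k2.val ≤ 1 ∨ 2 * n - 2 ≤ k2.val) ∧
    main k1 ≠ 0 ∧ main k2 = 0 ∧ second k1 = 0 ∧ second k2 ≠ 0

theorem slotA (hn : 2 ≤ n) (a b : Fin (2 * n))
    (ha : a.val ≤ 1 ∨ 2 * n - 2 ≤ a.val) (hb : b.val ≤ 1 ∨ 2 * n - 2 ≤ b.val)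
    (hsum : a.val + b.val + 1 ≠ 2 * n) (hne : a.val ≠ b.val) :
    SlotOK F n (ee F a) (ee F b) := by
  refine ⟨hsupp_ee F n hn a ha, hsupp_ee F n hn b hb,
    bEE0 F a a (by omega), bEE0 F a b (by omega), bEE0 F b a (by omega),
    bEE0 F b b (by omega), a, b, ha, hb, ?_, ?_, ?_, ?_⟩
  · rw [ee_same]; exact one_ne_zero
  · exact ee_ne F a b (fun h => hne h.symm)
  · exact ee_ne F b a hne
  · rw [ee_same]; exact one_ne_zero

theorem slotB (hn : 2 ≤ n) (a0 a1 a2 a3 : Fin (2 * n))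
    (h0 : a0.val = 0) (h1 : a1.val = 1) (h2 : a2.val = 2 * n - 2) (h3 : a3.val = 2 * n - 1)
    (r : F) :
    SlotOK F n (ee F a0 + r • ee F a1) (r • ee F a3 - ee F a2) ∧
    SlotOK F n (r • ee F a3 - ee F a2) (ee F a0 + r • ee F a1) := by
  have E00 : bform F (2 * n) (ee F a0) (ee F a0) = 0 := bEE0 F _ _ (by omega)
  have E01 : bform F (2 * n) (ee F a0) (ee F a1) = 0 := bEE0 F _ _ (by omega)
  have E02 : bform F (2 * n) (ee F a0) (ee F a2) = 0 := bEE0 F _ _ (by omega)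
  have E03 : bform F (2 * n) (ee F a0) (ee F a3) = 1 := bEE1 F _ _ (by omega)
  have E10 : bform F (2 * n) (ee F a1) (ee F a0) = 0 := bEE0 F _ _ (by omega)
  have E11 : bform F (2 * n) (ee F a1) (ee F a1) = 0 := bEE0 F _ _ (by omega)
  have E12 : bform F (2 * n) (ee F a1) (ee F a2) = 1 := bEE1 F _ _ (by omega)
  have E13 : bform F (2 * n) (ee F a1) (ee F a3) = 0 := bEE0 F _ _ (by omega)
  have E20 : bform F (2 * n) (ee F a2) (ee F a0) = 0 := bEE0 F _ _ (by omega)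
  have E21 : bform F (2 * n) (ee F a2) (ee F a1) = 1 := bEE1 F _ _ (by omega)
  have E22 : bform F (2 * n) (ee F a2) (ee F a2) = 0 := bEE0 F _ _ (by omega)
  have E23 : bform F (2 * n) (ee F a2) (ee F a3) = 0 := bEE0 F _ _ (by omega)
  have E30 : bform F (2 * n) (ee F a3) (ee F a0) = 1 := bEE1 F _ _ (by omega)
  have E31 : bform F (2 * n) (ee F a3) (ee F a1) = 0 := bEE0 F _ _ (by omega)
  have E32 : bform F (2 * n) (ee F a3) (ee F a2) = 0 := bEE0 F _ _ (by omega)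
  have E33 : bform F (2 * n) (ee F a3) (ee F a3) = 0 := bEE0 F _ _ (by omega)
  have hsu : Hsupp F n (ee F a0 + r • ee F a1) :=
    Hsupp.add F n (hsupp_ee F n hn a0 (by omega))
      (Hsupp.smul F n r (hsupp_ee F n hn a1 (by omega)))
  have hsv : Hsupp F n (r • ee F a3 - ee F a2) :=
    Hsupp.sub F n (Hsupp.smul F n r (hsupp_ee F n hn a3 (by omega)))
      (hsupp_ee F n hn a2 (by omega))
  have quu : bform F (2 * n) (ee F a0 + r • ee F a1) (ee F a0 + r • ee F a1) = 0 := by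
    simp only [bform_add_left, bform_add_right, bform_smul_left, bform_smul_right,
      E00, E01, E10, E11]
    ring
  have quv : bform F (2 * n) (ee F a0 + r • ee F a1) (r • ee F a3 - ee F a2) = 0 := by
    simp only [bform_add_left, bform_sub_right, bform_smul_left, bform_smul_right,
      E02, E03, E12, E13]
    ring
  have qvu : bform F (2 * n) (r • ee F a3 - ee F a2) (ee F a0 + r • ee F a1) = 0 := by
    simp only [bform_sub_left, bform_add_right, bform_smul_left, bform_smul_right,
      E20, E21, E30, E31]
    ring
  have qvv : bform F (2 * n) (r • ee F a3 - ee F a2) (r • ee F a3 - ee F a2) = 0 := by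
    simp only [bform_sub_left, bform_sub_right, bform_smul_left, bform_smul_right,
      E22, E23, E32, E33]
    ring
  have ua0 : (ee F a0 + r • ee F a1) a0 = 1 := by
    rw [Pi.add_apply, Pi.smul_apply, ee_same, ee_ne F a1 a0 (by omega)]
    simp
  have ua2 : (ee F a0 + r • ee F a1) a2 = 0 := by
    rw [Pi.add_apply, Pi.smul_apply, ee_ne F a0 a2 (by omega), ee_ne F a1 a2 (by omega)]
    simp
  have va0 : (r • ee F a3 - ee F a2) a0 = 0 := by
    rw [Pi.sub_apply, Pi.smul_apply, ee_ne F a3 a0 (by omega), ee_ne F a2 a0 (by omega)]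
    simp
  have va2 : (r • ee F a3 - ee F a2) a2 = -1 := by
    rw [Pi.sub_apply, Pi.smul_apply, ee_ne F a3 a2 (by omega), ee_same]
    simp
  constructor
  · exact ⟨hsu, hsv, quu, quv, qvu, qvv, a0, a2, by omega, by omega,
      by rw [ua0]; exact one_ne_zero, ua2, va0, by rw [va2]; exact neg_ne_zero.mpr one_ne_zero⟩
  · exact ⟨hsv, hsu, qvv, qvu, quv, quu, a2, a0, by omega, by omega,
      by rw [va2]; exact neg_ne_zero.mpr one_ne_zero, va0, ua2, by rw [ua0]; exact one_ne_zero⟩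

theorem slot_facts (hn : 2 ≤ n) (t : F) (jv : ℕ) :
    SlotOK F n (mainV F n hn t jv) (secondV F n hn t jv) := by
  match jv with
  | 0 =>
    show SlotOK F n (ee F ⟨1, by omega⟩) (ee F ⟨2 * n - 1, by omega⟩)
    exact slotA F n hn _ _ (by rw [finval]; omega) (by rw [finval]; omega)
      (by rw [finval, finval]; omega) (by rw [finval, finval]; omega)
  | 1 =>
    show SlotOK F n (ee F ⟨2 * n - 2, by omega⟩) (ee F ⟨0, by omega⟩)
    exact slotA F n hn _ _ (by rw [finval]; omega) (by rw [finval]; omega)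
      (by rw [finval, finval]; omega) (by rw [finval, finval]; omega)
  | 2 =>
    exact (slotB F n hn ⟨0, by omega⟩ ⟨1, by omega⟩ ⟨2 * n - 2, by omega⟩
      ⟨2 * n - 1, by omega⟩ rfl rfl rfl rfl 1).2
  | 3 =>
    exact (slotB F n hn ⟨0, by omega⟩ ⟨1, by omega⟩ ⟨2 * n - 2, by omega⟩
      ⟨2 * n - 1, by omega⟩ rfl rfl rfl rfl t).1
  | (jv + 4) =>
    show SlotOK F n (ee F ⟨0, by omega⟩) (ee F ⟨1, by omega⟩)
    exact slotA F n hn _ _ (by rw [finval]; omega) (by rw [finval]; omega)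
      (by rw [finval, finval]; omega) (by rw [finval, finval]; omega)

end Slots
section Key

theorem key_lemma (F : Type*) [Field F] (n : ℕ) (hn : 2 ≤ n)
    (c0 c1 c2 c3 : ℕ)
    (d0 : 1 ≤ c0) (d0' : c0 ≤ n) (d1 : 1 ≤ c1) (d1' : c1 ≤ n)
    (d2 : 1 ≤ c2) (d2' : c2 ≤ n) (d3 : 1 ≤ c3) (d3' : c3 ≤ n)
    (s t : F) (h : (Fin (2 * n) → F) ≃ₗ[F] (Fin (2 * n) → F))
    (hpres : ∀ u v : Fin (2 * n) → F,
      bform F (2 * n) (h u) (h v) = bform F (2 * n) u v)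
    (hm0 : Submodule.map h.toLinearMap
        (conf F n c0 (mainV F n hn t 0) (secondV F n hn t 0)) =
        conf F n c0 (mainV F n hn s 0) (secondV F n hn s 0))
    (hm1 : Submodule.map h.toLinearMap
        (conf F n c1 (mainV F n hn t 1) (secondV F n hn t 1)) =
        conf F n c1 (mainV F n hn s 1) (secondV F n hn s 1))
    (hm2 : Submodule.map h.toLinearMap
        (conf F n c2 (mainV F n hn t 2) (secondV F n hn t 2)) =
        conf F n c2 (mainV F n hn s 2) (secondV F n hn s 2))
    (hm3 : Submodule.map h.toLinearMap
        (conf F n c3 (mainV F n hn t 3) (secondV F n hn t 3)) =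
        conf F n c3 (mainV F n hn s 3) (secondV F n hn s 3)) :
    t = s := by
  -- transported memberships and decompositions
  have hxa : h (mainV F n hn t 0) ∈ conf F n c0 (mainV F n hn s 0) (secondV F n hn s 0) := by
    rw [← hm0]; exact Submodule.mem_map_of_mem (main_mem_conf F n c0 d0 _ _)
  have hxb : h (mainV F n hn t 1) ∈ conf F n c1 (mainV F n hn s 1) (secondV F n hn s 1) := by
    rw [← hm1]; exact Submodule.mem_map_of_mem (main_mem_conf F n c1 d1 _ _)
  have hxc : h (mainV F n hn t 2) ∈ conf F n c2 (mainV F n hn s 2) (secondV F n hn s 2) := by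
    rw [← hm2]; exact Submodule.mem_map_of_mem (main_mem_conf F n c2 d2 _ _)
  have hxd : h (mainV F n hn t 3) ∈ conf F n c3 (mainV F n hn s 3) (secondV F n hn s 3) := by
    rw [← hm3]; exact Submodule.mem_map_of_mem (main_mem_conf F n c3 d3 _ _)
  obtain ⟨A, B, pa, hpa, hA⟩ := conf_decomp F n c0 d0' _ _ hxa
  obtain ⟨C, D, pb, hpb, hB⟩ := conf_decomp F n c1 d1' _ _ hxb
  obtain ⟨G, H, pc, hpc, hC⟩ := conf_decomp F n c2 d2' _ _ hxc
  obtain ⟨K, L, pd, hpd, hD⟩ := conf_decomp F n c3 d3' _ _ hxd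
  -- the bform atoms
  have E00 : bform F (2*n) (ee F (⟨0, by omega⟩ : Fin (2*n))) (ee F (⟨0, by omega⟩ : Fin (2*n))) = 0 := bEE0 F _ _ (by simp only [finval]; omega)
  have E01 : bform F (2*n) (ee F (⟨0, by omega⟩ : Fin (2*n))) (ee F (⟨1, by omega⟩ : Fin (2*n))) = 0 := bEE0 F _ _ (by simp only [finval]; omega)
  have E02 : bform F (2*n) (ee F (⟨0, by omega⟩ : Fin (2*n))) (ee F (⟨2*n-2, by omega⟩ : Fin (2*n))) = 0 := bEE0 F _ _ (by simp only [finval]; omega)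
  have E03 : bform F (2*n) (ee F (⟨0, by omega⟩ : Fin (2*n))) (ee F (⟨2*n-1, by omega⟩ : Fin (2*n))) = 1 := bEE1 F _ _ (by simp only [finval]; omega)
  have E10 : bform F (2*n) (ee F (⟨1, by omega⟩ : Fin (2*n))) (ee F (⟨0, by omega⟩ : Fin (2*n))) = 0 := bEE0 F _ _ (by simp only [finval]; omega)
  have E11 : bform F (2*n) (ee F (⟨1, by omega⟩ : Fin (2*n))) (ee F (⟨1, by omega⟩ : Fin (2*n))) = 0 := bEE0 F _ _ (by simp only [finval]; omega)
  have E12 : bform F (2*n) (ee F (⟨1, by omega⟩ : Fin (2*n))) (ee F (⟨2*n-2, by omega⟩ : Fin (2*n))) = 1 := bEE1 F _ _ (by simp only [finval]; omega)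
  have E13 : bform F (2*n) (ee F (⟨1, by omega⟩ : Fin (2*n))) (ee F (⟨2*n-1, by omega⟩ : Fin (2*n))) = 0 := bEE0 F _ _ (by simp only [finval]; omega)
  have E20 : bform F (2*n) (ee F (⟨2*n-2, by omega⟩ : Fin (2*n))) (ee F (⟨0, by omega⟩ : Fin (2*n))) = 0 := bEE0 F _ _ (by simp only [finval]; omega)
  have E21 : bform F (2*n) (ee F (⟨2*n-2, by omega⟩ : Fin (2*n))) (ee F (⟨1, by omega⟩ : Fin (2*n))) = 1 := bEE1 F _ _ (by simp only [finval]; omega)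
  have E22 : bform F (2*n) (ee F (⟨2*n-2, by omega⟩ : Fin (2*n))) (ee F (⟨2*n-2, by omega⟩ : Fin (2*n))) = 0 := bEE0 F _ _ (by simp only [finval]; omega)
  have E23 : bform F (2*n) (ee F (⟨2*n-2, by omega⟩ : Fin (2*n))) (ee F (⟨2*n-1, by omega⟩ : Fin (2*n))) = 0 := bEE0 F _ _ (by simp only [finval]; omega)
  have E30 : bform F (2*n) (ee F (⟨2*n-1, by omega⟩ : Fin (2*n))) (ee F (⟨0, by omega⟩ : Fin (2*n))) = 1 := bEE1 F _ _ (by simp only [finval]; omega)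
  have E31 : bform F (2*n) (ee F (⟨2*n-1, by omega⟩ : Fin (2*n))) (ee F (⟨1, by omega⟩ : Fin (2*n))) = 0 := bEE0 F _ _ (by simp only [finval]; omega)
  have E32 : bform F (2*n) (ee F (⟨2*n-1, by omega⟩ : Fin (2*n))) (ee F (⟨2*n-2, by omega⟩ : Fin (2*n))) = 0 := bEE0 F _ _ (by simp only [finval]; omega)
  have E33 : bform F (2*n) (ee F (⟨2*n-1, by omega⟩ : Fin (2*n))) (ee F (⟨2*n-1, by omega⟩ : Fin (2*n))) = 0 := bEE0 F _ _ (by simp only [finval]; omega)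
  -- pad orthogonality facts
  have padL : ∀ p ∈ padM F n, ∀ a : Fin (2*n), (a.val ≤ 1 ∨ 2*n-2 ≤ a.val) →
      bform F (2*n) p (ee F a) = 0 :=
    fun p hp a ha => pad_orth_left F n hn (hsupp_ee F n hn a ha) p hp
  have padR : ∀ p ∈ padM F n, ∀ a : Fin (2*n), (a.val ≤ 1 ∨ 2*n-2 ≤ a.val) →
      bform F (2*n) (ee F a) p = 0 :=
    fun p hp a ha => pad_orth_right F n hn (hsupp_ee F n hn a ha) p hp
  have La0 := padL pa hpa ⟨0, by omega⟩ (by simp only [finval]; omega)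
  have La1 := padL pa hpa ⟨1, by omega⟩ (by simp only [finval]; omega)
  have La2 := padL pa hpa ⟨2*n-2, by omega⟩ (by simp only [finval]; omega)
  have La3 := padL pa hpa ⟨2*n-1, by omega⟩ (by simp only [finval]; omega)
  have Ra0 := padR pa hpa ⟨0, by omega⟩ (by simp only [finval]; omega)
  have Ra1 := padR pa hpa ⟨1, by omega⟩ (by simp only [finval]; omega)
  have Ra2 := padR pa hpa ⟨2*n-2, by omega⟩ (by simp only [finval]; omega)
  have Ra3 := padR pa hpa ⟨2*n-1, by omega⟩ (by simp only [finval]; omega)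
  have Lb0 := padL pb hpb ⟨0, by omega⟩ (by simp only [finval]; omega)
  have Lb1 := padL pb hpb ⟨1, by omega⟩ (by simp only [finval]; omega)
  have Lb2 := padL pb hpb ⟨2*n-2, by omega⟩ (by simp only [finval]; omega)
  have Lb3 := padL pb hpb ⟨2*n-1, by omega⟩ (by simp only [finval]; omega)
  have Rb0 := padR pb hpb ⟨0, by omega⟩ (by simp only [finval]; omega)
  have Rb1 := padR pb hpb ⟨1, by omega⟩ (by simp only [finval]; omega)
  have Rb2 := padR pb hpb ⟨2*n-2, by omega⟩ (by simp only [finval]; omega)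
  have Rb3 := padR pb hpb ⟨2*n-1, by omega⟩ (by simp only [finval]; omega)
  have Lc0 := padL pc hpc ⟨0, by omega⟩ (by simp only [finval]; omega)
  have Lc1 := padL pc hpc ⟨1, by omega⟩ (by simp only [finval]; omega)
  have Lc2 := padL pc hpc ⟨2*n-2, by omega⟩ (by simp only [finval]; omega)
  have Lc3 := padL pc hpc ⟨2*n-1, by omega⟩ (by simp only [finval]; omega)
  have Rc0 := padR pc hpc ⟨0, by omega⟩ (by simp only [finval]; omega)
  have Rc1 := padR pc hpc ⟨1, by omega⟩ (by simp only [finval]; omega)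
  have Rc2 := padR pc hpc ⟨2*n-2, by omega⟩ (by simp only [finval]; omega)
  have Rc3 := padR pc hpc ⟨2*n-1, by omega⟩ (by simp only [finval]; omega)
  have Ld0 := padL pd hpd ⟨0, by omega⟩ (by simp only [finval]; omega)
  have Ld1 := padL pd hpd ⟨1, by omega⟩ (by simp only [finval]; omega)
  have Ld2 := padL pd hpd ⟨2*n-2, by omega⟩ (by simp only [finval]; omega)
  have Ld3 := padL pd hpd ⟨2*n-1, by omega⟩ (by simp only [finval]; omega)
  have Rd0 := padR pd hpd ⟨0, by omega⟩ (by simp only [finval]; omega)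
  have Rd1 := padR pd hpd ⟨1, by omega⟩ (by simp only [finval]; omega)
  have Rd2 := padR pd hpd ⟨2*n-2, by omega⟩ (by simp only [finval]; omega)
  have Rd3 := padR pd hpd ⟨2*n-1, by omega⟩ (by simp only [finval]; omega)
  have Pab := pad_pad F n hn pa hpa pb hpb
  have Pac := pad_pad F n hn pa hpa pc hpc
  have Pad' := pad_pad F n hn pa hpa pd hpd
  have Pbd := pad_pad F n hn pb hpb pd hpd
  have Pcd := pad_pad F n hn pc hpc pd hpd
  -- the five form equations
  have q1 := hpres (mainV F n hn t 0) (mainV F n hn t 1)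
  have q2 := hpres (mainV F n hn t 0) (mainV F n hn t 2)
  have q3 := hpres (mainV F n hn t 0) (mainV F n hn t 3)
  have q4 := hpres (mainV F n hn t 1) (mainV F n hn t 3)
  have q5 := hpres (mainV F n hn t 2) (mainV F n hn t 3)
  rw [hA, hB] at q1
  rw [hA, hC] at q2
  rw [hA, hD] at q3
  rw [hB, hD] at q4
  rw [hC, hD] at q5
  simp only [mainV, secondV] at q1 q2 q3 q4 q5
  simp only [bform_add_left, bform_add_right, bform_sub_left, bform_sub_right,
    bform_smul_left, bform_smul_right] at q1 q2 q3 q4 q5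
  simp only [E00, E01, E02, E03, E10, E11, E12, E13, E20, E21, E22, E23,
    E30, E31, E32, E33,
    La0, La1, La2, La3, Ra0, Ra1, Ra2, Ra3, Lb0, Lb1, Lb2, Lb3, Rb0, Rb1, Rb2, Rb3,
    Lc0, Lc1, Lc2, Lc3, Rc0, Rc1, Rc2, Rc3, Ld0, Ld1, Ld2, Ld3, Rd0, Rd1, Rd2, Rd3,
    Pab, Pac, Pad', Pbd, Pcd, mul_zero, zero_mul, mul_one, one_mul,
    add_zero, zero_add, sub_zero, zero_sub, neg_zero] at q1 q2 q3 q4 q5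
  -- now pure algebra
  have S1 : s * K = A * t := by linear_combination A*q4 + s*D*q3 - s*K*q1
  have S2 : s * L = B * t := by linear_combination B*q4 - s*C*q3 - s*L*q1
  have S3 : (1-s) * K = A * (1-t) := by linear_combination A*q5 + (s-1)*H*q3 + (1-s)*K*q2
  have S4 : (1-s) * L = B * (1-t) := by linear_combination B*q5 - (1-s)*G*q3 + (1-s)*L*q2
  have SK : K = A := by linear_combination S1 + S3
  have SL : L = B := by linear_combination S2 + S4
  linear_combination (s-t)*q1 - C*S1 + s*C*SK - D*S2 + s*D*SL

end Key
/-- Proposition 1.2 of the paper: for `n ≥ 2` and `k ≥ 4`, the diagonal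
action of `O_{2n}(F)` on a product of `k` isotropic Grassmannians
`M_{(α₁)} × ... × M_{(α_k)}` has infinitely many orbits: no finite set of `k`-tuples can
meet every orbit. -/
theorem multiple_flag_infinite_type (F : Type*) [Field F] [Infinite F]
    (hchar : (2 : F) ≠ 0) (n : ℕ) (hn : 2 ≤ n) (k : ℕ) (hk : 4 ≤ k)
    (α : Fin k → ℕ) (hα : ∀ j, 1 ≤ α j ∧ α j ≤ n)
    (T : Set (Fin k → Submodule F (Fin (2 * n) → F))) (hT : T.Finite) :
    ∃ V : Fin k → Submodule F (Fin (2 * n) → F),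
      (∀ j, IsIsotropic F (2 * n) (V j) ∧ Module.finrank F (V j) = α j) ∧
      ∀ W ∈ T, ∀ g : (Fin (2 * n) → F) ≃ₗ[F] (Fin (2 * n) → F),
        (∀ u v : Fin (2 * n) → F, bform F (2 * n) (g u) (g v) = bform F (2 * n) u v) →
        ¬ (∀ j, Submodule.map g.toLinearMap (W j) = V j) := by
  by_contra hcon
  push_neg at hcon
  have hgood : ∀ (t : F) (j : Fin k),
      IsIsotropic F (2 * n)
        (conf F n (α j) (mainV F n hn t j.val) (secondV F n hn t j.val)) ∧
      Module.finrank F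
        (conf F n (α j) (mainV F n hn t j.val) (secondV F n hn t j.val)) = α j := by
    intro t j
    obtain ⟨hm, hs, q1, q2, q3, q4, k1, k2, hk1, hk2, m1, m2, s1, s2⟩ :=
      slot_facts F n hn t j.val
    exact ⟨conf_isotropic F n hn (α j) (hα j).2 _ _ hm hs q1 q2 q3 q4,
      conf_finrank F n hn (α j) (hα j).2 _ _ hm hs k1 k2 hk1 hk2 m1 m2 s1 s2⟩
  have hex : ∀ t : F, ∃ W ∈ T, ∃ g : (Fin (2 * n) → F) ≃ₗ[F] (Fin (2 * n) → F),
      (∀ u v : Fin (2 * n) → F, bform F (2 * n) (g u) (g v) = bform F (2 * n) u v) ∧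
      ∀ j, Submodule.map g.toLinearMap (W j) =
        conf F n (α j) (mainV F n hn t j.val) (secondV F n hn t j.val) :=
    fun t => hcon _ (fun j => hgood t j)
  choose W hWT g hg hmap using hex
  obtain ⟨t, -, s, -, hts, hWW⟩ := Set.infinite_univ.exists_ne_map_eq_of_mapsTo
    (fun (t : F) _ => hWT t) hT
  set h : (Fin (2 * n) → F) ≃ₗ[F] (Fin (2 * n) → F) := (g t).symm.trans (g s) with hh
  have hpres : ∀ u v : Fin (2 * n) → F,
      bform F (2 * n) (h u) (h v) = bform F (2 * n) u v := by
    intro u v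
    have h1 := hg s ((g t).symm u) ((g t).symm v)
    have h2 := hg t ((g t).symm u) ((g t).symm v)
    simp only [LinearEquiv.apply_symm_apply] at h2
    simp only [hh, LinearEquiv.trans_apply]
    exact h1.trans h2.symm
  have hmaps : ∀ j : Fin k,
      Submodule.map h.toLinearMap
        (conf F n (α j) (mainV F n hn t j.val) (secondV F n hn t j.val)) =
        conf F n (α j) (mainV F n hn s j.val) (secondV F n hn s j.val) := by
    intro j
    have h1 := hmap t j
    have h2 := hmap s j
    rw [hWW] at h1
    rw [← h1, ← h2, ← Submodule.map_comp]
    congr 1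
    apply LinearMap.ext
    intro x
    simp [hh, LinearEquiv.trans_apply]
  have hfin := key_lemma F n hn (α ⟨0, by omega⟩) (α ⟨1, by omega⟩) (α ⟨2, by omega⟩)
    (α ⟨3, by omega⟩)
    (hα ⟨0, by omega⟩).1 (hα ⟨0, by omega⟩).2 (hα ⟨1, by omega⟩).1 (hα ⟨1, by omega⟩).2
    (hα ⟨2, by omega⟩).1 (hα ⟨2, by omega⟩).2 (hα ⟨3, by omega⟩).1 (hα ⟨3, by omega⟩).2
    s t h hpres
    (hmaps ⟨0, by omega⟩) (hmaps ⟨1, by omega⟩) (hmaps ⟨2, by omega⟩) (hmaps ⟨3, by omega⟩)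
  exact hts hfin
end

section
/- Let F be a field, G = GL_n(F) with n = α_1 + ... + α_p, P the standard block upper triangular parabolic with Levi L (block diagonal) and unipotent radical N, and B the upper triangular Borel. Let w = w_τ w_σ be a permutation matrix such that for each j and k, the intersection of the j-th block subspace U_j with w·(span(e_1,...,e_{r})) is spanned by initial basis vectors of U_j for appropriate r (i.e., w is the minimal length representative adjusted within its (P,B)-double coset). Then P ∩ wBw^{-1} = (L ∩ B)(N ∩ wBw^{-1}). -/
/-- Lemma 8.5 (ii) of the paper: for a permutation matrix `w = w_ρ` whose
inverse permutation is increasing on each block (the adjusted minimal representative of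
its `(P,B)`-double coset), we have `P ∩ wBw⁻¹ = (L ∩ B)(N ∩ wBw⁻¹)`. Blocks are encoded
by a monotone `b : Fin n → Fin p` with fibers of sizes `α₁,...,α_p`. -/
theorem parabolic_inter_conjugated_borel (F : Type*) [Field F]
    (p n : ℕ) (α : Fin p → ℕ) (hn : ∑ j, α j = n)
    (b : Fin n → Fin p) (hb : Monotone b)
    (hcard : ∀ j : Fin p, (Finset.univ.filter fun i => b i = j).card = α j)
    (ρ : Equiv.Perm (Fin n))
    (hρ : ∀ i i' : Fin n, b i = b i' → i < i' → ρ.symm i < ρ.symm i')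
    (w : (Matrix (Fin n) (Fin n) F)ˣ)
    (hw : ∀ i j : Fin n,
      (w : Matrix (Fin n) (Fin n) F) i j = if i = ρ j then 1 else 0) :
    {x : (Matrix (Fin n) (Fin n) F)ˣ |
        (∀ i j : Fin n, (x : Matrix (Fin n) (Fin n) F) i j ≠ 0 → b i ≤ b j) ∧
        (∀ i j : Fin n,
          ((w⁻¹ * x * w : (Matrix (Fin n) (Fin n) F)ˣ) : Matrix (Fin n) (Fin n) F) i j ≠ 0 →
          (i : ℕ) ≤ (j : ℕ))} =
      {x : (Matrix (Fin n) (Fin n) F)ˣ |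
        ∃ l u : (Matrix (Fin n) (Fin n) F)ˣ,
          (∀ i j : Fin n, (l : Matrix (Fin n) (Fin n) F) i j ≠ 0 →
            b i = b j ∧ (i : ℕ) ≤ (j : ℕ)) ∧
          (∀ i j : Fin n, (u : Matrix (Fin n) (Fin n) F) i j ≠ 0 → b i ≤ b j) ∧
          (∀ i j : Fin n, b i = b j →
            (u : Matrix (Fin n) (Fin n) F) i j = if i = j then 1 else 0) ∧
          (∀ i j : Fin n,
            ((w⁻¹ * u * w : (Matrix (Fin n) (Fin n) F)ˣ) : Matrix (Fin n) (Fin n) F) i j ≠ 0 →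
            (i : ℕ) ≤ (j : ℕ)) ∧
          x = l * u} := by
  classical
  -- monotonicity facts about ρ.symm on blocks
  have hρmono : ∀ i j : Fin n, b i = b j → i ≤ j → ρ.symm i ≤ ρ.symm j := by
    intro i j hbij hij
    rcases lt_or_eq_of_le hij with h | h
    · exact (hρ i j hbij h).le
    · subst h; exact le_rfl
  have hρrefl : ∀ i j : Fin n, b i = b j → ρ.symm i ≤ ρ.symm j → i ≤ j := by
    intro i j hbij h
    by_contra hc
    push_neg at hc
    exact absurd (hρ j i hbij.symm hc) (not_lt.mpr h)
  -- the inverse permutation matrix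
  set V : Matrix (Fin n) (Fin n) F := Matrix.of fun i j => if ρ i = j then 1 else 0 with hV
  have hwV : (w : Matrix (Fin n) (Fin n) F) * V = 1 := by
    ext i j
    rw [Matrix.mul_apply]
    simp only [hw, hV, Matrix.of_apply, ite_mul, one_mul, zero_mul, Matrix.one_apply]
    rw [Finset.sum_eq_single (ρ.symm i)]
    · simp [Equiv.eq_symm_apply, eq_comm]
    · intro k _ hk
      rw [if_neg]
      intro hik
      exact hk (by rw [hik, Equiv.symm_apply_apply])
    · simp
  have hwinv : ((w⁻¹ : (Matrix (Fin n) (Fin n) F)ˣ) : Matrix (Fin n) (Fin n) F) = V :=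
    Units.inv_eq_of_mul_eq_one_right hwV
  -- conjugation formula
  have hVmul : ∀ (N : Matrix (Fin n) (Fin n) F) (i j : Fin n), (V * N) i j = N (ρ i) j := by
    intro N i j
    rw [Matrix.mul_apply]
    rw [Finset.sum_eq_single (ρ i)]
    · simp [hV]
    · intro k _ hk; simp [hV, hk, Ne.symm hk]
    · simp
  have hmulW : ∀ (N : Matrix (Fin n) (Fin n) F) (i j : Fin n),
      (N * (w : Matrix (Fin n) (Fin n) F)) i j = N i (ρ j) := by
    intro N i j
    rw [Matrix.mul_apply]
    rw [Finset.sum_eq_single (ρ j)]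
    · simp [hw]
    · intro k _ hk; simp [hw, hk]
    · simp
  have hconj : ∀ (y : (Matrix (Fin n) (Fin n) F)ˣ) (i j : Fin n),
      ((w⁻¹ * y * w : (Matrix (Fin n) (Fin n) F)ˣ) : Matrix (Fin n) (Fin n) F) i j
        = (y : Matrix (Fin n) (Fin n) F) (ρ i) (ρ j) := by
    intro y i j
    rw [Units.val_mul, Units.val_mul, hwinv, hmulW, hVmul]
  ext x
  simp only [Set.mem_setOf_eq]
  constructor
  · rintro ⟨hP, hB⟩
    set M : Matrix (Fin n) (Fin n) F := (x : Matrix (Fin n) (Fin n) F) with hM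
    have hB' : ∀ i j : Fin n, M i j ≠ 0 → ρ.symm i ≤ ρ.symm j := by
      intro i j hne
      have := hB (ρ.symm i) (ρ.symm j)
      rw [hconj x] at this
      simp only [Equiv.apply_symm_apply] at this
      exact this hne
    have hBT : M.BlockTriangular b := by
      intro i j hlt
      by_contra hne
      exact absurd (hP i j hne) (not_le.mpr hlt)
    -- the block diagonal part of x
    set l : Matrix (Fin n) (Fin n) F := Matrix.of fun i j => if b i = b j then M i j else 0
      with hldef
    have hl_supp : ∀ i j : Fin n, l i j ≠ 0 → b i = b j ∧ i ≤ j := by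
      intro i j hne
      by_cases hbij : b i = b j
      · refine ⟨hbij, hρrefl i j hbij (hB' i j ?_)⟩
        simpa [hldef, hbij] using hne
      · simp [hldef, hbij] at hne
    have hlBT : l.BlockTriangular b := by
      intro i j hlt
      by_contra hne
      exact absurd (hl_supp i j hne).1 (ne_of_gt hlt)
    have hlBTd : l.BlockTriangular (OrderDual.toDual ∘ b) := by
      intro i j hlt
      by_contra hne
      exact absurd (hl_supp i j hne).1 (ne_of_lt hlt)
    have hlBTlex : l.BlockTriangular (fun i => toLex (b i, i)) := by
      intro i j hlt
      by_contra hne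
      obtain ⟨hbij, hij⟩ := hl_supp i j hne
      rcases (Prod.Lex.lt_iff).mp hlt with h | ⟨h1, h2⟩
      · exact absurd hbij.symm (ne_of_lt h)
      · exact absurd h2 (not_lt.mpr hij)
    -- determinant of l equals determinant of M
    have hblocks : ∀ a : Fin p, l.toSquareBlock b a = M.toSquareBlock b a := by
      intro a
      ext i j
      simp only [Matrix.toSquareBlock_def, hldef, Matrix.of_apply]
      rw [if_pos (i.2.trans j.2.symm)]
    have hdetl : l.det = M.det := by
      rw [hlBT.det, hBT.det]
      exact Finset.prod_congr rfl fun a _ => by rw [hblocks]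
    have hdetM : IsUnit M.det := (Matrix.isUnit_iff_isUnit_det M).mp x.isUnit
    have hdetlu : IsUnit l.det := hdetl ▸ hdetM
    have hul : IsUnit l := (Matrix.isUnit_iff_isUnit_det l).mpr hdetlu
    haveI : Invertible l := l.invertibleOfIsUnitDet hdetlu
    have hlinvd := Matrix.blockTriangular_inv_of_blockTriangular hlBTd
    have hlinvlex := Matrix.blockTriangular_inv_of_blockTriangular hlBTlex
    have hlinv_supp : ∀ i j : Fin n, l⁻¹ i j ≠ 0 → b i = b j ∧ i ≤ j := by
      intro i j hne
      have h1 : ¬ b i < b j := fun h => hne (hlinvd h)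
      have h2 : ¬ toLex (b j, j) < toLex (b i, i) := fun h => hne (hlinvlex h)
      rw [Prod.Lex.lt_iff] at h2
      push_neg at h2
      have hbij : b i = b j := le_antisymm h2.1 (not_lt.mp h1)
      exact ⟨hbij, h2.2 hbij.symm⟩
    have hlinvl : l⁻¹ * l = 1 := Matrix.nonsing_inv_mul l hdetlu
    have hLu : ((hul.unit : (Matrix (Fin n) (Fin n) F)ˣ) : Matrix (Fin n) (Fin n) F) = l :=
      hul.unit_spec
    have hLuinv : ((hul.unit⁻¹ : (Matrix (Fin n) (Fin n) F)ˣ) : Matrix (Fin n) (Fin n) F)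
        = l⁻¹ := by
      rw [Matrix.coe_units_inv, hLu]
    refine ⟨hul.unit, hul.unit⁻¹ * x, ?_, ?_, ?_, ?_, (mul_inv_cancel_left hul.unit x).symm⟩
    · intro i j hne
      rw [hLu] at hne
      obtain ⟨h1, h2⟩ := hl_supp i j hne
      exact ⟨h1, h2⟩
    · intro i j hne
      rw [Units.val_mul, hLuinv, Matrix.mul_apply] at hne
      obtain ⟨k, _, hk⟩ := Finset.exists_ne_zero_of_sum_ne_zero hne
      have hbik : b i = b k := (hlinv_supp i k (left_ne_zero_of_mul hk)).1
      exact hbik ▸ hP k j (right_ne_zero_of_mul hk)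
    · intro i j hbij
      rw [Units.val_mul, hLuinv, Matrix.mul_apply]
      have : ∀ k ∈ Finset.univ, l⁻¹ i k * M k j = l⁻¹ i k * l k j := by
        intro k _
        by_cases hk : l⁻¹ i k = 0
        · rw [hk, zero_mul, zero_mul]
        · have hbik : b i = b k := (hlinv_supp i k hk).1
          have : l k j = M k j := by
            simp [hldef, hbik ▸ hbij]
          rw [this]
      rw [Finset.sum_congr rfl this, ← Matrix.mul_apply, hlinvl, Matrix.one_apply]
    · intro i j hne
      rw [hconj, Units.val_mul, hLuinv, Matrix.mul_apply] at hne
      obtain ⟨k, _, hk⟩ := Finset.exists_ne_zero_of_sum_ne_zero hne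
      obtain ⟨hbk, hik⟩ := hlinv_supp (ρ i) k (left_ne_zero_of_mul hk)
      have h1 : (i : Fin n) ≤ ρ.symm k := by
        have := hρmono (ρ i) k hbk hik
        rwa [Equiv.symm_apply_apply] at this
      have h2 : ρ.symm k ≤ ρ.symm (ρ j) := hB' k (ρ j) (right_ne_zero_of_mul hk)
      rw [Equiv.symm_apply_apply] at h2
      exact le_trans h1 h2
  · rintro ⟨l, u, hl, hu1, hu2, hu3, rfl⟩
    have hlmono : ∀ i j : Fin n,
        (l : Matrix (Fin n) (Fin n) F) i j ≠ 0 → ρ.symm i ≤ ρ.symm j := by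
      intro i j hne
      obtain ⟨hbij, hij⟩ := hl i j hne
      exact hρmono i j hbij (Fin.mk_le_mk.mp hij)
    constructor
    · intro i j hne
      rw [Units.val_mul, Matrix.mul_apply] at hne
      obtain ⟨k, _, hk⟩ := Finset.exists_ne_zero_of_sum_ne_zero hne
      exact ((hl i k (left_ne_zero_of_mul hk)).1) ▸ hu1 k j (right_ne_zero_of_mul hk)
    · intro i j hne
      rw [hconj, Units.val_mul, Matrix.mul_apply] at hne
      obtain ⟨k, _, hk⟩ := Finset.exists_ne_zero_of_sum_ne_zero hne
      obtain ⟨hbk, hik⟩ := hl (ρ i) k (left_ne_zero_of_mul hk)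
      have h1 : (i : Fin n) ≤ ρ.symm k := by
        have := hρmono (ρ i) k hbk (Fin.mk_le_mk.mp hik)
        rwa [Equiv.symm_apply_apply] at this
      have h2 : ((ρ.symm k : Fin n) : ℕ) ≤ (j : ℕ) := by
        apply hu3 (ρ.symm k) j
        rw [hconj, Equiv.apply_symm_apply]
        exact right_ne_zero_of_mul hk
      exact le_trans h1 h2
end
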